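/- arXiv:1712.04653 — 10 statements merged into one kernel-verified Lean document; each statement's English description precedes it below -/
import Mathlib

section
/- There exist strictly increasing functions f, g : [0,1] → [0,1] that are Lipschitz with a Lipschitz constant strictly smaller than 1 (contractions), such that f([0,1]) ∩ g([0,1]) = ∅, and such that the attractor of the iterated function system {f, g} — that is, the unique nonempty compact set A ⊆ ℝ with A = f(A) ∪ g(A) — has positive one-dimensional Lebesgue measure. -/
/-!
The attractor is the fat Cantor set `A = {∑ εₙ bₙ | ε ∈ {0,1}^ℕ}` with `bₙ = mₙ + cₙ`,
`mₙ = 2^-(n+2)` and `cₙ = (3/8) 4^-n`. Both `m` and `c` dominate their tails, so `∑ εₙ mₙ` and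
`∑ εₙ cₙ` increase with `ε` in the lexicographic order; hence `∑ εₙ bₙ ↦ ∑ εₙ mₙ` extends to a
monotone 1-Lipschitz staircase `h` on `ℝ`. Since `bₙ₊₁ = (bₙ + mₙ)/4`, the map `f x = (x + h x)/4`
prepends the digit `0` and `5/8 + f` prepends `1`, so `A` is the attractor of these two
`1/2`-Lipschitz maps. Finally `h` maps `A` onto `[0, 1/2]` (binary expansions) without increasing
Lebesgue measure, so `A` has measure at least `1/2`.
-/

open Set MeasureTheory

open scoped NNReal ENNReal

noncomputable section

section Hutchinson

open Metric

variable {X : Type*} [MetricSpace X] {K : ℝ≥0} {f g : X → X} {s t : Set X}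

theorem LipschitzWith.infEDist_image_le (hf : LipschitzWith K f) (ht : IsCompact t)
    (ht' : t.Nonempty) (x : X) : infEDist (f x) (f '' t) ≤ K * infEDist x t := by
  obtain ⟨y, hy, hxy⟩ := ht.exists_infEDist_eq_edist ht' x
  rw [hxy]
  exact (infEDist_le_edist_of_mem (mem_image_of_mem f hy)).trans (hf x y)

theorem LipschitzWith.hausdorffEDist_image_le (hf : LipschitzWith K f) (hs : IsCompact s)
    (hs' : s.Nonempty) (ht : IsCompact t) (ht' : t.Nonempty) :
    hausdorffEDist (f '' s) (f '' t) ≤ K * hausdorffEDist s t := by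
  refine hausdorffEDist_le_of_infEDist ?_ ?_
  · rintro _ ⟨x, hx, rfl⟩
    exact (hf.infEDist_image_le ht ht' x).trans
      (mul_le_mul_right (infEDist_le_hausdorffEDist_of_mem hx) _)
  · rintro _ ⟨x, hx, rfl⟩
    rw [hausdorffEDist_comm]
    exact (hf.infEDist_image_le hs hs' x).trans
      (mul_le_mul_right (infEDist_le_hausdorffEDist_of_mem hx) _)

/-- The Hutchinson operator `s ↦ f '' s ∪ g '' s` contracts the Hausdorff distance. -/
theorem eq_of_eq_image_union_image (hK : K < 1) (hf : LipschitzWith K f)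
    (hg : LipschitzWith K g) (hs : IsCompact s) (hs' : s.Nonempty) (ht : IsCompact t)
    (ht' : t.Nonempty) (hsfix : s = f '' s ∪ g '' s) (htfix : t = f '' t ∪ g '' t) : s = t := by
  have hfin : hausdorffEDist s t ≠ ⊤ :=
    hausdorffEDist_ne_top_of_nonempty_of_bounded hs' ht' hs.isBounded ht.isBounded
  have hcontract : hausdorffEDist s t ≤ K * hausdorffEDist s t :=
    calc hausdorffEDist s t = hausdorffEDist (f '' s ∪ g '' s) (f '' t ∪ g '' t) := by
          rw [← hsfix, ← htfix]
      _ ≤ max (hausdorffEDist (f '' s) (f '' t)) (hausdorffEDist (g '' s) (g '' t)) :=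
          hausdorffEDist_union_le
      _ ≤ K * hausdorffEDist s t :=
          max_le (hf.hausdorffEDist_image_le hs hs' ht ht')
            (hg.hausdorffEDist_image_le hs hs' ht ht')
  have hzero : hausdorffEDist s t = 0 := by
    by_contra hne
    have hlt := ENNReal.mul_lt_mul_right hne hfin (ENNReal.coe_lt_one_iff.2 hK)
    rw [mul_one, mul_comm] at hlt
    exact hlt.not_ge hcontract
  exact (hs.isClosed.hausdorffEDist_zero_iff ht.isClosed).1 hzero

end Hutchinson

theorem LipschitzWith.volume_image_le {K : ℝ≥0} {f : ℝ → ℝ} (hf : LipschitzWith K f)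
    (s : Set ℝ) : volume (f '' s) ≤ K * volume s := by
  simpa [hausdorffMeasure_real] using hf.hausdorffMeasure_image_le zero_le_one s

section MonotoneLipschitzExtension

variable {ι : Type*} (p v : ι → ℝ)

def monotoneLipschitzExtension (x : ℝ) : ℝ := ⨅ i, (v i + max (x - p i) 0)

variable {p v}

theorem monotoneLipschitzExtension_le (hv : BddBelow (range v)) (i : ι) (x : ℝ) :
    monotoneLipschitzExtension p v x ≤ v i + max (x - p i) 0 := by
  refine ciInf_le ?_ i
  obtain ⟨c, hc⟩ := hv
  refine ⟨c, ?_⟩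
  rintro _ ⟨j, rfl⟩
  linarith [hc ⟨j, rfl⟩, le_max_right (x - p j) 0]

theorem le_monotoneLipschitzExtension [Nonempty ι] {c : ℝ} (hc : ∀ i, c ≤ v i) (x : ℝ) :
    c ≤ monotoneLipschitzExtension p v x :=
  le_ciInf fun i => (hc i).trans (le_add_of_nonneg_right (le_max_right _ _))

theorem monotone_monotoneLipschitzExtension [Nonempty ι] (hv : BddBelow (range v)) :
    Monotone (monotoneLipschitzExtension p v) := fun x y hxy =>
  le_ciInf fun i => (monotoneLipschitzExtension_le hv i x).trans (by gcongr)

theorem lipschitzWith_monotoneLipschitzExtension [Nonempty ι] (hv : BddBelow (range v)) :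
    LipschitzWith 1 (monotoneLipschitzExtension p v) := by
  refine LipschitzWith.of_le_add fun x y => ?_
  rw [← sub_le_iff_le_add]
  refine le_ciInf fun i => ?_
  have hmax : max (x - p i) 0 ≤ max (y - p i) 0 + dist x y := by
    rw [Real.dist_eq]
    exact max_le (by linarith [le_abs_self (x - y), le_max_left (y - p i) 0])
      (by positivity)
  linarith [monotoneLipschitzExtension_le (p := p) hv i x]

theorem monotoneLipschitzExtension_apply [Nonempty ι] (hv : BddBelow (range v))
    (hpv : ∀ i j, v j ≤ v i + max (p j - p i) 0) (j : ι) :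
    monotoneLipschitzExtension p v (p j) = v j := by
  refine le_antisymm ?_ (le_ciInf fun i => hpv i j)
  simpa using monotoneLipschitzExtension_le (p := p) hv j (p j)

end MonotoneLipschitzExtension

theorem tsum_geometric_tail_le {a q : ℝ} (ha : 0 ≤ a) (hq0 : 0 ≤ q) (hq : q ≤ 1 / 2) (n : ℕ) :
    ∑' k, a * q ^ (k + (n + 1)) ≤ a * q ^ n := by
  have hq1 : q < 1 := by linarith
  calc ∑' k, a * q ^ (k + (n + 1)) = a * q ^ n * (q * (1 - q)⁻¹) := by
        simp only [pow_add, ← mul_assoc, tsum_mul_right, tsum_mul_left,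
          tsum_geometric_of_lt_one hq0 hq1]
        ring
    _ ≤ a * q ^ n * 1 := by
        gcongr
        rw [← div_eq_mul_inv, div_le_one (by linarith)]
        linarith
    _ = a * q ^ n := mul_one _

section DigitSum

variable {w v : ℕ → ℝ}

def digitSum (w : ℕ → ℝ) (ε : ℕ → Bool) : ℝ := ∑' n, if ε n then w n else 0

theorem Summable.digitTerms (hw : Summable w) (ε : ℕ → Bool) :
    Summable fun n => if ε n then w n else 0 :=
  (hw.indicator {n | ε n}).congr fun n => by simp [Set.indicator_apply]

theorem digitSum_nonneg (hw0 : ∀ n, 0 ≤ w n) (ε : ℕ → Bool) : 0 ≤ digitSum w ε :=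
  tsum_nonneg fun n => by split_ifs <;> simp [hw0 n]

theorem digitSum_le_tsum (hw0 : ∀ n, 0 ≤ w n) (hw : Summable w) (ε : ℕ → Bool) :
    digitSum w ε ≤ ∑' n, w n :=
  (hw.digitTerms ε).tsum_le_tsum (fun n => by split_ifs <;> simp [hw0 n]) hw

theorem digitSum_true (w : ℕ → ℝ) : digitSum w (fun _ => true) = ∑' n, w n := by
  simp [digitSum]

theorem digitSum_add (hw : Summable w) (hv : Summable v) (ε : ℕ → Bool) :
    digitSum (fun n => w n + v n) ε = digitSum w ε + digitSum v ε := by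
  simp only [digitSum, ite_add_zero]
  exact (hw.digitTerms ε).tsum_add (hv.digitTerms ε)

theorem digitSum_const_mul (c : ℝ) (ε : ℕ → Bool) :
    digitSum (fun n => c * w n) ε = c * digitSum w ε := by
  simp only [digitSum, ← tsum_mul_left, mul_ite, mul_zero]

theorem digitSum_eq_ite_add (hw : Summable w) (ε : ℕ → Bool) :
    digitSum w ε = (if ε 0 then w 0 else 0) + digitSum (fun n => w (n + 1)) (fun n => ε (n + 1)) :=
  (hw.digitTerms ε).tsum_eq_zero_add

theorem continuous_digitSum (hw : Summable w) : Continuous (digitSum w) := by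
  refine continuous_tsum (fun n => ?_) hw.abs fun n ε => ?_
  · exact (continuous_of_discreteTopology (f := fun b : Bool => if b then w n else 0)).comp
      (continuous_apply n)
  · split_ifs <;> simp

theorem range_digitSum (hw : Summable w) :
    range (digitSum w) = range (digitSum fun n => w (n + 1)) ∪
      (w 0 + ·) '' range (digitSum fun n => w (n + 1)) := by
  ext x
  constructor
  · rintro ⟨ε, rfl⟩
    rw [digitSum_eq_ite_add hw]
    cases ε 0
    · exact Or.inl ⟨fun n => ε (n + 1), by simp⟩
    · exact Or.inr ⟨_, ⟨fun n => ε (n + 1), rfl⟩, by simp⟩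
  · rintro (⟨ε, rfl⟩ | ⟨_, ⟨ε, rfl⟩, rfl⟩)
    · exact ⟨fun | 0 => false | n + 1 => ε n, by rw [digitSum_eq_ite_add hw]; simp⟩
    · exact ⟨fun | 0 => true | n + 1 => ε n, by rw [digitSum_eq_ite_add hw]; simp⟩

theorem digitSum_le_digitSum_of_toLex_le (hw0 : ∀ n, 0 ≤ w n) (hw : Summable w)
    (htail : ∀ n, ∑' k, w (k + (n + 1)) ≤ w n) {ε δ : ℕ → Bool} (hεδ : toLex ε ≤ toLex δ) :
    digitSum w ε ≤ digitSum w δ := by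
  rcases hεδ.lt_or_eq with ⟨n, hpre, hn⟩ | heq
  swap
  · rw [toLex_inj.1 heq]
  simp only [Pi.toLex_apply] at hpre hn
  obtain ⟨hεn, hδn⟩ := Bool.lt_iff.1 hn
  have hw' := (summable_nat_add_iff (n + 1)).2 hw
  have hhead : ∑ k ∈ Finset.range n, (if ε k then w k else 0) =
      ∑ k ∈ Finset.range n, (if δ k then w k else 0) :=
    Finset.sum_congr rfl fun k hk => by rw [hpre k (Finset.mem_range.1 hk)]
  have htailε : ∑' k, (if ε (k + (n + 1)) then w (k + (n + 1)) else 0) ≤ w n :=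
    ((hw'.digitTerms _).tsum_le_tsum (fun k => by split_ifs <;> simp [hw0]) hw').trans
      (htail n)
  have htailδ : 0 ≤ ∑' k, (if δ (k + (n + 1)) then w (k + (n + 1)) else 0) :=
    tsum_nonneg fun k => by split_ifs <;> simp [hw0]
  rw [digitSum, digitSum, ← (hw.digitTerms ε).sum_add_tsum_nat_add (n + 1),
    ← (hw.digitTerms δ).sum_add_tsum_nat_add (n + 1), Finset.sum_range_succ,
    Finset.sum_range_succ, hhead, hεn, hδn]
  simp only [Bool.false_eq_true, if_false, if_true]
  linarith

end DigitSum

namespace FatCantor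

def mass (n : ℕ) : ℝ := 1 / 4 * (1 / 2) ^ n

def spacing (n : ℕ) : ℝ := 3 / 8 * (1 / 4) ^ n

def weight (n : ℕ) : ℝ := mass n + spacing n

def attractor : Set ℝ := range (digitSum weight)

def staircase : ℝ → ℝ := monotoneLipschitzExtension (digitSum weight) (digitSum mass)

def left (x : ℝ) : ℝ := (x + staircase x) / 4

def right (x : ℝ) : ℝ := 5 / 8 + left x

theorem mass_nonneg (n : ℕ) : 0 ≤ mass n := by unfold mass; positivity

theorem spacing_nonneg (n : ℕ) : 0 ≤ spacing n := by unfold spacing; positivity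

theorem weight_nonneg (n : ℕ) : 0 ≤ weight n := add_nonneg (mass_nonneg n) (spacing_nonneg n)

theorem summable_mass : Summable mass :=
  (summable_geometric_of_lt_one (by norm_num) (by norm_num)).mul_left _

theorem summable_spacing : Summable spacing :=
  (summable_geometric_of_lt_one (by norm_num) (by norm_num)).mul_left _

theorem summable_weight : Summable weight := summable_mass.add summable_spacing

theorem tsum_mass : ∑' n, mass n = 1 / 2 := by
  simp only [mass, tsum_mul_left, tsum_geometric_of_lt_one (by norm_num : (0 : ℝ) ≤ 1 / 2)
    (by norm_num)]
  norm_num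

theorem tsum_spacing : ∑' n, spacing n = 1 / 2 := by
  simp only [spacing, tsum_mul_left, tsum_geometric_of_lt_one (by norm_num : (0 : ℝ) ≤ 1 / 4)
    (by norm_num)]
  norm_num

theorem tsum_weight : ∑' n, weight n = 1 := by
  simp only [weight]
  rw [summable_mass.tsum_add summable_spacing, tsum_mass, tsum_spacing]
  norm_num

theorem weight_zero : weight 0 = 5 / 8 := by norm_num [weight, mass, spacing]

theorem mass_succ (n : ℕ) : mass (n + 1) = 2⁻¹ * mass n := by
  simp only [mass, pow_succ]; ring

/-- This recursion is what makes `left` prepend the digit `0`. -/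
theorem weight_succ (n : ℕ) : weight (n + 1) = 4⁻¹ * (weight n + mass n) := by
  simp only [weight, mass, spacing, pow_succ]; ring

theorem digitSum_mass_le_of_toLex_le {ε δ : ℕ → Bool} (h : toLex ε ≤ toLex δ) :
    digitSum mass ε ≤ digitSum mass δ :=
  digitSum_le_digitSum_of_toLex_le mass_nonneg summable_mass
    (tsum_geometric_tail_le (by norm_num) (by norm_num) (by norm_num)) h

theorem digitSum_spacing_le_of_toLex_le {ε δ : ℕ → Bool} (h : toLex ε ≤ toLex δ) :
    digitSum spacing ε ≤ digitSum spacing δ :=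
  digitSum_le_digitSum_of_toLex_le spacing_nonneg summable_spacing
    (tsum_geometric_tail_le (by norm_num) (by norm_num) (by norm_num)) h

theorem digitSum_weight (ε : ℕ → Bool) :
    digitSum weight ε = digitSum mass ε + digitSum spacing ε :=
  digitSum_add summable_mass summable_spacing ε

/-- The compatibility condition for `staircase` to extend `digitSum weight ε ↦ digitSum mass ε`:
a lexicographic increase of the digits increases both the `mass` and the `spacing` sums, and
`weight = mass + spacing`. -/
theorem digitSum_mass_le_add_max (ε δ : ℕ → Bool) :
    digitSum mass δ ≤ digitSum mass ε + max (digitSum weight δ - digitSum weight ε) 0 := by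
  rcases le_total (toLex δ) (toLex ε) with h | h
  · linarith [digitSum_mass_le_of_toLex_le h,
      le_max_right (digitSum weight δ - digitSum weight ε) 0]
  · linarith [digitSum_spacing_le_of_toLex_le h, digitSum_weight ε, digitSum_weight δ,
      le_max_left (digitSum weight δ - digitSum weight ε) 0]

theorem bddBelow_range_digitSum_mass : BddBelow (range (digitSum mass)) :=
  ⟨0, by rintro _ ⟨ε, rfl⟩; exact digitSum_nonneg mass_nonneg ε⟩

theorem staircase_digitSum (ε : ℕ → Bool) : staircase (digitSum weight ε) = digitSum mass ε :=
  monotoneLipschitzExtension_apply bddBelow_range_digitSum_mass digitSum_mass_le_add_max ε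

theorem monotone_staircase : Monotone staircase :=
  monotone_monotoneLipschitzExtension bddBelow_range_digitSum_mass

theorem lipschitzWith_staircase : LipschitzWith 1 staircase :=
  lipschitzWith_monotoneLipschitzExtension bddBelow_range_digitSum_mass

theorem staircase_nonneg (x : ℝ) : 0 ≤ staircase x :=
  le_monotoneLipschitzExtension (digitSum_nonneg mass_nonneg) x

theorem staircase_le {x : ℝ} (hx : x ≤ 1) : staircase x ≤ 1 / 2 := by
  refine (monotoneLipschitzExtension_le bddBelow_range_digitSum_mass (fun _ => true) x).trans ?_
  rw [digitSum_true, digitSum_true, tsum_mass, tsum_weight, max_eq_right (by linarith), add_zero]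

theorem strictMono_left : StrictMono left := fun x y hxy => by
  have := monotone_staircase hxy.le
  unfold left
  linarith

theorem lipschitzWith_left : LipschitzWith 2⁻¹ left := by
  refine LipschitzWith.of_dist_le_mul fun x y => ?_
  have h := lipschitzWith_staircase.dist_le_mul x y
  simp only [Real.dist_eq, NNReal.coe_one, one_mul, NNReal.coe_inv, NNReal.coe_ofNat] at h ⊢
  rw [left, left, show (x + staircase x) / 4 - (y + staircase y) / 4 =
      (x - y + (staircase x - staircase y)) / 4 by ring,
    abs_div, abs_of_pos (by norm_num : (0 : ℝ) < 4)]
  linarith [abs_add_le (x - y) (staircase x - staircase y)]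

theorem lipschitzWith_right : LipschitzWith 2⁻¹ right :=
  LipschitzWith.of_dist_le_mul fun x y => by
    simpa [right, dist_add_left] using lipschitzWith_left.dist_le_mul x y

theorem left_mem_Icc {x : ℝ} (hx : x ∈ Icc (0 : ℝ) 1) : left x ∈ Icc (0 : ℝ) (3 / 8) := by
  have := staircase_nonneg x
  have := staircase_le hx.2
  constructor <;> unfold left <;> linarith [hx.1, hx.2]

theorem left_digitSum (ε : ℕ → Bool) :
    left (digitSum weight ε) = digitSum (fun n => weight (n + 1)) ε := by
  simp only [weight_succ, digitSum_const_mul, digitSum_add summable_weight summable_mass, left,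
    staircase_digitSum]
  ring

theorem attractor_eq : attractor = left '' attractor ∪ right '' attractor := by
  have hleft : left '' attractor = range (digitSum fun n => weight (n + 1)) := by
    rw [attractor, ← range_comp]
    exact congrArg range (funext left_digitSum)
  have hright : right '' attractor = (weight 0 + ·) '' left '' attractor := by
    rw [image_image, weight_zero]; rfl
  rw [hright, hleft]
  exact range_digitSum summable_weight

theorem isCompact_attractor : IsCompact attractor :=
  isCompact_range (continuous_digitSum summable_weight)

theorem attractor_nonempty : attractor.Nonempty := range_nonempty _

theorem attractor_subset_Icc : attractor ⊆ Icc 0 1 := by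
  rintro _ ⟨ε, rfl⟩
  exact ⟨digitSum_nonneg weight_nonneg ε,
    tsum_weight ▸ digitSum_le_tsum weight_nonneg summable_weight ε⟩

/-- Both sets are attractors of `x ↦ x/2` and `x ↦ 1/4 + x/2`. -/
theorem range_digitSum_mass : range (digitSum mass) = Icc 0 (1 / 2) := by
  have hhalf : LipschitzWith 2⁻¹ fun x : ℝ => 2⁻¹ * x :=
    LipschitzWith.of_dist_le_mul fun x y => by
      simp [Real.dist_eq, ← mul_sub, abs_mul]
  have hshift : LipschitzWith 2⁻¹ fun x : ℝ => 1 / 4 + 2⁻¹ * x :=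
    LipschitzWith.of_dist_le_mul fun x y => by
      simp [Real.dist_eq, ← mul_sub, abs_mul]
  refine eq_of_eq_image_union_image (by norm_num) hhalf hshift
    (isCompact_range (continuous_digitSum summable_mass)) (range_nonempty _) isCompact_Icc
    (nonempty_Icc.2 (by norm_num)) ?_ ?_
  · have hsucc : range (digitSum fun n => mass (n + 1)) = (2⁻¹ * ·) '' range (digitSum mass) := by
      rw [← range_comp]
      exact congrArg range (funext fun ε => by simp only [mass_succ, digitSum_const_mul]; rfl)
    nth_rewrite 1 [range_digitSum summable_mass]
    rw [hsucc, image_image]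
    norm_num [mass]
  · rw [image_mul_left_Icc (by norm_num) (by norm_num), ← image_image (1 / 4 + ·) (2⁻¹ * ·),
      image_mul_left_Icc (by norm_num) (by norm_num), image_const_add_Icc]
    norm_num

theorem volume_attractor_pos : 0 < volume attractor := by
  have himage : staircase '' attractor = Icc 0 (1 / 2) := by
    rw [attractor, ← range_comp, ← range_digitSum_mass]
    exact congrArg range (funext staircase_digitSum)
  calc (0 : ℝ≥0∞) < volume (Icc (0 : ℝ) (1 / 2)) := by simp
    _ = volume (staircase '' attractor) := by rw [himage]
    _ ≤ volume attractor := by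
        simpa using lipschitzWith_staircase.volume_image_le attractor

end FatCantor

open FatCantor in
theorem stmt_0 :
    ∃ f g : ℝ → ℝ,
      Set.MapsTo f (Set.Icc (0 : ℝ) 1) (Set.Icc (0 : ℝ) 1) ∧
      Set.MapsTo g (Set.Icc (0 : ℝ) 1) (Set.Icc (0 : ℝ) 1) ∧
      StrictMonoOn f (Set.Icc (0 : ℝ) 1) ∧
      StrictMonoOn g (Set.Icc (0 : ℝ) 1) ∧
      (∃ L : ℝ, L < 1 ∧ ∀ x ∈ Set.Icc (0 : ℝ) 1, ∀ y ∈ Set.Icc (0 : ℝ) 1,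
        |f x - f y| ≤ L * |x - y|) ∧
      (∃ L : ℝ, L < 1 ∧ ∀ x ∈ Set.Icc (0 : ℝ) 1, ∀ y ∈ Set.Icc (0 : ℝ) 1,
        |g x - g y| ≤ L * |x - y|) ∧
      f '' Set.Icc (0 : ℝ) 1 ∩ g '' Set.Icc (0 : ℝ) 1 = ∅ ∧
      ∃ A : Set ℝ, A ⊆ Set.Icc (0 : ℝ) 1 ∧ A.Nonempty ∧ IsCompact A ∧
        A = f '' A ∪ g '' A ∧
        (∀ B : Set ℝ, B ⊆ Set.Icc (0 : ℝ) 1 → B.Nonempty → IsCompact B →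
          B = f '' B ∪ g '' B → B = A) ∧
        0 < volume A := by
  have habs {f : ℝ → ℝ} (hf : LipschitzWith 2⁻¹ f) (x y : ℝ) : |f x - f y| ≤ 2⁻¹ * |x - y| := by
    simpa [Real.dist_eq] using hf.dist_le_mul x y
  refine ⟨left, right, fun x hx => ?_, fun x hx => ?_, strictMono_left.strictMonoOn _,
    (strictMono_left.const_add _).strictMonoOn _,
    ⟨2⁻¹, by norm_num, fun x _ y _ => habs lipschitzWith_left x y⟩,
    ⟨2⁻¹, by norm_num, fun x _ y _ => habs lipschitzWith_right x y⟩, ?_,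
    attractor, attractor_subset_Icc, attractor_nonempty, isCompact_attractor, attractor_eq,
    fun B _ hB hBc hBfix => eq_of_eq_image_union_image (by norm_num) lipschitzWith_left
      lipschitzWith_right hBc hB isCompact_attractor attractor_nonempty hBfix attractor_eq,
    volume_attractor_pos⟩
  · exact Icc_subset_Icc_right (by norm_num) (left_mem_Icc hx)
  · have := left_mem_Icc hx
    exact ⟨by unfold right; linarith [this.1], by unfold right; linarith [this.2]⟩
  · refine eq_empty_of_forall_notMem fun z ⟨⟨x, hx, hxz⟩, ⟨y, hy, hyz⟩⟩ => ?_
    have := (left_mem_Icc hx).2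
    have := (left_mem_Icc hy).1
    unfold right at hyz
    linarith
end
end

section
/- Let f₁, …, f_N : [0,1] → [0,1] be similitudes, i.e., fₙ(x) = aₙx + bₙ with aₙ ∈ (−1,0) ∪ (0,1) and bₙ ∈ [0,1], such that ⋃ₙ fₙ([0,1]) ≠ [0,1] and fᵢ((0,1)) ∩ fⱼ((0,1)) = ∅ for all i ≠ j. Then the attractor of the iterated function system {f₁, …, f_N} has Lebesgue measure zero. -/
/-!
The open images `fₙ((0,1))` are disjoint intervals of total length `∑ |aₙ|` inside `[0,1]`, and
they miss the gap `(0,1) \ ⋃ fₙ([0,1])`, which is a nonempty open set. Hence `r := ∑ |aₙ| < 1`.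
Since `A ⊆ ⋃ fₙ(A)` and `fₙ` scales Lebesgue measure by `|aₙ|`, we get `λ(A) ≤ r λ(A)`, and
`λ(A) < ∞` forces `λ(A) = 0`.
-/

open Set MeasureTheory Filter
open Function
open scoped Pointwise

theorem volume_image_mul_add (a b : ℝ) (s : Set ℝ) :
    volume ((fun x => a * x + b) '' s) = ENNReal.ofReal |a| * volume s := by
  have : (fun x => a * x + b) '' s = (· + b) '' (a • s) := by
    rw [← image_smul, image_image]; rfl
  simp [this, image_add_right, measure_preimage_add_right, Measure.addHaar_smul]

theorem Ioo_diff_nonempty_of_not_Icc_subset {a b : ℝ} (hab : a ≠ b) {U : Set ℝ}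
    (hU : IsClosed U) (h : ¬ Icc a b ⊆ U) : (Ioo a b \ U).Nonempty := by
  contrapose! h
  rw [← closure_Ioo hab]
  exact closure_minimal (sdiff_eq_empty.1 h) hU

theorem sum_volume_image_Ioo_lt_one {ι : Type*} [Fintype ι] {f : ι → ℝ → ℝ}
    (hcont : ∀ n, Continuous (f n)) (hmaps : ∀ n, MapsTo (f n) (Icc 0 1) (Icc 0 1))
    (hcover : (⋃ n, f n '' Icc 0 1) ≠ Icc 0 1)
    (hdisj : Pairwise (Disjoint on fun n => f n '' Ioo 0 1)) :
    ∑ n, volume (f n '' Ioo 0 1) < 1 := by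
  set U := ⋃ n, f n '' Icc (0 : ℝ) 1
  set W := ⋃ n, f n '' Ioo (0 : ℝ) 1
  set V := Ioo (0 : ℝ) 1 \ U
  have hU_sub : U ⊆ Icc 0 1 := iUnion_subset fun n => (hmaps n).image_subset
  have hU_closed : IsClosed U :=
    isClosed_iUnion_of_finite fun n => (isCompact_Icc.image (hcont n)).isClosed
  have hW_sub : W ⊆ U := iUnion_mono fun n => image_mono Ioo_subset_Icc_self
  have hV_pos : 0 < volume V :=
    (isOpen_Ioo.sdiff hU_closed).measure_pos volume <| Ioo_diff_nonempty_of_not_Icc_subset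
      zero_ne_one hU_closed fun h => hcover (hU_sub.antisymm h)
  have hW_vol : volume W = ∑ n, volume (f n '' Ioo 0 1) :=
    measure_iUnion hdisj (fun n => (isPreconnected_Ioo.image _
      (hcont n).continuousOn).ordConnected.measurableSet) |>.trans (tsum_fintype _)
  have hWV : volume W + volume V ≤ 1 :=
    calc volume W + volume V = volume (W ∪ V) :=
          (measure_union (disjoint_sdiff_right.mono_left hW_sub)
            (isOpen_Ioo.sdiff hU_closed).measurableSet).symm
      _ ≤ volume (Icc (0 : ℝ) 1) :=
          measure_mono <|
            union_subset (hW_sub.trans hU_sub) (sdiff_subset.trans Ioo_subset_Icc_self)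
      _ = 1 := by simp
  rw [← hW_vol]
  exact (ENNReal.lt_add_right (ne_top_of_le_ne_top ENNReal.one_ne_top (le_self_add.trans hWV))
    hV_pos.ne').trans_le hWV

theorem measure_eq_zero_of_subset_iUnion_image {α ι : Type*} [MeasurableSpace α] [Fintype ι]
    {μ : Measure α} {f : ι → α → α} {r : ι → ENNReal} {A : Set α} (hA : μ A ≠ ⊤)
    (hsub : A ⊆ ⋃ n, f n '' A) (hscale : ∀ n, μ (f n '' A) ≤ r n * μ A)
    (hr : ∑ n, r n < 1) : μ A = 0 := by
  by_contra h
  have : μ A ≤ (∑ n, r n) * μ A :=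
    calc μ A ≤ ∑ n, μ (f n '' A) := (measure_mono hsub).trans (measure_iUnion_fintype_le _ _)
      _ ≤ ∑ n, r n * μ A := Finset.sum_le_sum fun n _ => hscale n
      _ = (∑ n, r n) * μ A := (Finset.sum_mul ..).symm
  exact this.not_gt (by simpa using (ENNReal.mul_lt_mul_iff_left h hA).2 hr)

theorem stmt_1_general (N : ℕ) (a b : Fin N → ℝ)
    (f : Fin N → ℝ → ℝ) (hf : ∀ n x, f n x = a n * x + b n)
    (hmaps : ∀ n, Set.MapsTo (f n) (Set.Icc (0 : ℝ) 1) (Set.Icc (0 : ℝ) 1))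
    (hcover : (⋃ n, f n '' Set.Icc (0 : ℝ) 1) ≠ Set.Icc (0 : ℝ) 1)
    (hdisj : ∀ i j, i ≠ j → f i '' Set.Ioo (0 : ℝ) 1 ∩ f j '' Set.Ioo (0 : ℝ) 1 = ∅)
    (A : Set ℝ) (hcomp : IsCompact A)
    (hfix : A = ⋃ n, f n '' A) :
    volume A = 0 := by
  have hf_eq : ∀ n, f n = fun x => a n * x + b n := fun n => funext (hf n)
  have hvol : ∀ n s, volume (f n '' s) = ENNReal.ofReal |a n| * volume s := fun n s => by
    rw [hf_eq n, volume_image_mul_add]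
  have hratio : ∑ n, ENNReal.ofReal |a n| < 1 := by
    simpa [hvol] using sum_volume_image_Ioo_lt_one (fun n => by rw [hf_eq n]; fun_prop) hmaps
      hcover fun i j hij => disjoint_iff_inter_eq_empty.2 (hdisj i j hij)
  exact measure_eq_zero_of_subset_iUnion_image hcomp.measure_lt_top.ne hfix.subset
    (fun n => (hvol n A).le) hratio

theorem stmt_1 (N : ℕ) (hN : 0 < N) (a b : Fin N → ℝ)
    (ha : ∀ n, a n ∈ Set.Ioo (-1 : ℝ) 1) (ha0 : ∀ n, a n ≠ 0)
    (hb : ∀ n, b n ∈ Set.Icc (0 : ℝ) 1)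
    (f : Fin N → ℝ → ℝ) (hf : ∀ n x, f n x = a n * x + b n)
    (hmaps : ∀ n, Set.MapsTo (f n) (Set.Icc (0 : ℝ) 1) (Set.Icc (0 : ℝ) 1))
    (hcover : (⋃ n, f n '' Set.Icc (0 : ℝ) 1) ≠ Set.Icc (0 : ℝ) 1)
    (hdisj : ∀ i j, i ≠ j → f i '' Set.Ioo (0 : ℝ) 1 ∩ f j '' Set.Ioo (0 : ℝ) 1 = ∅)
    (A : Set ℝ) (hA : A ⊆ Set.Icc (0 : ℝ) 1) (hne : A.Nonempty) (hcomp : IsCompact A)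
    (hfix : A = ⋃ n, f n '' A) :
    volume A = 0 :=
  stmt_1_general N a b f hf hmaps hcover hdisj A hcomp hfix
end

section
/- For every k ∈ ℕ and every interval [a,b] ∈ 𝓘_k: if [a,b] ⊆ [0,1/3] then [a + 2/3, b + 2/3] ∈ 𝓘_k, and if [a,b] ⊆ [2/3,1] then [a − 2/3, b − 2/3] ∈ 𝓘_k. -/
/-!
From level 2 on, the construction runs on `[0, 1/3]` and `[2/3, 1]` with the same gaps, and
splitting commutes with translation, so `𝓘_k` is a family `J` of intervals inside `[0, 1/3]`
together with its translate `J + 2/3`. Since all intervals of `𝓘_k` are nonempty (the gaps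
`2 ε_k` are shorter than the widths `w_k`), an interval of `𝓘_k` inside `[0, 1/3]` lies in `J`
and one inside `[2/3, 1]` lies in `J + 2/3`.
-/

open Set

def splitGap (e : ℝ) (p : ℝ × ℝ) : Set (ℝ × ℝ) :=
  {(p.1, (p.1 + p.2) / 2 - e), ((p.1 + p.2) / 2 + e, p.2)}

/-- The family at level `n + m` when `S` is the family at level `m`. -/
def splitIter (ε : ℕ → ℝ) (m : ℕ) (S : Set (ℝ × ℝ)) : ℕ → Set (ℝ × ℝ)
  | 0 => S
  | n + 1 => ⋃ p ∈ splitIter ε m S n, splitGap (ε (n + m)) p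

lemma splitGap_add (e t : ℝ) (p : ℝ × ℝ) :
    splitGap e (p + (t, t)) = (· + (t, t)) '' splitGap e p := by
  simp only [splitGap, image_insert_eq, image_singleton, Prod.mk_add_mk, Prod.fst_add,
    Prod.snd_add]
  ring_nf

lemma Icc_subset_of_mem_splitGap {e : ℝ} (he : 0 ≤ e) {p q : ℝ × ℝ}
    (hq : q ∈ splitGap e p) : Icc q.1 q.2 ⊆ Icc p.1 p.2 := by
  rcases hq with rfl | rfl <;> rintro x ⟨hx₁, hx₂⟩ <;> constructor <;> dsimp only at * <;>
    linarith

lemma sub_eq_of_mem_splitGap {e : ℝ} {p q : ℝ × ℝ} (hq : q ∈ splitGap e p) :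
    q.2 - q.1 = (p.2 - p.1) / 2 - e := by
  rcases hq with rfl | rfl <;> dsimp only <;> ring

namespace splitIter

variable {ε : ℕ → ℝ} {m : ℕ}

lemma union (S T : Set (ℝ × ℝ)) :
    ∀ n, splitIter ε m (S ∪ T) n = splitIter ε m S n ∪ splitIter ε m T n
  | 0 => rfl
  | n + 1 => by simp only [splitIter, union S T n, biUnion_union]

lemma image_add (t : ℝ) (S : Set (ℝ × ℝ)) :
    ∀ n, splitIter ε m ((· + (t, t)) '' S) n = (· + (t, t)) '' splitIter ε m S n
  | 0 => rfl
  | n + 1 => by simp only [splitIter, image_add t S n, biUnion_image, splitGap_add, image_iUnion₂]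

lemma exists_Icc_superset (hε : ∀ n, 0 ≤ ε (n + m)) {S : Set (ℝ × ℝ)} :
    ∀ n, ∀ q ∈ splitIter ε m S n, ∃ p ∈ S, Icc q.1 q.2 ⊆ Icc p.1 p.2
  | 0, q, hq => ⟨q, hq, subset_rfl⟩
  | n + 1, q, hq => by
    obtain ⟨r, hr, hqr⟩ := mem_iUnion₂.1 hq
    obtain ⟨p, hp, hrp⟩ := exists_Icc_superset hε n r hr
    exact ⟨p, hp, (Icc_subset_of_mem_splitGap (hε n) hqr).trans hrp⟩

lemma sub_eq_of_mem {w : ℕ → ℝ} {S : Set (ℝ × ℝ)}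
    (hw : ∀ n, w (n + m + 1) = w (n + m) / 2 - ε (n + m)) (hS : ∀ p ∈ S, p.2 - p.1 = w m) :
    ∀ n, ∀ q ∈ splitIter ε m S n, q.2 - q.1 = w (n + m)
  | 0, q, hq => by rw [zero_add]; exact hS q hq
  | n + 1, q, hq => by
    obtain ⟨r, hr, hqr⟩ := mem_iUnion₂.1 hq
    rw [sub_eq_of_mem_splitGap hqr, sub_eq_of_mem hw hS n r hr, add_right_comm, hw]

end splitIter

lemma eq_splitIter {ε : ℕ → ℝ} {m : ℕ} {I : ℕ → Set (ℝ × ℝ)}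
    (hI : ∀ k, m ≤ k → I (k + 1) = ⋃ p ∈ I k, splitGap (ε k) p) :
    ∀ n, I (n + m) = splitIter ε m (I m) n
  | 0 => by rw [zero_add]; rfl
  | n + 1 => by
    rw [splitIter, ← eq_splitIter hI n, add_right_comm]
    exact hI _ (Nat.le_add_left m n)

lemma shift_mem_union_image_of_Icc_subset {J : Set (ℝ × ℝ)} {a b t : ℝ}
    (hJ : ∀ q ∈ J, Icc q.1 q.2 ⊆ Icc a b) (ht : b < a + t) {p : ℝ × ℝ}
    (hp : p ∈ J ∪ (· + (t, t)) '' J) (hle : p.1 ≤ p.2) :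
    (Icc p.1 p.2 ⊆ Icc a b → (p.1 + t, p.2 + t) ∈ J ∪ (· + (t, t)) '' J) ∧
    (Icc p.1 p.2 ⊆ Icc (a + t) (b + t) → (p.1 - t, p.2 - t) ∈ J ∪ (· + (t, t)) '' J) := by
  have hp₁ : p.1 ∈ Icc p.1 p.2 := left_mem_Icc.2 hle
  rcases hp with hpJ | ⟨q, hqJ, rfl⟩
  · refine ⟨fun _ => Or.inr ⟨p, hpJ, rfl⟩, fun h => ?_⟩
    linarith [(h hp₁).1, (hJ p hpJ hp₁).2]
  · refine ⟨fun h => ?_, fun _ => Or.inl (by simpa using hqJ)⟩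
    have hq₁ := hJ q hqJ (left_mem_Icc.2 (by simpa using hle))
    linarith [(h hp₁).2, hq₁.1, show (q + (t, t)).1 = q.1 + t from rfl]

theorem stmt_8_general
    (ε w : ℕ → ℝ)
    (hw1 : w 1 = 1) (hε1 : ε 1 = 1 / 6)
    (hwrec : ∀ k, 1 ≤ k → w (k + 1) = w k / 2 - ε k)
    (hεpos : ∀ k, 1 ≤ k → 0 < ε (k + 1))
    (hεw : ∀ k, 1 ≤ k → ε (k + 1) < w k / 4 - ε k / 2)
    (I : ℕ → Set (ℝ × ℝ))
    (hI1 : I 1 = {((0 : ℝ), (1 : ℝ))})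
    (hIrec : ∀ k, 1 ≤ k → I (k + 1) =
      ⋃ p ∈ I k, {(p.1, (p.1 + p.2) / 2 - ε k), ((p.1 + p.2) / 2 + ε k, p.2)})
    :
    ∀ k, 1 ≤ k → ∀ p ∈ I k,
      (Set.Icc p.1 p.2 ⊆ Set.Icc (0 : ℝ) (1 / 3) → (p.1 + 2 / 3, p.2 + 2 / 3) ∈ I k) ∧
      (Set.Icc p.1 p.2 ⊆ Set.Icc (2 / 3 : ℝ) 1 → (p.1 - 2 / 3, p.2 - 2 / 3) ∈ I k) := by
  have hsplit : ∀ k, 1 ≤ k → I (k + 1) = ⋃ p ∈ I k, splitGap (ε k) p := hIrec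
  rintro (_ | _ | n) hk p hp
  · omega
  · rw [hI1, mem_singleton_iff] at hp
    subst hp
    constructor <;> intro h
    · linarith [(h (right_mem_Icc.2 zero_le_one)).2]
    · linarith [(h (left_mem_Icc.2 zero_le_one)).1]
  have hle : p.1 ≤ p.2 := by
    have hwidth := splitIter.sub_eq_of_mem (fun n => hwrec _ (Nat.le_add_left 1 n))
      (by simp [hI1, hw1]) (n + 1) p (eq_splitIter hsplit (n + 1) ▸ hp)
    linarith [hwrec (n + 1) (by omega), hεw (n + 1) (by omega), hεpos (n + 1) (by omega)]
  have hI2 : I 2 = {(0, 1 / 3)} ∪ (· + (2 / 3, 2 / 3)) '' {(0, 1 / 3)} := by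
    rw [hIrec 1 le_rfl, hI1, biUnion_singleton, hε1, image_singleton, insert_eq]
    congr 2 <;> ext <;> norm_num
  have hJ : ∀ q ∈ splitIter ε 2 {(0, 1 / 3)} n, Icc q.1 q.2 ⊆ Icc 0 (1 / 3) := by
    intro q hq
    obtain ⟨_, rfl, hqr⟩ :=
      splitIter.exists_Icc_superset (fun j => (hεpos (j + 1) (by omega)).le) n q hq
    exact hqr
  have hI : I (n + 1 + 1) = splitIter ε 2 (I 2) n :=
    eq_splitIter (m := 2) (fun k hk => hsplit k (by omega)) n
  rw [hI, hI2, splitIter.union, splitIter.image_add] at hp ⊢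
  simpa only [zero_add, show (1 / 3 + 2 / 3 : ℝ) = 1 by norm_num] using
    shift_mem_union_image_of_Icc_subset hJ (by norm_num) hp hle

theorem stmt_8
    (ε w : ℕ → ℝ)
    (hw1 : w 1 = 1) (hε1 : ε 1 = 1 / 6)
    (hwrec : ∀ k, 1 ≤ k → w (k + 1) = w k / 2 - ε k)
    (hεpos : ∀ k, 1 ≤ k → 0 < ε (k + 1))
    (hεgeom : ∀ k, 1 ≤ k → 2 ^ k * ε (k + 1) < 1 / 2 * (1 / 4 ^ k))
    (hεquot : ∀ k, 1 ≤ k → ε (k + 1) / ε k < 1 / 2)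
    (hεw : ∀ k, 1 ≤ k → ε (k + 1) < w k / 4 - ε k / 2)
    (I : ℕ → Set (ℝ × ℝ))
    (hI1 : I 1 = {((0 : ℝ), (1 : ℝ))})
    (hIrec : ∀ k, 1 ≤ k → I (k + 1) =
      ⋃ p ∈ I k, {(p.1, (p.1 + p.2) / 2 - ε k), ((p.1 + p.2) / 2 + ε k, p.2)})
    :
    ∀ k, 1 ≤ k → ∀ p ∈ I k,
      (Set.Icc p.1 p.2 ⊆ Set.Icc (0 : ℝ) (1 / 3) → (p.1 + 2 / 3, p.2 + 2 / 3) ∈ I k) ∧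
      (Set.Icc p.1 p.2 ⊆ Set.Icc (2 / 3 : ℝ) 1 → (p.1 - 2 / 3, p.2 - 2 / 3) ∈ I k) :=
  stmt_8_general ε w hw1 hε1 hwrec hεpos hεw I hI1 hIrec
end

section
/- The set A_* = ⋂_{k∈ℕ} A_k satisfies λ([0,1] \ A_*) < 2/3, and hence λ(A_*) ≥ 1/3 > 0, where λ denotes one-dimensional Lebesgue measure. -/
/-!
At stage `k` each of the at most `2 ^ (k - 1)` intervals of `𝓘_k` loses only an open middle
piece of length `2 ε_k`, and `[0, 1] \ A_*` is covered by these pieces, so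
`λ([0, 1] \ A_*) ≤ ∑ₖ 2 ^ (k - 1) · 2 ε_k`. The first term is `1/3`, and the hypothesis
`2 ^ k ε_{k+1} < 4 ^ (-k) / 2` makes the remaining ones strictly smaller than
`∑_{k ≥ 1} 4 ^ (-k) = 1/3`. Since `λ([0, 1]) = 1`, this leaves `λ(A_*) ≥ 1/3`.
-/

open Set MeasureTheory
open scoped ENNReal

/-- A pair `(a, b)` stands for the closed interval `[a, b]`; this is the step `𝓘_k ↦ 𝓘_{k+1}`. -/
def splitIntervals (e : ℝ) (S : Set (ℝ × ℝ)) : Set (ℝ × ℝ) :=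
  ⋃ p ∈ S, {(p.1, (p.1 + p.2) / 2 - e), ((p.1 + p.2) / 2 + e, p.2)}

def intervalUnion (S : Set (ℝ × ℝ)) : Set ℝ :=
  ⋃ p ∈ S, Icc p.1 p.2

theorem encard_splitIntervals_le (S : Set (ℝ × ℝ)) (e : ℝ) :
    (splitIntervals e S).encard ≤ 2 * S.encard := by
  rcases S.finite_or_infinite with hS | hS
  · induction S, hS using Set.Finite.induction_on with
    | empty => simp [splitIntervals]
    | @insert p S hp _ ih =>
      have hpair :
          ({(p.1, (p.1 + p.2) / 2 - e), ((p.1 + p.2) / 2 + e, p.2)} : Set (ℝ × ℝ)).encard ≤ 2 :=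
        (encard_insert_le _ _).trans_eq (by rw [encard_singleton, one_add_one_eq_two])
      rw [splitIntervals, biUnion_insert, encard_insert_of_notMem hp, mul_add, mul_one,
        add_comm (2 * S.encard)]
      exact (encard_union_le _ _).trans (add_le_add hpair ih)
  · simp [hS.encard_eq, ENat.mul_top]

theorem intervalUnion_diff_splitIntervals_subset (S : Set (ℝ × ℝ)) (e : ℝ) :
    intervalUnion S \ intervalUnion (splitIntervals e S) ⊆
      ⋃ p ∈ S, Ioo ((p.1 + p.2) / 2 - e) ((p.1 + p.2) / 2 + e) := by
  rintro x ⟨hx, hx'⟩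
  obtain ⟨p, hp, hxp⟩ := mem_iUnion₂.1 hx
  simp only [intervalUnion, splitIntervals, mem_iUnion, exists_prop, not_exists, not_and] at hx'
  refine mem_iUnion₂.2 ⟨p, hp, ?_, ?_⟩
  · by_contra! h
    exact hx' _ ⟨p, hp, Or.inl rfl⟩ ⟨hxp.1, h⟩
  · by_contra! h
    exact hx' _ ⟨p, hp, Or.inr rfl⟩ ⟨h, hxp.2⟩

theorem measure_biUnion_le_encard_mul {α ι : Type*} [MeasurableSpace α] (μ : Measure α)
    {t : Set ι} (ht : t.Finite) (s : ι → Set α) {c : ℝ≥0∞}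
    (hs : ∀ i ∈ t, μ (s i) ≤ c) :
    μ (⋃ i ∈ t, s i) ≤ t.encard * c := by
  lift t to Finset ι using ht
  calc μ (⋃ i ∈ (t : Set ι), s i) ≤ ∑ i ∈ t, μ (s i) := measure_biUnion_finset_le _ _
    _ ≤ ∑ i ∈ t, c := Finset.sum_le_sum hs
    _ = (t : Set ι).encard * c := by simp

theorem volume_intervalUnion_diff_splitIntervals_le {S : Set (ℝ × ℝ)} {n : ℕ}
    (hS : S.encard ≤ n) (e : ℝ) :
    volume (intervalUnion S \ intervalUnion (splitIntervals e S)) ≤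
      ENNReal.ofReal (n * (2 * e)) := by
  have hfin : S.Finite := finite_of_encard_le_coe hS
  calc volume (intervalUnion S \ intervalUnion (splitIntervals e S))
      ≤ S.encard * ENNReal.ofReal (2 * e) :=
        (measure_mono (intervalUnion_diff_splitIntervals_subset S e)).trans <|
          measure_biUnion_le_encard_mul _ hfin _ fun p _ => by rw [Real.volume_Ioo]; ring_nf; rfl
    _ ≤ n * ENNReal.ofReal (2 * e) := by gcongr; exact_mod_cast hS
    _ = ENNReal.ofReal (n * (2 * e)) := by
        rw [ENNReal.ofReal_mul (Nat.cast_nonneg n), ENNReal.ofReal_natCast]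

theorem Set.diff_iInter_subset_iUnion_diff_succ {α : Type*} (s : ℕ → Set α) :
    s 0 \ ⋂ n, s n ⊆ ⋃ n, s n \ s (n + 1) := by
  rintro x ⟨hx0, hx⟩
  obtain ⟨m, hm⟩ := not_forall.1 (mem_iInter.not.1 hx)
  simp only [mem_iUnion, mem_sdiff]
  induction m with
  | zero => exact absurd hx0 hm
  | succ m ih =>
    by_cases h : x ∈ s m
    · exact ⟨m, h, hm⟩
    · exact ih h

theorem measure_diff_iInter_le_tsum {α : Type*} [MeasurableSpace α] (μ : Measure α)
    (s : ℕ → Set α) : μ (s 0 \ ⋂ n, s n) ≤ ∑' n, μ (s n \ s (n + 1)) :=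
  (measure_mono (diff_iInter_subset_iUnion_diff_succ s)).trans (measure_iUnion_le _)

theorem tsum_one_div_four_pow_succ : ∑' k : ℕ, (1 / 4 : ℝ) ^ (k + 1) = 1 / 3 := by
  simp_rw [pow_succ]
  rw [tsum_mul_right, tsum_geometric_of_lt_one (by norm_num) (by norm_num)]
  norm_num

theorem tsum_ofReal_removed_length_lt (ε : ℕ → ℝ) (hε1 : ε 1 = 1 / 6)
    (hεgeom : ∀ k, 1 ≤ k → 2 ^ k * ε (k + 1) < 1 / 2 * (1 / 4 ^ k)) :
    ∑' k : ℕ, ENNReal.ofReal (2 ^ k * (2 * ε (k + 1))) < 2 / 3 := by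
  have hterm : ∀ k : ℕ, ENNReal.ofReal (2 ^ (k + 1) * (2 * ε (k + 2))) <
      ENNReal.ofReal ((1 / 4) ^ (k + 1)) := fun k => by
    rw [ENNReal.ofReal_lt_ofReal_iff (by positivity)]
    have := hεgeom (k + 1) (by omega)
    rw [one_div_pow]
    linarith
  have hsum : ∑' k : ℕ, ENNReal.ofReal ((1 / 4) ^ (k + 1)) = ENNReal.ofReal (1 / 3) := by
    rw [← tsum_one_div_four_pow_succ, ENNReal.ofReal_tsum_of_nonneg (fun _ => by positivity)
      ((summable_nat_add_iff 1).2 (summable_geometric_of_lt_one (by norm_num) (by norm_num)))]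
  have htail : ∑' k : ℕ, ENNReal.ofReal (2 ^ (k + 1) * (2 * ε (k + 2))) <
      ENNReal.ofReal (1 / 3) := by
    have hle := ENNReal.tsum_le_tsum fun k => (hterm k).le
    rw [hsum] at hle
    exact hsum ▸ ENNReal.tsum_lt_tsum (ne_top_of_le_ne_top ENNReal.ofReal_ne_top hle)
      (fun k => (hterm k).le) (hterm 0)
  have hhead : ENNReal.ofReal (2 ^ 0 * (2 * ε (0 + 1))) = ENNReal.ofReal (1 / 3) := by
    rw [hε1]; norm_num
  calc ∑' k : ℕ, ENNReal.ofReal (2 ^ k * (2 * ε (k + 1)))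
      = ENNReal.ofReal (1 / 3) + ∑' k : ℕ, ENNReal.ofReal (2 ^ (k + 1) * (2 * ε (k + 2))) := by
        rw [tsum_eq_zero_add' ENNReal.summable, hhead]
    _ < ENNReal.ofReal (1 / 3) + ENNReal.ofReal (1 / 3) :=
        ENNReal.add_lt_add_left ENNReal.ofReal_ne_top htail
    _ = 2 / 3 := by
        rw [← ENNReal.ofReal_add (by norm_num) (by norm_num)]
        norm_num [ENNReal.ofReal_div_of_pos]

theorem one_third_le_volume_of_volume_Icc_diff_lt {s : Set ℝ}
    (hs : volume (Icc (0 : ℝ) 1 \ s) < 2 / 3) : 1 / 3 ≤ volume s := by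
  by_contra! h
  have := (measure_le_inter_add_sdiff volume (Icc (0 : ℝ) 1) s).trans_lt
    (ENNReal.add_lt_add ((measure_mono inter_subset_right).trans_lt h) hs)
  rw [Real.volume_Icc] at this
  rw [sub_zero, ENNReal.ofReal_one, ENNReal.div_add_div_same,
    show (1 + 2 : ℝ≥0∞) = 3 by norm_num, ENNReal.div_self (by norm_num) (by norm_num)] at this
  exact lt_irrefl _ this

theorem stmt_10_general
    (ε : ℕ → ℝ)
    (hε1 : ε 1 = 1 / 6)
    (hεgeom : ∀ k, 1 ≤ k → 2 ^ k * ε (k + 1) < 1 / 2 * (1 / 4 ^ k))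
    (I : ℕ → Set (ℝ × ℝ))
    (hI1 : I 1 = {((0 : ℝ), (1 : ℝ))})
    (hIrec : ∀ k, 1 ≤ k → I (k + 1) =
      ⋃ p ∈ I k, {(p.1, (p.1 + p.2) / 2 - ε k), ((p.1 + p.2) / 2 + ε k, p.2)})
    (A : ℕ → Set ℝ)
    (hA : ∀ k, A k = ⋃ p ∈ I k, Set.Icc p.1 p.2)
    (Astar : Set ℝ)
    (hAstar : Astar = ⋂ k, A (k + 1))
    :
    volume (Set.Icc (0 : ℝ) 1 \ Astar) < 2 / 3 ∧
    1 / 3 ≤ volume Astar ∧ 0 < volume Astar := by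
  replace hA : ∀ k, A k = intervalUnion (I k) := hA
  replace hIrec : ∀ k, 1 ≤ k → I (k + 1) = splitIntervals (ε k) (I k) := hIrec
  have hcard : ∀ k : ℕ, (I (k + 1)).encard ≤ (2 ^ k : ℕ) := by
    intro k
    induction k with
    | zero => simp [hI1]
    | succ k ih =>
      rw [hIrec (k + 1) (by omega), pow_succ', Nat.cast_mul]
      exact (encard_splitIntervals_le _ _).trans (by gcongr; norm_num)
  have hlayer : ∀ k : ℕ, volume (A (k + 1) \ A (k + 2)) ≤
      ENNReal.ofReal (2 ^ k * (2 * ε (k + 1))) := fun k => by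
    rw [hA, hA, hIrec (k + 1) (by omega)]
    exact_mod_cast volume_intervalUnion_diff_splitIntervals_le (hcard k) (ε (k + 1))
  have hcompl : volume (Icc 0 1 \ Astar) < 2 / 3 := by
    have hA1 : A (0 + 1) = Icc 0 1 := by simp [hA, hI1, intervalUnion]
    rw [hAstar, ← hA1]
    exact (measure_diff_iInter_le_tsum volume fun k => A (k + 1)).trans_lt
      ((ENNReal.tsum_le_tsum hlayer).trans_lt (tsum_ofReal_removed_length_lt ε hε1 hεgeom))
  have hthird := one_third_le_volume_of_volume_Icc_diff_lt hcompl
  exact ⟨hcompl, hthird, lt_of_lt_of_le (by norm_num) hthird⟩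

theorem stmt_10
    (ε w : ℕ → ℝ)
    (hw1 : w 1 = 1) (hε1 : ε 1 = 1 / 6)
    (hwrec : ∀ k, 1 ≤ k → w (k + 1) = w k / 2 - ε k)
    (hεpos : ∀ k, 1 ≤ k → 0 < ε (k + 1))
    (hεgeom : ∀ k, 1 ≤ k → 2 ^ k * ε (k + 1) < 1 / 2 * (1 / 4 ^ k))
    (hεquot : ∀ k, 1 ≤ k → ε (k + 1) / ε k < 1 / 2)
    (hεw : ∀ k, 1 ≤ k → ε (k + 1) < w k / 4 - ε k / 2)
    (I : ℕ → Set (ℝ × ℝ))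
    (hI1 : I 1 = {((0 : ℝ), (1 : ℝ))})
    (hIrec : ∀ k, 1 ≤ k → I (k + 1) =
      ⋃ p ∈ I k, {(p.1, (p.1 + p.2) / 2 - ε k), ((p.1 + p.2) / 2 + ε k, p.2)})
    (A : ℕ → Set ℝ)
    (hA : ∀ k, A k = ⋃ p ∈ I k, Set.Icc p.1 p.2)
    (Astar : Set ℝ)
    (hAstar : Astar = ⋂ k, A (k + 1))
    :
    volume (Set.Icc (0 : ℝ) 1 \ Astar) < 2 / 3 ∧
    1 / 3 ≤ volume Astar ∧ 0 < volume Astar :=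
  stmt_10_general ε hε1 hεgeom I hI1 hIrec A hA Astar hAstar
end

section
/- For every k ∈ ℕ, the function f_k : [0,1] → [0,1] is strictly increasing and is Lipschitz with a Lipschitz constant strictly smaller than 1/2. -/
/-!
By induction on `k`: the intervals of `𝓘_k` are pairwise separated, have length `w_k`, lie in
`[0,1]`, and `f_{k-1}` rises by exactly `w_{k+1}` across each of them; moreover all difference
quotients of `f_{k-1}` on `[0,1]` lie in some `[c, L]` with `0 < c` and `L < 1/2`.
On each interval of `𝓘_k`, `f_k` consists of three affine pieces of slopes
`w_{k+2}/w_{k+1}`, `ε_{k+1}/ε_k`, `w_{k+2}/w_{k+1}`, all in `(0, 1/2)`, and since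
`w_{k+1} = 2 w_{k+2} + 2 ε_{k+1}` it agrees with `f_{k-1}` at both endpoints. As `f_k = f_{k-1}`
off these intervals, the difference quotients of `f_k` stay in a range of the same kind.
-/

open Set

theorem MonotoneOn.patch {α β : Type*} [LinearOrder α] [Preorder β] {g h : α → β} {S : Set α}
    {J : Set (α × α)} (hg : MonotoneOn g S) (hJS : ∀ p ∈ J, p.1 ∈ S ∧ p.2 ∈ S)
    (hJ : J.Pairwise fun p q => p.2 < q.1 ∨ q.2 < p.1)
    (hh : ∀ p ∈ J, MonotoneOn h (Icc p.1 p.2))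
    (hends : ∀ p ∈ J, h p.1 = g p.1 ∧ h p.2 = g p.2)
    (hout : ∀ x ∈ S \ ⋃ p ∈ J, Icc p.1 p.2, h x = g x) :
    MonotoneOn h S := by
  have locate : ∀ z ∈ S, (∃ p ∈ J, z ∈ Icc p.1 p.2) ∨ h z = g z := by
    intro z hz
    by_cases hzJ : ∃ p ∈ J, z ∈ Icc p.1 p.2
    · exact .inl hzJ
    · refine .inr (hout z ⟨hz, ?_⟩)
      simpa only [mem_iUnion, exists_prop] using hzJ
  have via_g : ∀ u ∈ S, ∀ v ∈ S, u ≤ v → h u = g u → h v = g v → h u ≤ h v :=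
    fun u hu v hv huv hgu hgv => hgu ▸ hgv ▸ hg hu hv huv
  intro x hx y hy hxy
  rcases locate x hx with ⟨p, hp, hxp⟩ | hgx
  · rcases le_or_gt y p.2 with hyp | hpy
    · exact hh p hp hxp ⟨hxp.1.trans hxy, hyp⟩ hxy
    refine (hh p hp hxp ⟨hxp.1.trans hxp.2, le_rfl⟩ hxp.2).trans ?_
    rcases locate y hy with ⟨q, hq, hyq⟩ | hgy
    · have hpq : p ≠ q := by rintro rfl; exact hpy.not_ge hyq.2
      have hpq' : p.2 < q.1 := (hJ hp hq hpq).resolve_right fun hqp =>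
        (hyq.2.trans_lt hqp).not_ge (hxp.1.trans hxy)
      exact (via_g _ (hJS p hp).2 _ (hJS q hq).1 hpq'.le (hends p hp).2 (hends q hq).1).trans
        (hh q hq ⟨le_rfl, hyq.1.trans hyq.2⟩ hyq hyq.1)
    · exact via_g _ (hJS p hp).2 _ hy hpy.le (hends p hp).2 hgy
  · rcases locate y hy with ⟨q, hq, hyq⟩ | hgy
    · rcases le_or_gt q.1 x with hqx | hxq
      · exact hh q hq ⟨hqx, hxy.trans hyq.2⟩ hyq hxy
      exact (via_g _ hx _ (hJS q hq).1 hxq.le hgx (hends q hq).1).trans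
        (hh q hq ⟨le_rfl, hyq.1.trans hyq.2⟩ hyq hyq.1)
    · exact via_g _ hx _ hy hxy hgx hgy

/-- `c` and `L` bound the difference quotients of `g` on `s` from below and from above; phrased
through monotonicity so that it glues along adjacent intervals. -/
def SlopesBetween (c L : ℝ) (g : ℝ → ℝ) (s : Set ℝ) : Prop :=
  MonotoneOn (fun x => g x - c * x) s ∧ MonotoneOn (fun x => L * x - g x) s

namespace SlopesBetween

variable {c L : ℝ} {g : ℝ → ℝ} {s : Set ℝ}

theorem sub_bounds (h : SlopesBetween c L g s) {x y : ℝ} (hx : x ∈ s) (hy : y ∈ s)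
    (hxy : x ≤ y) : c * (y - x) ≤ g y - g x ∧ g y - g x ≤ L * (y - x) := by
  have h₁ := h.1 hx hy hxy
  have h₂ := h.2 hx hy hxy
  simp only at h₁ h₂
  constructor <;> linarith

theorem of_sub_eq_mul {m : ℝ} (hc : c ≤ m) (hL : m ≤ L)
    (hg : ∀ x ∈ s, ∀ y ∈ s, g y - g x = m * (y - x)) : SlopesBetween c L g s := by
  refine ⟨fun x hx y hy hxy => ?_, fun x hx y hy hxy => ?_⟩ <;> dsimp only <;>
    linarith [hg x hx y hy, mul_le_mul_of_nonneg_right hc (sub_nonneg.2 hxy),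
      mul_le_mul_of_nonneg_right hL (sub_nonneg.2 hxy)]

theorem mono {c' L' : ℝ} (h : SlopesBetween c L g s) (hc : c' ≤ c) (hL : L ≤ L') :
    SlopesBetween c' L' g s := by
  refine ⟨fun x hx y hy hxy => ?_, fun x hx y hy hxy => ?_⟩ <;> dsimp only <;>
    linarith [h.sub_bounds hx hy hxy, mul_le_mul_of_nonneg_right hc (sub_nonneg.2 hxy),
      mul_le_mul_of_nonneg_right hL (sub_nonneg.2 hxy)]

theorem Icc_union {a b d : ℝ} (hab : a ≤ b) (hbd : b ≤ d) (h₁ : SlopesBetween c L g (Icc a b))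
    (h₂ : SlopesBetween c L g (Icc b d)) : SlopesBetween c L g (Icc a d) := by
  rw [← Icc_union_Icc_eq_Icc hab hbd]
  exact ⟨h₁.1.union_right h₂.1 (isGreatest_Icc hab) (isLeast_Icc hbd),
    h₁.2.union_right h₂.2 (isGreatest_Icc hab) (isLeast_Icc hbd)⟩

theorem patch {h : ℝ → ℝ} {J : Set (ℝ × ℝ)} (hg : SlopesBetween c L g s)
    (hJS : ∀ p ∈ J, p.1 ∈ s ∧ p.2 ∈ s) (hJ : J.Pairwise fun p q => p.2 < q.1 ∨ q.2 < p.1)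
    (hh : ∀ p ∈ J, SlopesBetween c L h (Icc p.1 p.2))
    (hends : ∀ p ∈ J, h p.1 = g p.1 ∧ h p.2 = g p.2)
    (hout : ∀ x ∈ s \ ⋃ p ∈ J, Icc p.1 p.2, h x = g x) : SlopesBetween c L h s :=
  ⟨hg.1.patch hJS hJ (fun p hp => (hh p hp).1)
      (fun p hp => by simp only [(hends p hp).1, (hends p hp).2, and_self])
      (fun x hx => by simp only [hout x hx]),
    hg.2.patch hJS hJ (fun p hp => (hh p hp).2)
      (fun p hp => by simp only [(hends p hp).1, (hends p hp).2, and_self])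
      (fun x hx => by simp only [hout x hx])⟩

theorem strictMonoOn (h : SlopesBetween c L g s) (hc : 0 < c) : StrictMonoOn g s :=
  fun x hx y hy hxy => by
    linarith [(h.sub_bounds hx hy hxy.le).1, mul_pos hc (sub_pos.2 hxy)]

theorem abs_sub_le (h : SlopesBetween c L g s) (hc : 0 ≤ c) {x y : ℝ} (hx : x ∈ s)
    (hy : y ∈ s) : |g x - g y| ≤ L * |x - y| := by
  wlog hxy : y ≤ x generalizing x y
  · rw [abs_sub_comm, abs_sub_comm x]
    exact this hy hx (le_of_not_ge hxy)
  obtain ⟨hlow, hup⟩ := h.sub_bounds hy hx hxy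
  rwa [abs_of_nonneg (sub_nonneg.2 hxy),
    abs_of_nonneg ((mul_nonneg hc (sub_nonneg.2 hxy)).trans hlow)]

end SlopesBetween

def IsIntervalPacking (J : Set (ℝ × ℝ)) (ℓ : ℝ) : Prop :=
  (∀ p ∈ J, 0 ≤ p.1 ∧ p.2 = p.1 + ℓ ∧ p.2 ≤ 1) ∧ J.Pairwise fun p q => p.2 < q.1 ∨ q.2 < p.1

def splitInterval (e : ℝ) (p : ℝ × ℝ) : Set (ℝ × ℝ) :=
  {(p.1, (p.1 + p.2) / 2 - e), ((p.1 + p.2) / 2 + e, p.2)}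

theorem IsIntervalPacking.biUnion_splitInterval {J : Set (ℝ × ℝ)} {ℓ e : ℝ}
    (hJ : IsIntervalPacking J ℓ) (hℓ : 0 ≤ ℓ) (he : 0 < e) :
    IsIntervalPacking (⋃ p ∈ J, splitInterval e p) (ℓ / 2 - e) := by
  have mem : ∀ {r}, r ∈ ⋃ p ∈ J, splitInterval e p ↔
      ∃ p ∈ J, r = (p.1, (p.1 + p.2) / 2 - e) ∨ r = ((p.1 + p.2) / 2 + e, p.2) := by
    simp [splitInterval]
  have child_le : ∀ p ∈ J, ∀ r, r = (p.1, (p.1 + p.2) / 2 - e) ∨ r = ((p.1 + p.2) / 2 + e, p.2) →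
      p.1 ≤ r.1 ∧ r.2 ≤ p.2 := by
    rintro p hp r (rfl | rfl) <;> constructor <;> dsimp only <;> linarith [(hJ.1 p hp).2.1]
  refine ⟨fun r hr => ?_, fun r hr r' hr' hne => ?_⟩
  · obtain ⟨p, hp, hr⟩ := mem.1 hr
    obtain ⟨h0, hlen, h1⟩ := hJ.1 p hp
    rcases hr with rfl | rfl <;> refine ⟨?_, ?_, ?_⟩ <;> dsimp only <;> linarith
  · obtain ⟨p, hp, hr⟩ := mem.1 hr
    obtain ⟨p', hp', hr'⟩ := mem.1 hr'
    obtain ⟨hpr1, hpr2⟩ := child_le p hp r hr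
    obtain ⟨hpr1', hpr2'⟩ := child_le p' hp' r' hr'
    by_cases hpp : p = p'
    · subst hpp
      rcases hr with rfl | rfl <;> rcases hr' with rfl | rfl
      · exact absurd rfl hne
      · exact .inl (by dsimp only; linarith)
      · exact .inr (by dsimp only; linarith)
      · exact absurd rfl hne
    · rcases hJ.2 hp hp' hpp with h | h
      · exact .inl (by linarith)
      · exact .inr (by linarith)

/-- The rule producing `f_k` from `f_{k-1}` on `p ∈ 𝓘_k`, with `e₀ = ε_k`, `e₁ = ε_{k+1}`,
`ℓ₁ = w_{k+1}` and `ℓ₂ = w_{k+2}`. -/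
def IsThreePieceOn (f₀ f₁ : ℝ → ℝ) (e₀ e₁ ℓ₁ ℓ₂ : ℝ) (p : ℝ × ℝ) : Prop :=
  (∀ x : ℝ, p.1 ≤ x → x ≤ (p.1 + p.2) / 2 - e₀ → f₁ x = ℓ₂ / ℓ₁ * (x - p.1) + f₀ p.1) ∧
  (∀ x : ℝ, |x - (p.1 + p.2) / 2| < e₀ →
    f₁ x = e₁ / e₀ * (x - (p.1 + p.2) / 2 + e₀) + f₀ p.1 + ℓ₂) ∧
  (∀ x : ℝ, (p.1 + p.2) / 2 + e₀ ≤ x → x ≤ p.2 →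
    f₁ x = ℓ₂ / ℓ₁ * (x - (p.1 + p.2) / 2 - e₀) + f₀ p.1 + ℓ₂ + 2 * e₁)

namespace IsThreePieceOn

variable {f₀ f₁ : ℝ → ℝ} {e₀ e₁ ℓ₀ ℓ₁ ℓ₂ : ℝ} {p : ℝ × ℝ}

theorem apply_fst (h : IsThreePieceOn f₀ f₁ e₀ e₁ ℓ₁ ℓ₂ p) (hp : p.2 = p.1 + ℓ₀)
    (hℓ₁ : ℓ₁ = ℓ₀ / 2 - e₀) (hℓ₁pos : 0 < ℓ₁) : f₁ p.1 = f₀ p.1 := by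
  rw [h.1 _ le_rfl (by linarith), sub_self, mul_zero, zero_add]

theorem apply_midpoint_sub (h : IsThreePieceOn f₀ f₁ e₀ e₁ ℓ₁ ℓ₂ p) (hp : p.2 = p.1 + ℓ₀)
    (hℓ₁ : ℓ₁ = ℓ₀ / 2 - e₀) (hℓ₁pos : 0 < ℓ₁) :
    f₁ ((p.1 + p.2) / 2 - e₀) = f₀ p.1 + ℓ₂ := by
  rw [h.1 _ (by linarith) le_rfl, show (p.1 + p.2) / 2 - e₀ - p.1 = ℓ₁ by linarith]
  field_simp
  ring

theorem apply_midpoint_add (h : IsThreePieceOn f₀ f₁ e₀ e₁ ℓ₁ ℓ₂ p) (hp : p.2 = p.1 + ℓ₀)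
    (hℓ₁ : ℓ₁ = ℓ₀ / 2 - e₀) (hℓ₁pos : 0 < ℓ₁) :
    f₁ ((p.1 + p.2) / 2 + e₀) = f₀ p.1 + ℓ₂ + 2 * e₁ := by
  rw [h.2.2 _ le_rfl (by linarith)]
  ring

theorem eq_on_middle (h : IsThreePieceOn f₀ f₁ e₀ e₁ ℓ₁ ℓ₂ p) (hp : p.2 = p.1 + ℓ₀)
    (hℓ₁ : ℓ₁ = ℓ₀ / 2 - e₀) (he₀ : 0 < e₀) (hℓ₁pos : 0 < ℓ₁) :
    ∀ x ∈ Icc ((p.1 + p.2) / 2 - e₀) ((p.1 + p.2) / 2 + e₀),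
      f₁ x = e₁ / e₀ * (x - (p.1 + p.2) / 2 + e₀) + f₀ p.1 + ℓ₂ := by
  rintro x ⟨hx₁, hx₂⟩
  rcases hx₁.eq_or_lt with rfl | hx₁
  · rw [h.apply_midpoint_sub hp hℓ₁ hℓ₁pos]
    ring
  rcases hx₂.eq_or_lt with rfl | hx₂
  · rw [h.apply_midpoint_add hp hℓ₁ hℓ₁pos]
    field_simp
    ring
  exact h.2.1 x (abs_sub_lt_iff.2 ⟨by linarith, by linarith⟩)

theorem apply_snd (h : IsThreePieceOn f₀ f₁ e₀ e₁ ℓ₁ ℓ₂ p) (hp : p.2 = p.1 + ℓ₀)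
    (hℓ₁ : ℓ₁ = ℓ₀ / 2 - e₀) (hℓ₁pos : 0 < ℓ₁) :
    f₁ p.2 = f₀ p.1 + 2 * ℓ₂ + 2 * e₁ := by
  rw [h.2.2 _ (by linarith) le_rfl, show p.2 - (p.1 + p.2) / 2 - e₀ = ℓ₁ by linarith]
  field_simp
  ring

theorem slopesBetween (h : IsThreePieceOn f₀ f₁ e₀ e₁ ℓ₁ ℓ₂ p) (hp : p.2 = p.1 + ℓ₀)
    (hℓ₁ : ℓ₁ = ℓ₀ / 2 - e₀) (he₀ : 0 < e₀) (hℓ₁pos : 0 < ℓ₁) :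
    SlopesBetween (min (ℓ₂ / ℓ₁) (e₁ / e₀)) (max (ℓ₂ / ℓ₁) (e₁ / e₀)) f₁ (Icc p.1 p.2) := by
  set m := (p.1 + p.2) / 2 with hm
  have hleft : SlopesBetween (min (ℓ₂ / ℓ₁) (e₁ / e₀)) (max (ℓ₂ / ℓ₁) (e₁ / e₀)) f₁
      (Icc p.1 (m - e₀)) := .of_sub_eq_mul (min_le_left _ _) (le_max_left _ _) fun x hx y hy => by
    rw [h.1 x hx.1 hx.2, h.1 y hy.1 hy.2]; ring
  have hmid : SlopesBetween (min (ℓ₂ / ℓ₁) (e₁ / e₀)) (max (ℓ₂ / ℓ₁) (e₁ / e₀)) f₁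
      (Icc (m - e₀) (m + e₀)) := .of_sub_eq_mul (min_le_right _ _) (le_max_right _ _)
    fun x hx y hy => by
      rw [h.eq_on_middle hp hℓ₁ he₀ hℓ₁pos x hx, h.eq_on_middle hp hℓ₁ he₀ hℓ₁pos y hy]; ring
  have hright : SlopesBetween (min (ℓ₂ / ℓ₁) (e₁ / e₀)) (max (ℓ₂ / ℓ₁) (e₁ / e₀)) f₁
      (Icc (m + e₀) p.2) := .of_sub_eq_mul (min_le_left _ _) (le_max_left _ _) fun x hx y hy => by
    rw [h.2.2 x hx.1 hx.2, h.2.2 y hy.1 hy.2]; ring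
  exact hleft.Icc_union (by linarith) (by linarith)
    (hmid.Icc_union (by linarith) (by linarith) hright)

theorem rise_of_mem_splitInterval (h : IsThreePieceOn f₀ f₁ e₀ e₁ ℓ₁ ℓ₂ p) (hp : p.2 = p.1 + ℓ₀)
    (hℓ₁ : ℓ₁ = ℓ₀ / 2 - e₀) (hℓ₁pos : 0 < ℓ₁) :
    ∀ r ∈ splitInterval e₀ p, f₁ r.2 = f₁ r.1 + ℓ₂ := by
  rintro r (rfl | rfl | _)
  · rw [h.apply_midpoint_sub hp hℓ₁ hℓ₁pos, h.apply_fst hp hℓ₁ hℓ₁pos]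
  · rw [h.apply_snd hp hℓ₁ hℓ₁pos, h.apply_midpoint_add hp hℓ₁ hℓ₁pos]
    ring

end IsThreePieceOn

/-- The invariant of the construction at stage `k`, for `J = 𝓘_k`, `g = f_{k-1}`, `ℓ₀ = w_k`
and `ℓ₁ = w_{k+1}`. -/
def StageInvariant (J : Set (ℝ × ℝ)) (g : ℝ → ℝ) (ℓ₀ ℓ₁ : ℝ) : Prop :=
  IsIntervalPacking J ℓ₀ ∧ (∀ p ∈ J, g p.2 = g p.1 + ℓ₁) ∧
    ∃ c L, 0 < c ∧ L < 1 / 2 ∧ SlopesBetween c L g (Icc 0 1)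

theorem StageInvariant.next {J : Set (ℝ × ℝ)} {f₀ f₁ : ℝ → ℝ} {e₀ e₁ ℓ₀ ℓ₁ ℓ₂ : ℝ}
    (hJ : StageInvariant J f₀ ℓ₀ ℓ₁) (hf₁ : ∀ p ∈ J, IsThreePieceOn f₀ f₁ e₀ e₁ ℓ₁ ℓ₂ p)
    (hout : ∀ x ∈ Icc 0 1 \ ⋃ p ∈ J, Icc p.1 p.2, f₁ x = f₀ x)
    (hℓ₁ : ℓ₁ = ℓ₀ / 2 - e₀) (hℓ₂ : ℓ₂ = ℓ₁ / 2 - e₁) (he₀ : 0 < e₀) (he₁ : 0 < e₁)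
    (hℓ₂pos : 0 < ℓ₂) (hquot : e₁ / e₀ < 1 / 2) :
    StageInvariant (⋃ p ∈ J, splitInterval e₀ p) f₁ ℓ₁ ℓ₂ := by
  obtain ⟨hpack, hrise, c, L, hc, hL, hf₀⟩ := hJ
  have hℓ₁pos : 0 < ℓ₁ := by linarith
  have hlen : ∀ p ∈ J, p.2 = p.1 + ℓ₀ := fun p hp => (hpack.1 p hp).2.1
  have hslope : ℓ₂ / ℓ₁ < 1 / 2 := by rw [div_lt_iff₀ hℓ₁pos]; linarith
  refine ⟨hℓ₁ ▸ hpack.biUnion_splitInterval (by linarith) he₀, ?_, ?_⟩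
  · simp only [mem_iUnion]
    rintro r ⟨p, hp, hr⟩
    exact (hf₁ p hp).rise_of_mem_splitInterval (hlen p hp) hℓ₁ hℓ₁pos r hr
  refine ⟨_, _, lt_min hc (lt_min (div_pos hℓ₂pos hℓ₁pos) (div_pos he₁ he₀)),
    max_lt hL (max_lt hslope hquot), (hf₀.mono (min_le_left _ _) (le_max_left _ _)).patch
      (fun p hp => ?_) hpack.2 (fun p hp => ?_) (fun p hp => ?_) hout⟩
  · obtain ⟨h0, hp2, h1⟩ := hpack.1 p hp
    exact ⟨⟨h0, by linarith⟩, ⟨by linarith, h1⟩⟩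
  · exact ((hf₁ p hp).slopesBetween (hlen p hp) hℓ₁ he₀ hℓ₁pos).mono (min_le_right _ _)
      (le_max_right _ _)
  · refine ⟨(hf₁ p hp).apply_fst (hlen p hp) hℓ₁ hℓ₁pos, ?_⟩
    rw [(hf₁ p hp).apply_snd (hlen p hp) hℓ₁ hℓ₁pos, hrise p hp]
    linarith

theorem pos_and_two_mul_lt_of_rec {ε w : ℕ → ℝ} (hbase : 0 < ε 1 ∧ 2 * ε 1 < w 1)
    (hwrec : ∀ k, 1 ≤ k → w (k + 1) = w k / 2 - ε k) (hεpos : ∀ k, 1 ≤ k → 0 < ε (k + 1))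
    (hεw : ∀ k, 1 ≤ k → ε (k + 1) < w k / 4 - ε k / 2) :
    ∀ k, 1 ≤ k → 0 < ε k ∧ 2 * ε k < w k := by
  intro k hk
  induction k, hk using Nat.le_induction with
  | base => exact hbase
  | succ k hk _ => exact ⟨hεpos k hk, by linarith [hεw k hk, hwrec k hk]⟩

theorem stmt_12_general
    (ε w : ℕ → ℝ)
    (hw1 : w 1 = 1) (hε1 : ε 1 = 1 / 6)
    (hwrec : ∀ k, 1 ≤ k → w (k + 1) = w k / 2 - ε k)
    (hεpos : ∀ k, 1 ≤ k → 0 < ε (k + 1))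
    (hεquot : ∀ k, 1 ≤ k → ε (k + 1) / ε k < 1 / 2)
    (hεw : ∀ k, 1 ≤ k → ε (k + 1) < w k / 4 - ε k / 2)
    (I : ℕ → Set (ℝ × ℝ))
    (hI1 : I 1 = {((0 : ℝ), (1 : ℝ))})
    (hIrec : ∀ k, 1 ≤ k → I (k + 1) =
      ⋃ p ∈ I k, {(p.1, (p.1 + p.2) / 2 - ε k), ((p.1 + p.2) / 2 + ε k, p.2)})
    (f : ℕ → ℝ → ℝ)
    (hf0 : ∀ x, f 0 x = x / 3)
    (hfleft : ∀ k, 1 ≤ k → ∀ p ∈ I k, ∀ x : ℝ, p.1 ≤ x → x ≤ (p.1 + p.2) / 2 - ε k →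
      f k x = w (k + 2) / w (k + 1) * (x - p.1) + f (k - 1) p.1)
    (hfmid : ∀ k, 1 ≤ k → ∀ p ∈ I k, ∀ x : ℝ, |x - (p.1 + p.2) / 2| < ε k →
      f k x = ε (k + 1) / ε k * (x - (p.1 + p.2) / 2 + ε k) + f (k - 1) p.1 + w (k + 2))
    (hfright : ∀ k, 1 ≤ k → ∀ p ∈ I k, ∀ x : ℝ, (p.1 + p.2) / 2 + ε k ≤ x → x ≤ p.2 →
      f k x = w (k + 2) / w (k + 1) * (x - (p.1 + p.2) / 2 - ε k) + f (k - 1) p.1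
        + w (k + 2) + 2 * ε (k + 1))
    (hfout : ∀ k, 1 ≤ k → ∀ x ∈ Set.Icc (0 : ℝ) 1 \ (⋃ p ∈ I k, Set.Icc p.1 p.2),
      f k x = f (k - 1) x)
    :
    ∀ k, 1 ≤ k →
      StrictMonoOn (f k) (Set.Icc (0 : ℝ) 1) ∧
      ∃ L : ℝ, L < 1 / 2 ∧ ∀ x ∈ Set.Icc (0 : ℝ) 1, ∀ y ∈ Set.Icc (0 : ℝ) 1,
        |f k x - f k y| ≤ L * |x - y| := by
  have hεk := pos_and_two_mul_lt_of_rec (by rw [hw1, hε1]; norm_num) hwrec hεpos hεw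
  have hw2 : w 2 = 1 / 3 := by rw [hwrec 1 le_rfl, hw1, hε1]; norm_num
  have hstage : ∀ n, StageInvariant (I (n + 1)) (f n) (w (n + 1)) (w (n + 2)) := by
    intro n
    induction n with
    | zero =>
      refine ⟨?_, ?_, 1 / 3, 1 / 3, by norm_num, by norm_num, .of_sub_eq_mul le_rfl le_rfl ?_⟩
      · rw [hI1]
        exact ⟨by simp [hw1], pairwise_singleton _ _⟩
      · simp [hI1, hf0, hw2]
      · intro x _ y _
        rw [hf0, hf0]
        ring
    | succ n ih =>
      obtain ⟨he₀, -⟩ := hεk (n + 1) (by omega)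
      obtain ⟨he₁, hlt⟩ := hεk (n + 2) (by omega)
      rw [hIrec (n + 1) (by omega)]
      exact ih.next (fun p hp => ⟨hfleft _ (by omega) p hp, hfmid _ (by omega) p hp,
          hfright _ (by omega) p hp⟩) (hfout _ (by omega)) (hwrec _ (by omega))
        (hwrec _ (by omega)) he₀ he₁ (by linarith [hwrec (n + 2) (by omega)])
        (hεquot _ (by omega))
  intro k _
  obtain ⟨-, -, c, L, hc, hL, hslopes⟩ := hstage k
  exact ⟨hslopes.strictMonoOn hc, L, hL, fun x hx y hy => hslopes.abs_sub_le hc.le hx hy⟩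

theorem stmt_12
    (ε w : ℕ → ℝ)
    (hw1 : w 1 = 1) (hε1 : ε 1 = 1 / 6)
    (hwrec : ∀ k, 1 ≤ k → w (k + 1) = w k / 2 - ε k)
    (hεpos : ∀ k, 1 ≤ k → 0 < ε (k + 1))
    (hεgeom : ∀ k, 1 ≤ k → 2 ^ k * ε (k + 1) < 1 / 2 * (1 / 4 ^ k))
    (hεquot : ∀ k, 1 ≤ k → ε (k + 1) / ε k < 1 / 2)
    (hεw : ∀ k, 1 ≤ k → ε (k + 1) < w k / 4 - ε k / 2)
    (I : ℕ → Set (ℝ × ℝ))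
    (hI1 : I 1 = {((0 : ℝ), (1 : ℝ))})
    (hIrec : ∀ k, 1 ≤ k → I (k + 1) =
      ⋃ p ∈ I k, {(p.1, (p.1 + p.2) / 2 - ε k), ((p.1 + p.2) / 2 + ε k, p.2)})
    (f : ℕ → ℝ → ℝ)
    (hf0 : ∀ x, f 0 x = x / 3)
    (hfmaps : ∀ k, Set.MapsTo (f k) (Set.Icc (0 : ℝ) 1) (Set.Icc (0 : ℝ) 1))
    (hfleft : ∀ k, 1 ≤ k → ∀ p ∈ I k, ∀ x : ℝ, p.1 ≤ x → x ≤ (p.1 + p.2) / 2 - ε k →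
      f k x = w (k + 2) / w (k + 1) * (x - p.1) + f (k - 1) p.1)
    (hfmid : ∀ k, 1 ≤ k → ∀ p ∈ I k, ∀ x : ℝ, |x - (p.1 + p.2) / 2| < ε k →
      f k x = ε (k + 1) / ε k * (x - (p.1 + p.2) / 2 + ε k) + f (k - 1) p.1 + w (k + 2))
    (hfright : ∀ k, 1 ≤ k → ∀ p ∈ I k, ∀ x : ℝ, (p.1 + p.2) / 2 + ε k ≤ x → x ≤ p.2 →
      f k x = w (k + 2) / w (k + 1) * (x - (p.1 + p.2) / 2 - ε k) + f (k - 1) p.1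
        + w (k + 2) + 2 * ε (k + 1))
    (hfout : ∀ k, 1 ≤ k → ∀ x ∈ Set.Icc (0 : ℝ) 1 \ (⋃ p ∈ I k, Set.Icc p.1 p.2),
      f k x = f (k - 1) x)
    :
    ∀ k, 1 ≤ k →
      StrictMonoOn (f k) (Set.Icc (0 : ℝ) 1) ∧
      ∃ L : ℝ, L < 1 / 2 ∧ ∀ x ∈ Set.Icc (0 : ℝ) 1, ∀ y ∈ Set.Icc (0 : ℝ) 1,
        |f k x - f k y| ≤ L * |x - y| :=
  stmt_12_general ε w hw1 hε1 hwrec hεpos hεquot hεw I hI1 hIrec f hf0 hfleft hfmid hfright hfout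
end

section
/- For every k ∈ ℕ, f_k([0,1]) = [0, 1/3]; in particular f_k(0) = 0 and f_k(1) = 1/3. -/
/-!
On every interval `[a, b]` of `𝓘_k` the map `f_{k-1}` is affine of slope `w_{k+1}/w_k` (read off
from the formulas defining `f_{k-1}` on the parent interval), and `f_k` replaces it by a continuous
increasing three-piece affine map with the same values at `a` and `b`. Hence `f_k` and `f_{k-1}`
have the same image on each interval of `𝓘_k`, agree off `⋃ 𝓘_k`, and agree at `0` and `1`,
which are endpoints of intervals of `𝓘_k`. Image and endpoint values are therefore those of
`f_0 x = x / 3`.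
-/

open Set

lemma image_Icc_of_eqOn_affine {g : ℝ → ℝ} {a b c d : ℝ} (hc : 0 < c)
    (hg : EqOn g (fun x => c * (x - a) + d) (Icc a b)) :
    g '' Icc a b = Icc d (c * (b - a) + d) := by
  rw [hg.image_eq, show (fun x => c * (x - a) + d) = (c * · + (d - c * a)) by ext; ring,
    image_affine_Icc' hc]
  congr 1 <;> ring

lemma image_eq_image_of_eqOn_diff_biUnion {α β ι : Type*} {g h : α → β} {A : Set α}
    {S : Set ι} {J : ι → Set α} (hJ : ∀ i ∈ S, J i ⊆ A)
    (hout : EqOn g h (A \ ⋃ i ∈ S, J i)) (hin : ∀ i ∈ S, g '' J i = h '' J i) :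
    g '' A = h '' A := by
  rw [← sdiff_union_of_subset (iUnion₂_subset hJ), image_union, image_union, hout.image_eq,
    image_iUnion₂, image_iUnion₂, iUnion₂_congr hin]

lemma image_Icc_of_piecewise_affine {g : ℝ → ℝ} {a b δ e v v' y : ℝ} (hδ : 0 < δ) (he : 0 < e)
    (hv' : 0 < v') (hv : v = (b - a) / 2 - δ) (hv'v : v' = v / 2 - e)
    (hleft : ∀ x, a ≤ x → x ≤ (a + b) / 2 - δ → g x = v' / v * (x - a) + y)
    (hmid : ∀ x, |x - (a + b) / 2| < δ → g x = e / δ * (x - (a + b) / 2 + δ) + y + v')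
    (hright : ∀ x, (a + b) / 2 + δ ≤ x → x ≤ b →
      g x = v' / v * (x - (a + b) / 2 - δ) + y + v' + 2 * e) :
    g '' Icc a b = Icc y (y + v) := by
  obtain ⟨m, hm⟩ : ∃ m, (a + b) / 2 = m := ⟨_, rfl⟩
  rw [hm] at hleft hmid hright
  have hvm : v = m - δ - a := by rw [hv, ← hm]; ring
  have hvm' : v = b - (m + δ) := by rw [hv, ← hm]; ring
  have hvpos : 0 < v := by linarith
  have h₁ : a ≤ m - δ := by linarith
  have h₂ : m - δ ≤ m + δ := by linarith
  have h₃ : m + δ ≤ b := by linarith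
  have hslope : v' / v * v = v' := div_mul_cancel₀ _ hvpos.ne'
  have hgap : e / δ * (m + δ - (m - δ)) = 2 * e := by field_simp; ring
  have hleft' : g '' Icc a (m - δ) = Icc y (y + v') := by
    rw [image_Icc_of_eqOn_affine (div_pos hv' hvpos) (fun x hx => hleft x hx.1 hx.2), ← hvm,
      hslope, add_comm]
  have hmid' : g '' Icc (m - δ) (m + δ) = Icc (y + v') (y + v' + 2 * e) := by
    rw [image_Icc_of_eqOn_affine (div_pos he hδ), hgap, add_comm]
    rintro x ⟨hx₁, hx₂⟩
    rcases hx₁.eq_or_lt with rfl | hx₁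
    · rw [hleft _ h₁ le_rfl, ← hvm, hslope]
      ring
    rcases hx₂.eq_or_lt with rfl | hx₂
    · rw [hright _ le_rfl h₃, ← hgap]
      ring
    · rw [hmid x (abs_sub_lt_iff.2 ⟨by linarith, by linarith⟩)]
      ring
  have hright' : g '' Icc (m + δ) b = Icc (y + v' + 2 * e) (y + v) := by
    rw [image_Icc_of_eqOn_affine (c := v' / v) (d := y + v' + 2 * e) (div_pos hv' hvpos)
      (fun x hx => (hright x hx.1 hx.2).trans (by ring)), ← hvm', hslope]
    congr 1
    linarith
  rw [← Icc_union_Icc_eq_Icc h₁ (h₂.trans h₃), ← Icc_union_Icc_eq_Icc h₂ h₃, image_union,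
    image_union, hleft', hmid', hright', Icc_union_Icc_eq_Icc, Icc_union_Icc_eq_Icc] <;> linarith

section Construction

variable {ε w : ℕ → ℝ} {I : ℕ → Set (ℝ × ℝ)} {f : ℕ → ℝ → ℝ}

lemma eps_pos (hε1 : ε 1 = 1 / 6) (hεpos : ∀ k, 1 ≤ k → 0 < ε (k + 1)) {k : ℕ} (hk : 1 ≤ k) :
    0 < ε k := by
  obtain _ | _ | j := k
  · omega
  · rw [hε1]; norm_num
  · exact hεpos (j + 1) (by omega)

lemma w_pos (hε1 : ε 1 = 1 / 6) (hεpos : ∀ k, 1 ≤ k → 0 < ε (k + 1))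
    (hεw : ∀ k, 1 ≤ k → ε (k + 1) < w k / 4 - ε k / 2) {k : ℕ} (hk : 1 ≤ k) : 0 < w k := by
  linarith [hεpos k hk, hεw k hk, eps_pos hε1 hεpos hk]

lemma mem_I_bounds (hw1 : w 1 = 1) (hwrec : ∀ k, 1 ≤ k → w (k + 1) = w k / 2 - ε k)
    (hε : ∀ k, 1 ≤ k → 0 < ε k) (hw : ∀ k, 1 ≤ k → 0 < w k)
    (hI1 : I 1 = {((0 : ℝ), (1 : ℝ))})
    (hIrec : ∀ k, 1 ≤ k → I (k + 1) =
      ⋃ p ∈ I k, {(p.1, (p.1 + p.2) / 2 - ε k), ((p.1 + p.2) / 2 + ε k, p.2)})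
    {k : ℕ} (hk : 1 ≤ k) {p : ℝ × ℝ} (hp : p ∈ I k) :
    0 ≤ p.1 ∧ p.2 ≤ 1 ∧ p.2 - p.1 = w k := by
  induction k, hk using Nat.le_induction generalizing p with
  | base =>
    rw [hI1, mem_singleton_iff] at hp
    subst hp
    simp [hw1]
  | succ k hk ih =>
    rw [hIrec k hk] at hp
    simp only [mem_iUnion, mem_insert_iff, mem_singleton_iff, exists_prop] at hp
    obtain ⟨q, hq, rfl | rfl⟩ := hp <;> obtain ⟨hq₀, hq₁, hlen⟩ := ih hq <;>
      refine ⟨?_, ?_, ?_⟩ <;> linarith [hε k hk, hw k hk, hwrec k hk]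

lemma exists_mem_I_fst_eq_zero_and_snd_eq_one (hI1 : I 1 = {((0 : ℝ), (1 : ℝ))})
    (hIrec : ∀ k, 1 ≤ k → I (k + 1) =
      ⋃ p ∈ I k, {(p.1, (p.1 + p.2) / 2 - ε k), ((p.1 + p.2) / 2 + ε k, p.2)})
    {k : ℕ} (hk : 1 ≤ k) :
    (∃ p ∈ I k, p.1 = 0) ∧ ∃ p ∈ I k, p.2 = 1 := by
  induction k, hk using Nat.le_induction with
  | base => exact ⟨⟨(0, 1), by simp [hI1]⟩, ⟨(0, 1), by simp [hI1]⟩⟩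
  | succ k hk ih =>
    obtain ⟨⟨p, hp, hp₀⟩, ⟨q, hq, hq₁⟩⟩ := ih
    rw [hIrec k hk]
    exact ⟨⟨_, mem_biUnion hp (mem_insert _ _), hp₀⟩,
      ⟨_, mem_biUnion hq (mem_insert_of_mem _ rfl), hq₁⟩⟩

lemma eqOn_Icc_pred_affine (hw1 : w 1 = 1) (hε1 : ε 1 = 1 / 6)
    (hwrec : ∀ k, 1 ≤ k → w (k + 1) = w k / 2 - ε k)
    (hI1 : I 1 = {((0 : ℝ), (1 : ℝ))})
    (hIrec : ∀ k, 1 ≤ k → I (k + 1) =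
      ⋃ p ∈ I k, {(p.1, (p.1 + p.2) / 2 - ε k), ((p.1 + p.2) / 2 + ε k, p.2)})
    (hf0 : ∀ x, f 0 x = x / 3)
    (hfleft : ∀ k, 1 ≤ k → ∀ p ∈ I k, ∀ x : ℝ, p.1 ≤ x → x ≤ (p.1 + p.2) / 2 - ε k →
      f k x = w (k + 2) / w (k + 1) * (x - p.1) + f (k - 1) p.1)
    (hfright : ∀ k, 1 ≤ k → ∀ p ∈ I k, ∀ x : ℝ, (p.1 + p.2) / 2 + ε k ≤ x → x ≤ p.2 →
      f k x = w (k + 2) / w (k + 1) * (x - (p.1 + p.2) / 2 - ε k) + f (k - 1) p.1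
        + w (k + 2) + 2 * ε (k + 1))
    {k : ℕ} (hk : 1 ≤ k) {p : ℝ × ℝ} (hp : p ∈ I k) :
    EqOn (f (k - 1)) (fun x => w (k + 1) / w k * (x - p.1) + f (k - 1) p.1) (Icc p.1 p.2) := by
  obtain ⟨j, rfl⟩ : ∃ j, k = j + 1 := ⟨k - 1, by omega⟩
  rcases j.eq_zero_or_pos with rfl | hj
  · have hw2 : w 2 = 1 / 3 := by rw [hwrec 1 le_rfl, hw1, hε1]; norm_num
    rw [zero_add, hI1, mem_singleton_iff] at hp
    subst hp
    intro x _
    simp only [hf0, zero_add, hw2, hw1]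
    ring
  rw [hIrec j hj] at hp
  simp only [mem_iUnion, mem_insert_iff, mem_singleton_iff, exists_prop] at hp
  obtain ⟨q, hq, rfl | rfl⟩ := hp <;> rintro x ⟨hx₁, hx₂⟩ <;> simp only [Nat.add_sub_cancel]
  · rw [hfleft j hj q hq x hx₁ hx₂, hfleft j hj q hq q.1 le_rfl (hx₁.trans hx₂)]
    ring
  · rw [hfright j hj q hq x hx₁ hx₂, hfright j hj q hq _ le_rfl (hx₁.trans hx₂)]
    ring

lemma image_Icc_eq_image_pred (hwrec : ∀ k, 1 ≤ k → w (k + 1) = w k / 2 - ε k)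
    (hε : ∀ k, 1 ≤ k → 0 < ε k) (hw : ∀ k, 1 ≤ k → 0 < w k)
    (hfleft : ∀ k, 1 ≤ k → ∀ p ∈ I k, ∀ x : ℝ, p.1 ≤ x → x ≤ (p.1 + p.2) / 2 - ε k →
      f k x = w (k + 2) / w (k + 1) * (x - p.1) + f (k - 1) p.1)
    (hfmid : ∀ k, 1 ≤ k → ∀ p ∈ I k, ∀ x : ℝ, |x - (p.1 + p.2) / 2| < ε k →
      f k x = ε (k + 1) / ε k * (x - (p.1 + p.2) / 2 + ε k) + f (k - 1) p.1 + w (k + 2))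
    (hfright : ∀ k, 1 ≤ k → ∀ p ∈ I k, ∀ x : ℝ, (p.1 + p.2) / 2 + ε k ≤ x → x ≤ p.2 →
      f k x = w (k + 2) / w (k + 1) * (x - (p.1 + p.2) / 2 - ε k) + f (k - 1) p.1
        + w (k + 2) + 2 * ε (k + 1))
    {k : ℕ} (hk : 1 ≤ k) {p : ℝ × ℝ} (hp : p ∈ I k) (hlen : p.2 - p.1 = w k)
    (haff : EqOn (f (k - 1)) (fun x => w (k + 1) / w k * (x - p.1) + f (k - 1) p.1)
      (Icc p.1 p.2)) :
    f k '' Icc p.1 p.2 = f (k - 1) '' Icc p.1 p.2 := by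
  have hv : w (k + 1) = (p.2 - p.1) / 2 - ε k := by rw [hlen, hwrec k hk]
  rw [image_Icc_of_piecewise_affine (hε k hk) (hε (k + 1) (by omega)) (hw (k + 2) (by omega)) hv
      (hwrec (k + 1) (by omega)) (hfleft k hk p hp) (hfmid k hk p hp) (hfright k hk p hp),
    image_Icc_of_eqOn_affine (div_pos (hw _ (by omega)) (hw k hk)) haff, hlen,
    div_mul_cancel₀ _ (hw k hk).ne', add_comm]

lemma apply_endpoints_eq_pred (hwrec : ∀ k, 1 ≤ k → w (k + 1) = w k / 2 - ε k)
    (hw : ∀ k, 1 ≤ k → 0 < w k)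
    (hfleft : ∀ k, 1 ≤ k → ∀ p ∈ I k, ∀ x : ℝ, p.1 ≤ x → x ≤ (p.1 + p.2) / 2 - ε k →
      f k x = w (k + 2) / w (k + 1) * (x - p.1) + f (k - 1) p.1)
    (hfright : ∀ k, 1 ≤ k → ∀ p ∈ I k, ∀ x : ℝ, (p.1 + p.2) / 2 + ε k ≤ x → x ≤ p.2 →
      f k x = w (k + 2) / w (k + 1) * (x - (p.1 + p.2) / 2 - ε k) + f (k - 1) p.1
        + w (k + 2) + 2 * ε (k + 1))
    {k : ℕ} (hk : 1 ≤ k) {p : ℝ × ℝ} (hp : p ∈ I k) (hlen : p.2 - p.1 = w k)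
    (haff : EqOn (f (k - 1)) (fun x => w (k + 1) / w k * (x - p.1) + f (k - 1) p.1)
      (Icc p.1 p.2)) :
    f k p.1 = f (k - 1) p.1 ∧ f k p.2 = f (k - 1) p.2 := by
  have hgap : (p.1 + p.2) / 2 - ε k - p.1 = w (k + 1) := by rw [hwrec k hk]; linarith
  have hgap' : p.2 - ((p.1 + p.2) / 2 + ε k) = w (k + 1) := by rw [hwrec k hk]; linarith
  have hwk := hw k hk
  have hwk₁ := hw (k + 1) (by omega)
  refine ⟨by simpa using hfleft k hk p hp p.1 le_rfl (by linarith), ?_⟩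
  rw [hfright k hk p hp p.2 (by linarith) le_rfl, haff ⟨by linarith, le_rfl⟩]
  dsimp only
  rw [hlen, div_mul_cancel₀ _ hwk.ne', sub_sub, hgap', div_mul_cancel₀ _ hwk₁.ne',
    hwrec (k + 1) (by omega)]
  ring

end Construction

theorem stmt_13_general
    (ε w : ℕ → ℝ)
    (hw1 : w 1 = 1) (hε1 : ε 1 = 1 / 6)
    (hwrec : ∀ k, 1 ≤ k → w (k + 1) = w k / 2 - ε k)
    (hεpos : ∀ k, 1 ≤ k → 0 < ε (k + 1))
    (hεw : ∀ k, 1 ≤ k → ε (k + 1) < w k / 4 - ε k / 2)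
    (I : ℕ → Set (ℝ × ℝ))
    (hI1 : I 1 = {((0 : ℝ), (1 : ℝ))})
    (hIrec : ∀ k, 1 ≤ k → I (k + 1) =
      ⋃ p ∈ I k, {(p.1, (p.1 + p.2) / 2 - ε k), ((p.1 + p.2) / 2 + ε k, p.2)})
    (f : ℕ → ℝ → ℝ)
    (hf0 : ∀ x, f 0 x = x / 3)
    (hfleft : ∀ k, 1 ≤ k → ∀ p ∈ I k, ∀ x : ℝ, p.1 ≤ x → x ≤ (p.1 + p.2) / 2 - ε k →
      f k x = w (k + 2) / w (k + 1) * (x - p.1) + f (k - 1) p.1)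
    (hfmid : ∀ k, 1 ≤ k → ∀ p ∈ I k, ∀ x : ℝ, |x - (p.1 + p.2) / 2| < ε k →
      f k x = ε (k + 1) / ε k * (x - (p.1 + p.2) / 2 + ε k) + f (k - 1) p.1 + w (k + 2))
    (hfright : ∀ k, 1 ≤ k → ∀ p ∈ I k, ∀ x : ℝ, (p.1 + p.2) / 2 + ε k ≤ x → x ≤ p.2 →
      f k x = w (k + 2) / w (k + 1) * (x - (p.1 + p.2) / 2 - ε k) + f (k - 1) p.1
        + w (k + 2) + 2 * ε (k + 1))
    (hfout : ∀ k, 1 ≤ k → ∀ x ∈ Set.Icc (0 : ℝ) 1 \ (⋃ p ∈ I k, Set.Icc p.1 p.2),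
      f k x = f (k - 1) x)
    :
    ∀ k, 1 ≤ k →
      f k '' Set.Icc (0 : ℝ) 1 = Set.Icc (0 : ℝ) (1 / 3) ∧ f k 0 = 0 ∧ f k 1 = 1 / 3 := by
  have hε k (hk : 1 ≤ k) := eps_pos hε1 hεpos hk
  have hw k (hk : 1 ≤ k) := w_pos hε1 hεpos hεw hk
  have hstep : ∀ k, 1 ≤ k → (f k '' Icc 0 1, f k 0, f k 1) =
      (f (k - 1) '' Icc 0 1, f (k - 1) 0, f (k - 1) 1) := by
    intro k hk
    have hlen p (hp : p ∈ I k) := (mem_I_bounds hw1 hwrec hε hw hI1 hIrec hk hp).2.2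
    have haff p (hp : p ∈ I k) :=
      eqOn_Icc_pred_affine hw1 hε1 hwrec hI1 hIrec hf0 hfleft hfright hk hp
    have hends p (hp : p ∈ I k) :=
      apply_endpoints_eq_pred hwrec hw hfleft hfright hk hp (hlen p hp) (haff p hp)
    obtain ⟨⟨p, hp, hp₀⟩, ⟨q, hq, hq₁⟩⟩ := exists_mem_I_fst_eq_zero_and_snd_eq_one hI1 hIrec hk
    refine Prod.ext ?_ (Prod.ext (hp₀ ▸ (hends p hp).1) (hq₁ ▸ (hends q hq).2))
    refine image_eq_image_of_eqOn_diff_biUnion (fun p hp => ?_) (hfout k hk) fun p hp =>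
      image_Icc_eq_image_pred hwrec hε hw hfleft hfmid hfright hk hp (hlen p hp) (haff p hp)
    obtain ⟨hp₀, hp₁, -⟩ := mem_I_bounds hw1 hwrec hε hw hI1 hIrec hk hp
    exact Icc_subset_Icc hp₀ hp₁
  have hconst k : (f k '' Icc 0 1, f k 0, f k 1) = (f 0 '' Icc 0 1, f 0 0, f 0 1) :=
    Nat.rec rfl (fun k ih => (hstep (k + 1) k.succ_pos).trans ih) k
  have himage₀ : f 0 '' Icc 0 1 = Icc 0 (1 / 3) := by
    rw [image_Icc_of_eqOn_affine (c := 1 / 3) (d := 0) (by norm_num) fun x _ => by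
      rw [hf0]; ring]
    norm_num
  intro k _
  have h := hconst k
  rw [himage₀] at h
  simpa [hf0] using h

theorem stmt_13
    (ε w : ℕ → ℝ)
    (hw1 : w 1 = 1) (hε1 : ε 1 = 1 / 6)
    (hwrec : ∀ k, 1 ≤ k → w (k + 1) = w k / 2 - ε k)
    (hεpos : ∀ k, 1 ≤ k → 0 < ε (k + 1))
    (hεgeom : ∀ k, 1 ≤ k → 2 ^ k * ε (k + 1) < 1 / 2 * (1 / 4 ^ k))
    (hεquot : ∀ k, 1 ≤ k → ε (k + 1) / ε k < 1 / 2)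
    (hεw : ∀ k, 1 ≤ k → ε (k + 1) < w k / 4 - ε k / 2)
    (I : ℕ → Set (ℝ × ℝ))
    (hI1 : I 1 = {((0 : ℝ), (1 : ℝ))})
    (hIrec : ∀ k, 1 ≤ k → I (k + 1) =
      ⋃ p ∈ I k, {(p.1, (p.1 + p.2) / 2 - ε k), ((p.1 + p.2) / 2 + ε k, p.2)})
    (f : ℕ → ℝ → ℝ)
    (hf0 : ∀ x, f 0 x = x / 3)
    (hfmaps : ∀ k, Set.MapsTo (f k) (Set.Icc (0 : ℝ) 1) (Set.Icc (0 : ℝ) 1))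
    (hfleft : ∀ k, 1 ≤ k → ∀ p ∈ I k, ∀ x : ℝ, p.1 ≤ x → x ≤ (p.1 + p.2) / 2 - ε k →
      f k x = w (k + 2) / w (k + 1) * (x - p.1) + f (k - 1) p.1)
    (hfmid : ∀ k, 1 ≤ k → ∀ p ∈ I k, ∀ x : ℝ, |x - (p.1 + p.2) / 2| < ε k →
      f k x = ε (k + 1) / ε k * (x - (p.1 + p.2) / 2 + ε k) + f (k - 1) p.1 + w (k + 2))
    (hfright : ∀ k, 1 ≤ k → ∀ p ∈ I k, ∀ x : ℝ, (p.1 + p.2) / 2 + ε k ≤ x → x ≤ p.2 →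
      f k x = w (k + 2) / w (k + 1) * (x - (p.1 + p.2) / 2 - ε k) + f (k - 1) p.1
        + w (k + 2) + 2 * ε (k + 1))
    (hfout : ∀ k, 1 ≤ k → ∀ x ∈ Set.Icc (0 : ℝ) 1 \ (⋃ p ∈ I k, Set.Icc p.1 p.2),
      f k x = f (k - 1) x)
    :
    ∀ k, 1 ≤ k →
      f k '' Set.Icc (0 : ℝ) 1 = Set.Icc (0 : ℝ) (1 / 3) ∧ f k 0 = 0 ∧ f k 1 = 1 / 3 :=
  stmt_13_general ε w hw1 hε1 hwrec hεpos hεw I hI1 hIrec f hf0 hfleft hfmid hfright hfout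
end

section
/- For every k ∈ ℕ: (a) if [a,b] ∈ 𝓘_k then [f_{k−1}(a), f_{k−1}(b)] ∈ 𝓘_{k+1}; and (b) if [a,b] ∈ 𝓘_{k+1} then there exists an interval [c,d] ∈ 𝓘_k such that either [a,b] = [f_{k−1}(c), f_{k−1}(d)] or [a,b] = [f_{k−1}(c) + 2/3, f_{k−1}(d) + 2/3]. -/
/-!
Every interval of `𝓘_k` has length `w_k`. Induct on `k`: if `f_{k-1}` sends the endpoints of
`q ∈ 𝓘_k` to those of `r ∈ 𝓘_{k+1}`, then `f_k`, affine with slope `w_{k+2} / w_{k+1}` on both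
halves of `q` and jumping by `2 ε_{k+1}` across the gap, sends the two halves of `q` exactly to the
two halves of `r`. Splitting commutes with translation, which carries the `+ 2/3` copies along.
-/

open Set

def gapHalves (e : ℝ) (p : ℝ × ℝ) : Set (ℝ × ℝ) :=
  {(p.1, (p.1 + p.2) / 2 - e), ((p.1 + p.2) / 2 + e, p.2)}

theorem sub_eq_of_mem_gapHalves {e : ℝ} {p c : ℝ × ℝ} (hc : c ∈ gapHalves e p) :
    c.2 - c.1 = (p.2 - p.1) / 2 - e := by
  rcases hc with rfl | rfl <;> ring

theorem image_add_gapHalves (e t a b : ℝ) :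
    Prod.map (· + t) (· + t) '' gapHalves e (a, b) = gapHalves e (a + t, b + t) := by
  simp only [gapHalves, image_pair, Prod.map_apply]
  exact congr_arg₂ _ (Prod.ext (by ring) (by ring)) (congr_arg _ (Prod.ext (by ring) (by ring)))

theorem image_gapHalves_of_affine {g : ℝ → ℝ} {p : ℝ × ℝ} {e e' u v A : ℝ} (hu : 0 < u)
    (hp : p.2 - p.1 = 2 * u + 2 * e)
    (hleft : ∀ x, p.1 ≤ x → x ≤ (p.1 + p.2) / 2 - e → g x = v / u * (x - p.1) + A)
    (hright : ∀ x, (p.1 + p.2) / 2 + e ≤ x → x ≤ p.2 →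
      g x = v / u * (x - (p.1 + p.2) / 2 - e) + A + v + 2 * e') :
    Prod.map g g '' gapHalves e p = gapHalves e' (A, A + 2 * v + 2 * e') := by
  have hmid : (p.1 + p.2) / 2 - e - p.1 = u := by linarith
  have hend : p.2 - (p.1 + p.2) / 2 - e = u := by linarith
  have h1 : g p.1 = A := by rw [hleft _ le_rfl (by linarith)]; ring
  have h2 : g ((p.1 + p.2) / 2 - e) = A + v := by
    rw [hleft _ (by linarith) le_rfl, hmid, div_mul_cancel₀ _ hu.ne']; ring
  have h3 : g ((p.1 + p.2) / 2 + e) = A + v + 2 * e' := by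
    rw [hright _ le_rfl (by linarith)]; ring
  have h4 : g p.2 = A + 2 * v + 2 * e' := by
    rw [hright _ (by linarith) le_rfl, hend, div_mul_cancel₀ _ hu.ne']; ring
  simp only [gapHalves, image_pair, Prod.map_apply, h1, h2, h3, h4]
  exact congr_arg₂ _ (Prod.ext (by ring) (by ring)) (congr_arg _ (Prod.ext (by ring) (by ring)))

theorem sub_eq_of_mem_of_splitting {w ε : ℕ → ℝ} {I : ℕ → Set (ℝ × ℝ)} (hw1 : w 1 = 1)
    (hwrec : ∀ k, 1 ≤ k → w (k + 1) = w k / 2 - ε k)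
    (hI1 : I 1 = {((0 : ℝ), (1 : ℝ))})
    (hIrec : ∀ k, 1 ≤ k → I (k + 1) = ⋃ p ∈ I k, gapHalves (ε k) p) :
    ∀ k, 1 ≤ k → ∀ p ∈ I k, p.2 - p.1 = w k := by
  intro k hk
  induction k, hk using Nat.le_induction with
  | base => simp [hI1, hw1]
  | succ k hk ih =>
    intro c hc
    rw [hIrec k hk] at hc
    obtain ⟨p, hp, hc⟩ := mem_iUnion₂.1 hc
    rw [sub_eq_of_mem_gapHalves hc, ih p hp, hwrec k hk]

theorem splitting_step {I J K : Set (ℝ × ℝ)} {e e' t : ℝ} {F G : ℝ → ℝ}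
    (hJ : J = ⋃ q ∈ I, gapHalves e q) (hK : K = ⋃ r ∈ J, gapHalves e' r)
    (himage : ∀ q ∈ I, Prod.map G G '' gapHalves e q = gapHalves e' (F q.1, F q.2))
    (hmaps : ∀ q ∈ I, (F q.1, F q.2) ∈ J)
    (hcover : ∀ r ∈ J, ∃ q ∈ I, r = (F q.1, F q.2) ∨ r = (F q.1 + t, F q.2 + t)) :
    (∀ p ∈ J, (G p.1, G p.2) ∈ K) ∧
      ∀ p ∈ K, ∃ c ∈ J, p = (G c.1, G c.2) ∨ p = (G c.1 + t, G c.2 + t) := by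
  have hsub : ∀ q ∈ I, gapHalves e q ⊆ J := fun q hq c hc => hJ ▸ mem_iUnion₂.2 ⟨q, hq, hc⟩
  refine ⟨fun p hp => ?_, fun p hp => ?_⟩
  · obtain ⟨q, hq, hpq⟩ := mem_iUnion₂.1 (hJ ▸ hp)
    exact hK ▸ mem_iUnion₂.2 ⟨_, hmaps q hq, himage q hq ▸ mem_image_of_mem _ hpq⟩
  · obtain ⟨r, hr, hpr⟩ := mem_iUnion₂.1 (hK ▸ hp)
    obtain ⟨q, hq, rfl | rfl⟩ := hcover r hr
    · rw [← himage q hq] at hpr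
      obtain ⟨c, hc, rfl⟩ := hpr
      exact ⟨c, hsub q hq hc, Or.inl rfl⟩
    · rw [← image_add_gapHalves, ← himage q hq] at hpr
      obtain ⟨_, ⟨c, hc, rfl⟩, rfl⟩ := hpr
      exact ⟨c, hsub q hq hc, Or.inr rfl⟩

theorem stmt_14_general
    (ε w : ℕ → ℝ)
    (hw1 : w 1 = 1) (hε1 : ε 1 = 1 / 6)
    (hwrec : ∀ k, 1 ≤ k → w (k + 1) = w k / 2 - ε k)
    (hεpos : ∀ k, 1 ≤ k → 0 < ε (k + 1))
    (hεw : ∀ k, 1 ≤ k → ε (k + 1) < w k / 4 - ε k / 2)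
    (I : ℕ → Set (ℝ × ℝ))
    (hI1 : I 1 = {((0 : ℝ), (1 : ℝ))})
    (hIrec : ∀ k, 1 ≤ k → I (k + 1) =
      ⋃ p ∈ I k, {(p.1, (p.1 + p.2) / 2 - ε k), ((p.1 + p.2) / 2 + ε k, p.2)})
    (f : ℕ → ℝ → ℝ)
    (hf0 : ∀ x, f 0 x = x / 3)
    (hfleft : ∀ k, 1 ≤ k → ∀ p ∈ I k, ∀ x : ℝ, p.1 ≤ x → x ≤ (p.1 + p.2) / 2 - ε k →
      f k x = w (k + 2) / w (k + 1) * (x - p.1) + f (k - 1) p.1)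
    (hfright : ∀ k, 1 ≤ k → ∀ p ∈ I k, ∀ x : ℝ, (p.1 + p.2) / 2 + ε k ≤ x → x ≤ p.2 →
      f k x = w (k + 2) / w (k + 1) * (x - (p.1 + p.2) / 2 - ε k) + f (k - 1) p.1
        + w (k + 2) + 2 * ε (k + 1))
    :
    ∀ k, 1 ≤ k →
      (∀ p ∈ I k, (f (k - 1) p.1, f (k - 1) p.2) ∈ I (k + 1)) ∧
      (∀ p ∈ I (k + 1), ∃ q ∈ I k,
        p = (f (k - 1) q.1, f (k - 1) q.2) ∨
        p = (f (k - 1) q.1 + 2 / 3, f (k - 1) q.2 + 2 / 3)) := by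
  have hlen := sub_eq_of_mem_of_splitting hw1 hwrec hI1 hIrec
  intro k hk
  induction k, hk using Nat.le_induction with
  | base =>
    have hI2 : I 2 = {(0, 1 / 3), (2 / 3, 1)} := by
      rw [hIrec 1 le_rfl, hI1, biUnion_singleton, hε1]
      norm_num
    simp only [hI1, hI2, hf0, mem_singleton_iff]
    norm_num
  | succ k hk ih =>
    simp only [Nat.add_sub_cancel]
    refine splitting_step (hIrec k hk) (hIrec (k + 1) (by omega)) (fun q hq => ?_) ih.1 ih.2
    have hw_pos : 0 < w (k + 1) := by linarith [hwrec k hk, hεpos k hk, hεw k hk]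
    rw [image_gapHalves_of_affine hw_pos (by rw [hlen k hk q hq, hwrec k hk]; ring)
      (hfleft k hk q hq) (hfright k hk q hq)]
    congr 2
    linarith [hlen (k + 1) (by omega) _ (ih.1 q hq), hwrec (k + 1) (by omega)]

theorem stmt_14
    (ε w : ℕ → ℝ)
    (hw1 : w 1 = 1) (hε1 : ε 1 = 1 / 6)
    (hwrec : ∀ k, 1 ≤ k → w (k + 1) = w k / 2 - ε k)
    (hεpos : ∀ k, 1 ≤ k → 0 < ε (k + 1))
    (hεgeom : ∀ k, 1 ≤ k → 2 ^ k * ε (k + 1) < 1 / 2 * (1 / 4 ^ k))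
    (hεquot : ∀ k, 1 ≤ k → ε (k + 1) / ε k < 1 / 2)
    (hεw : ∀ k, 1 ≤ k → ε (k + 1) < w k / 4 - ε k / 2)
    (I : ℕ → Set (ℝ × ℝ))
    (hI1 : I 1 = {((0 : ℝ), (1 : ℝ))})
    (hIrec : ∀ k, 1 ≤ k → I (k + 1) =
      ⋃ p ∈ I k, {(p.1, (p.1 + p.2) / 2 - ε k), ((p.1 + p.2) / 2 + ε k, p.2)})
    (f : ℕ → ℝ → ℝ)
    (hf0 : ∀ x, f 0 x = x / 3)
    (hfmaps : ∀ k, Set.MapsTo (f k) (Set.Icc (0 : ℝ) 1) (Set.Icc (0 : ℝ) 1))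
    (hfleft : ∀ k, 1 ≤ k → ∀ p ∈ I k, ∀ x : ℝ, p.1 ≤ x → x ≤ (p.1 + p.2) / 2 - ε k →
      f k x = w (k + 2) / w (k + 1) * (x - p.1) + f (k - 1) p.1)
    (hfmid : ∀ k, 1 ≤ k → ∀ p ∈ I k, ∀ x : ℝ, |x - (p.1 + p.2) / 2| < ε k →
      f k x = ε (k + 1) / ε k * (x - (p.1 + p.2) / 2 + ε k) + f (k - 1) p.1 + w (k + 2))
    (hfright : ∀ k, 1 ≤ k → ∀ p ∈ I k, ∀ x : ℝ, (p.1 + p.2) / 2 + ε k ≤ x → x ≤ p.2 →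
      f k x = w (k + 2) / w (k + 1) * (x - (p.1 + p.2) / 2 - ε k) + f (k - 1) p.1
        + w (k + 2) + 2 * ε (k + 1))
    (hfout : ∀ k, 1 ≤ k → ∀ x ∈ Set.Icc (0 : ℝ) 1 \ (⋃ p ∈ I k, Set.Icc p.1 p.2),
      f k x = f (k - 1) x)
    :
    ∀ k, 1 ≤ k →
      (∀ p ∈ I k, (f (k - 1) p.1, f (k - 1) p.2) ∈ I (k + 1)) ∧
      (∀ p ∈ I (k + 1), ∃ q ∈ I k,
        p = (f (k - 1) q.1, f (k - 1) q.2) ∨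
        p = (f (k - 1) q.1 + 2 / 3, f (k - 1) q.2 + 2 / 3)) :=
  stmt_14_general ε w hw1 hε1 hwrec hεpos hεw I hI1 hIrec f hf0 hfleft hfright
end

section
/- For every k ∈ ℕ, sup_{x∈[0,1]} |f_k(x) − f_{k−1}(x)| ≤ 1/2^k; consequently the sequence (f_k) is a Cauchy sequence with respect to the supremum norm and converges uniformly on [0,1]. -/
/-!
On an interval `[a, b]` of `𝓘_k` (of length `w_k`), `f_{k-1}` is affine with slope
`w_{k+1}/w_k`, and `f_k` replaces it by three affine pieces with the same values at `a` and `b`.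
On each piece `f_k - f_{k-1}` is `u · (w_{k+1} ε_k - ε_{k+1} w_k) / (m w_k)` with `|u| ≤ m`, where
`m` is `w_{k+1}` on the outer pieces and `ε_k` on the middle one, and the slope gap satisfies
`|w_{k+1} ε_k - ε_{k+1} w_k| ≤ w_k ε_k / 2`; hence `|f_k - f_{k-1}| ≤ ε_k / 2 ≤ 2^{-k}`.
The increments are therefore dominated by a geometric series, and
`f_k = f_0 + ∑_{i<k} (f_{i+1} - f_i)` converges uniformly by the Weierstrass M-test.
-/

open Set MeasureTheory Filter

theorem exists_tendstoUniformlyOn_of_norm_sub_le {α E : Type*} [NormedAddCommGroup E]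
    [CompleteSpace E] {f : ℕ → α → E} {s : Set α} {u : ℕ → ℝ} (hu : Summable u)
    (hf : ∀ n, ∀ x ∈ s, ‖f (n + 1) x - f n x‖ ≤ u n) :
    ∃ F : α → E, TendstoUniformlyOn f F atTop s := by
  refine ⟨fun x => f 0 x + ∑' n, (f (n + 1) x - f n x), ?_⟩
  have hsum := Metric.tendstoUniformlyOn_iff.1 (tendstoUniformlyOn_tsum_nat hu hf)
  refine Metric.tendstoUniformlyOn_iff.2 fun δ hδ => ?_
  filter_upwards [hsum δ hδ] with n hn x hx
  have htel : f n x = f 0 x + ∑ i ∈ Finset.range n, (f (i + 1) x - f i x) := by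
    rw [Finset.sum_range_sub (fun i => f i x)]
    abel
  rw [htel, dist_add_left]
  exact hn x hx

theorem mul_two_pow_le_of_le_half {ε : ℕ → ℝ} (h : ∀ k, 1 ≤ k → ε (k + 1) ≤ ε k / 2) :
    ∀ k, 1 ≤ k → ε k * 2 ^ k ≤ 2 * ε 1 := by
  intro k hk
  induction k, hk using Nat.le_induction with
  | base => simp [mul_comm]
  | succ n hn ih =>
    calc ε (n + 1) * 2 ^ (n + 1) = ε (n + 1) * 2 * 2 ^ n := by ring
      _ ≤ ε n * 2 ^ n := by gcongr; linarith [h n hn]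
      _ ≤ 2 * ε 1 := ih

theorem abs_mul_div_mul_le_half {u m D W e : ℝ} (hm : 0 < m) (hW : 0 < W) (hu : |u| ≤ m)
    (hD : |D| ≤ W * e / 2) : |u * D / (m * W)| ≤ e / 2 := by
  rw [abs_div, abs_mul, abs_of_pos (mul_pos hm hW), div_le_iff₀ (mul_pos hm hW)]
  calc |u| * |D| ≤ m * (W * e / 2) := mul_le_mul hu hD (abs_nonneg _) hm.le
    _ = e / 2 * (m * W) := by ring

theorem abs_sub_le_half_of_split {a b W W' W'' e e' : ℝ} {g h : ℝ → ℝ}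
    (he : 0 < e) (he' : 0 < e') (he'e : e' < e / 2) (hW : 2 * e < W) (hab : b - a = W)
    (hW' : W' = W / 2 - e) (hW'' : W'' = W' / 2 - e')
    (hg : ∀ x, a ≤ x → x ≤ b → g x = W' / W * (x - a) + g a)
    (hleft : ∀ x, a ≤ x → x ≤ (a + b) / 2 - e → h x = W'' / W' * (x - a) + g a)
    (hmid : ∀ x, |x - (a + b) / 2| < e → h x = e' / e * (x - (a + b) / 2 + e) + g a + W'')
    (hright : ∀ x, (a + b) / 2 + e ≤ x → x ≤ b →
      h x = W'' / W' * (x - (a + b) / 2 - e) + g a + W'' + 2 * e')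
    {x : ℝ} (hax : a ≤ x) (hxb : x ≤ b) :
    |h x - g x| ≤ e / 2 := by
  subst hW' hW''
  obtain rfl : b = a + W := by linarith
  have hW0 : 0 < W := by linarith
  have hW'0 : 0 < W / 2 - e := by linarith
  have hW2e : W - 2 * e ≠ 0 := by linarith
  have hD : |(W / 2 - e) * e - e' * W| ≤ W * e / 2 :=
    abs_le.2 ⟨by nlinarith [mul_pos hW'0 he], by nlinarith [mul_pos he' hW0]⟩
  rcases le_or_gt x ((a + (a + W)) / 2 - e) with hl | hl
  · convert abs_mul_div_mul_le_half (u := x - a) hW'0 hW0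
      (abs_le.2 ⟨by linarith, by linarith⟩) hD using 2
    rw [hleft x hax hl, hg x hax hxb]
    field_simp
    ring
  rcases le_or_gt ((a + (a + W)) / 2 + e) x with hr | hr
  · convert abs_mul_div_mul_le_half (u := x - (a + W)) hW'0 hW0
      (abs_le.2 ⟨by linarith, by linarith⟩) hD using 2
    rw [hright x hr hxb, hg x hax hxb]
    field_simp
    ring
  · convert abs_mul_div_mul_le_half (u := (a + (a + W)) / 2 - x) he hW0
      (abs_le.2 ⟨by linarith, by linarith⟩) hD using 2
    rw [hmid x (abs_lt.2 ⟨by linarith, by linarith⟩), hg x hax hxb]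
    field_simp
    ring

theorem snd_sub_fst_eq_of_mem {ε w : ℕ → ℝ} {I : ℕ → Set (ℝ × ℝ)} (hw1 : w 1 = 1)
    (hwrec : ∀ k, 1 ≤ k → w (k + 1) = w k / 2 - ε k) (hI1 : I 1 = {((0 : ℝ), (1 : ℝ))})
    (hIrec : ∀ k, 1 ≤ k → I (k + 1) =
      ⋃ p ∈ I k, {(p.1, (p.1 + p.2) / 2 - ε k), ((p.1 + p.2) / 2 + ε k, p.2)}) :
    ∀ k, 1 ≤ k → ∀ p ∈ I k, p.2 - p.1 = w k := by
  intro k hk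
  induction k, hk using Nat.le_induction with
  | base =>
    intro p hp
    rw [hI1, mem_singleton_iff] at hp
    simp [hp, hw1]
  | succ n hn ih =>
    intro p hp
    rw [hIrec n hn] at hp
    simp only [mem_iUnion, mem_insert_iff, mem_singleton_iff] at hp
    obtain ⟨q, hq, rfl | rfl⟩ := hp <;>
    · have := ih q hq
      rw [hwrec n hn]
      dsimp only
      linarith

theorem pred_eq_affine_of_mem {ε w : ℕ → ℝ} {I : ℕ → Set (ℝ × ℝ)} {f : ℕ → ℝ → ℝ}
    (hw1 : w 1 = 1) (hε1 : ε 1 = 1 / 6) (hwrec : ∀ k, 1 ≤ k → w (k + 1) = w k / 2 - ε k)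
    (hIrec : ∀ k, 1 ≤ k → I (k + 1) =
      ⋃ p ∈ I k, {(p.1, (p.1 + p.2) / 2 - ε k), ((p.1 + p.2) / 2 + ε k, p.2)})
    (hsplit : ∀ k, 1 ≤ k → ∀ p ∈ I k, 2 * ε k ≤ p.2 - p.1)
    (hf0 : ∀ x, f 0 x = x / 3)
    (hfleft : ∀ k, 1 ≤ k → ∀ p ∈ I k, ∀ x : ℝ, p.1 ≤ x → x ≤ (p.1 + p.2) / 2 - ε k →
      f k x = w (k + 2) / w (k + 1) * (x - p.1) + f (k - 1) p.1)
    (hfright : ∀ k, 1 ≤ k → ∀ p ∈ I k, ∀ x : ℝ, (p.1 + p.2) / 2 + ε k ≤ x → x ≤ p.2 →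
      f k x = w (k + 2) / w (k + 1) * (x - (p.1 + p.2) / 2 - ε k) + f (k - 1) p.1
        + w (k + 2) + 2 * ε (k + 1)) :
    ∀ k, 1 ≤ k → ∀ p ∈ I k, ∀ x, p.1 ≤ x → x ≤ p.2 →
      f (k - 1) x = w (k + 1) / w k * (x - p.1) + f (k - 1) p.1 := by
  intro k hk p hp x hax hxb
  match k, hk with
  | 1, _ =>
    have hw2 : w 2 = 1 / 3 := by rw [hwrec 1 le_rfl, hw1, hε1]; norm_num
    simp only [Nat.sub_self, hf0, hw2, hw1]
    ring
  | n + 2, _ =>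
    rw [hIrec (n + 1) (by omega)] at hp
    simp only [mem_iUnion, mem_insert_iff, mem_singleton_iff] at hp
    obtain ⟨q, hq, rfl | rfl⟩ := hp
    · have := hsplit (n + 1) (by omega) q hq
      show f (n + 1) x = w (n + 1 + 2) / w (n + 1 + 1) * _ + f (n + 1) _
      rw [hfleft (n + 1) (by omega) q hq x hax hxb,
        hfleft (n + 1) (by omega) q hq q.1 le_rfl (by linarith)]
      ring
    · have := hsplit (n + 1) (by omega) q hq
      show f (n + 1) x = w (n + 1 + 2) / w (n + 1 + 1) * _ + f (n + 1) _
      rw [hfright (n + 1) (by omega) q hq x hax hxb,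
        hfright (n + 1) (by omega) q hq _ le_rfl (by linarith)]
      ring

theorem stmt_15_general
    (ε w : ℕ → ℝ)
    (hw1 : w 1 = 1) (hε1 : ε 1 = 1 / 6)
    (hwrec : ∀ k, 1 ≤ k → w (k + 1) = w k / 2 - ε k)
    (hεpos : ∀ k, 1 ≤ k → 0 < ε (k + 1))
    (hεquot : ∀ k, 1 ≤ k → ε (k + 1) / ε k < 1 / 2)
    (hεw : ∀ k, 1 ≤ k → ε (k + 1) < w k / 4 - ε k / 2)
    (I : ℕ → Set (ℝ × ℝ))
    (hI1 : I 1 = {((0 : ℝ), (1 : ℝ))})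
    (hIrec : ∀ k, 1 ≤ k → I (k + 1) =
      ⋃ p ∈ I k, {(p.1, (p.1 + p.2) / 2 - ε k), ((p.1 + p.2) / 2 + ε k, p.2)})
    (f : ℕ → ℝ → ℝ)
    (hf0 : ∀ x, f 0 x = x / 3)
    (hfleft : ∀ k, 1 ≤ k → ∀ p ∈ I k, ∀ x : ℝ, p.1 ≤ x → x ≤ (p.1 + p.2) / 2 - ε k →
      f k x = w (k + 2) / w (k + 1) * (x - p.1) + f (k - 1) p.1)
    (hfmid : ∀ k, 1 ≤ k → ∀ p ∈ I k, ∀ x : ℝ, |x - (p.1 + p.2) / 2| < ε k →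
      f k x = ε (k + 1) / ε k * (x - (p.1 + p.2) / 2 + ε k) + f (k - 1) p.1 + w (k + 2))
    (hfright : ∀ k, 1 ≤ k → ∀ p ∈ I k, ∀ x : ℝ, (p.1 + p.2) / 2 + ε k ≤ x → x ≤ p.2 →
      f k x = w (k + 2) / w (k + 1) * (x - (p.1 + p.2) / 2 - ε k) + f (k - 1) p.1
        + w (k + 2) + 2 * ε (k + 1))
    (hfout : ∀ k, 1 ≤ k → ∀ x ∈ Set.Icc (0 : ℝ) 1 \ (⋃ p ∈ I k, Set.Icc p.1 p.2),
      f k x = f (k - 1) x)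
    :
    (∀ k, 1 ≤ k → ∀ x ∈ Set.Icc (0 : ℝ) 1, |f k x - f (k - 1) x| ≤ 1 / 2 ^ k) ∧
    (∀ e : ℝ, 0 < e → ∃ N : ℕ, ∀ m ≥ N, ∀ n ≥ N, ∀ x ∈ Set.Icc (0 : ℝ) 1,
      |f m x - f n x| ≤ e) ∧
    ∃ F : ℝ → ℝ, TendstoUniformlyOn (fun k => f k) F Filter.atTop (Set.Icc (0 : ℝ) 1) := by
  have hεp : ∀ k, 1 ≤ k → 0 < ε k := fun k hk => by
    induction k, hk using Nat.le_induction with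
    | base => rw [hε1]; norm_num
    | succ n hn _ => exact hεpos n hn
  have hεhalf : ∀ k, 1 ≤ k → ε (k + 1) < ε k / 2 := fun k hk => by
    linarith [(div_lt_iff₀ (hεp k hk)).1 (hεquot k hk)]
  have hwε : ∀ k, 1 ≤ k → 2 * ε k < w k := fun k hk => by linarith [hεw k hk, hεpos k hk]
  have hlen := snd_sub_fst_eq_of_mem hw1 hwrec hI1 hIrec
  have haff := pred_eq_affine_of_mem hw1 hε1 hwrec hIrec
    (fun k hk p hp => by linarith [hlen k hk p hp, hwε k hk]) hf0 hfleft hfright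
  have hbound : ∀ k, 1 ≤ k → ∀ x ∈ Icc (0 : ℝ) 1, |f k x - f (k - 1) x| ≤ 1 / 2 ^ k := by
    intro k hk x hx
    have hεk : ε k / 2 ≤ 1 / 2 ^ k := by
      rw [div_le_div_iff₀ two_pos (by positivity)]
      linarith [mul_two_pow_le_of_le_half (fun k hk => (hεhalf k hk).le) k hk]
    refine le_trans ?_ hεk
    by_cases hmem : ∃ p ∈ I k, x ∈ Icc p.1 p.2
    · obtain ⟨p, hp, hax, hxb⟩ := hmem
      exact abs_sub_le_half_of_split (hεp k hk) (hεpos k hk) (hεhalf k hk) (hwε k hk)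
        (hlen k hk p hp) (hwrec k hk) (hwrec (k + 1) (by omega)) (haff k hk p hp)
        (hfleft k hk p hp) (hfmid k hk p hp) (hfright k hk p hp) hax hxb
    · have hx' : x ∉ ⋃ p ∈ I k, Icc p.1 p.2 := by
        simpa only [mem_iUnion, exists_prop] using hmem
      rw [hfout k hk x ⟨hx, hx'⟩, sub_self, abs_zero]
      linarith [hεp k hk]
  obtain ⟨F, hF⟩ := exists_tendstoUniformlyOn_of_norm_sub_le (f := f)
    ((summable_nat_add_iff 1).2 summable_geometric_two)
    fun n x hx => by simpa [one_div_pow] using hbound (n + 1) (by omega) x hx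
  refine ⟨hbound, fun e he => ?_, F, hF⟩
  obtain ⟨N, hN⟩ := Metric.uniformCauchySeqOn_iff.1 hF.uniformCauchySeqOn e he
  exact ⟨N, fun m hm n hn x hx => (hN m hm n hn x hx).le⟩

theorem stmt_15
    (ε w : ℕ → ℝ)
    (hw1 : w 1 = 1) (hε1 : ε 1 = 1 / 6)
    (hwrec : ∀ k, 1 ≤ k → w (k + 1) = w k / 2 - ε k)
    (hεpos : ∀ k, 1 ≤ k → 0 < ε (k + 1))
    (hεgeom : ∀ k, 1 ≤ k → 2 ^ k * ε (k + 1) < 1 / 2 * (1 / 4 ^ k))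
    (hεquot : ∀ k, 1 ≤ k → ε (k + 1) / ε k < 1 / 2)
    (hεw : ∀ k, 1 ≤ k → ε (k + 1) < w k / 4 - ε k / 2)
    (I : ℕ → Set (ℝ × ℝ))
    (hI1 : I 1 = {((0 : ℝ), (1 : ℝ))})
    (hIrec : ∀ k, 1 ≤ k → I (k + 1) =
      ⋃ p ∈ I k, {(p.1, (p.1 + p.2) / 2 - ε k), ((p.1 + p.2) / 2 + ε k, p.2)})
    (f : ℕ → ℝ → ℝ)
    (hf0 : ∀ x, f 0 x = x / 3)
    (hfmaps : ∀ k, Set.MapsTo (f k) (Set.Icc (0 : ℝ) 1) (Set.Icc (0 : ℝ) 1))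
    (hfleft : ∀ k, 1 ≤ k → ∀ p ∈ I k, ∀ x : ℝ, p.1 ≤ x → x ≤ (p.1 + p.2) / 2 - ε k →
      f k x = w (k + 2) / w (k + 1) * (x - p.1) + f (k - 1) p.1)
    (hfmid : ∀ k, 1 ≤ k → ∀ p ∈ I k, ∀ x : ℝ, |x - (p.1 + p.2) / 2| < ε k →
      f k x = ε (k + 1) / ε k * (x - (p.1 + p.2) / 2 + ε k) + f (k - 1) p.1 + w (k + 2))
    (hfright : ∀ k, 1 ≤ k → ∀ p ∈ I k, ∀ x : ℝ, (p.1 + p.2) / 2 + ε k ≤ x → x ≤ p.2 →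
      f k x = w (k + 2) / w (k + 1) * (x - (p.1 + p.2) / 2 - ε k) + f (k - 1) p.1
        + w (k + 2) + 2 * ε (k + 1))
    (hfout : ∀ k, 1 ≤ k → ∀ x ∈ Set.Icc (0 : ℝ) 1 \ (⋃ p ∈ I k, Set.Icc p.1 p.2),
      f k x = f (k - 1) x)
    :
    (∀ k, 1 ≤ k → ∀ x ∈ Set.Icc (0 : ℝ) 1, |f k x - f (k - 1) x| ≤ 1 / 2 ^ k) ∧
    (∀ e : ℝ, 0 < e → ∃ N : ℕ, ∀ m ≥ N, ∀ n ≥ N, ∀ x ∈ Set.Icc (0 : ℝ) 1,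
      |f m x - f n x| ≤ e) ∧
    ∃ F : ℝ → ℝ, TendstoUniformlyOn (fun k => f k) F Filter.atTop (Set.Icc (0 : ℝ) 1) :=
  stmt_15_general ε w hw1 hε1 hwrec hεpos hεquot hεw I hI1 hIrec f hf0 hfleft hfmid hfright hfout
end

section
/- The pointwise limit f(x) = lim_{k→∞} f_k(x) defines a function f : [0,1] → [0,1] that is strictly increasing and satisfies |f(x) − f(y)| ≤ (1/2)|x − y| for all x, y ∈ [0,1]; in particular f is a contraction. -/
open Set Filter Metric Topology

/-!
Each `f k` is nondecreasing with difference quotients in `[0, 1/2]` on `[0, 1]`: on an interval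
of `I k` it is continuous and piecewise affine with slopes `w (k+2) / w (k+1)` and
`ε (k+1) / ε k`, both below `1/2`; it agrees with `f (k-1)` at the endpoints of these intervals
and off them. This two-sided bound passes to the pointwise limit `F`.

For strictness, no later interval ever meets the open middle gap `ball ((p.1 + p.2) / 2) (ε m)` of
an interval `p` of `I m`, so `F = f m` there, and `f m` has positive slope on the gap. Since the
widths `w k` at least halve at each level, every nondegenerate subinterval of `[0, 1]` meets such
a gap.
-/

def MonoLipschitzOn (c : ℝ) (g : ℝ → ℝ) (s : Set ℝ) : Prop :=
  ∀ x ∈ s, ∀ y ∈ s, x ≤ y → 0 ≤ g y - g x ∧ g y - g x ≤ c * (y - x)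

namespace MonoLipschitzOn

variable {c : ℝ} {g h : ℝ → ℝ} {s : Set ℝ}

theorem of_sub_eq_mul {a : ℝ} (ha : 0 ≤ a) (hac : a ≤ c)
    (hg : ∀ x ∈ s, ∀ y ∈ s, g y - g x = a * (y - x)) : MonoLipschitzOn c g s := by
  intro x hx y hy hxy
  rw [hg x hx y hy]
  exact ⟨mul_nonneg ha (sub_nonneg.2 hxy), mul_le_mul_of_nonneg_right hac (sub_nonneg.2 hxy)⟩

theorem union_Icc {a b d : ℝ} (h₁ : MonoLipschitzOn c g (Icc a b))
    (h₂ : MonoLipschitzOn c g (Icc b d)) : MonoLipschitzOn c g (Icc a d) := by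
  intro x hx y hy hxy
  rcases le_total y b with hyb | hby
  · exact h₁ x ⟨hx.1, hxy.trans hyb⟩ y ⟨hx.1.trans hxy, hyb⟩ hxy
  rcases le_total b x with hbx | hxb
  · exact h₂ x ⟨hbx, hx.2⟩ y ⟨hbx.trans hxy, hy.2⟩ hxy
  have l := h₁ x ⟨hx.1, hxb⟩ b ⟨hx.1.trans hxb, le_rfl⟩ hxb
  have r := h₂ b ⟨le_rfl, hby.trans hy.2⟩ y ⟨hby, hy.2⟩ hby
  constructor <;> linarith [l.1, l.2, r.1, r.2]

theorem glue {J : Set (ℝ × ℝ)} (hg : MonoLipschitzOn c g s) (hJ : ∀ p ∈ J, Icc p.1 p.2 ⊆ s)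
    (hout : ∀ x ∈ s \ ⋃ p ∈ J, Icc p.1 p.2, h x = g x)
    (hfst : ∀ p ∈ J, h p.1 = g p.1) (hsnd : ∀ p ∈ J, h p.2 = g p.2)
    (hin : ∀ p ∈ J, MonoLipschitzOn c h (Icc p.1 p.2)) : MonoLipschitzOn c h s := by
  have from_agree : ∀ z ∈ s, ∀ y ∈ s, z ≤ y → h z = g z →
      0 ≤ h y - h z ∧ h y - h z ≤ c * (y - z) := by
    intro z hz y hy hzy hgz
    by_cases hyJ : y ∈ ⋃ q ∈ J, Icc q.1 q.2
    · obtain ⟨q, hq, hyq⟩ := mem_iUnion₂.1 hyJ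
      rcases le_or_gt z q.1 with hzq | hqz
      · have hq₁ : q.1 ∈ Icc q.1 q.2 := ⟨le_rfl, hyq.1.trans hyq.2⟩
        have l := hg z hz q.1 (hJ q hq hq₁) hzq
        have r := hin q hq q.1 hq₁ y hyq hyq.1
        constructor <;> linarith [l.1, l.2, r.1, r.2, hfst q hq]
      · exact hin q hq z ⟨hqz.le, hzy.trans hyq.2⟩ y hyq hzy
    · have l := hg z hz y hy hzy
      constructor <;> linarith [l.1, l.2, hout y ⟨hy, hyJ⟩]
  intro x hx y hy hxy
  by_cases hxJ : x ∈ ⋃ p ∈ J, Icc p.1 p.2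
  · obtain ⟨p, hp, hxp⟩ := mem_iUnion₂.1 hxJ
    rcases le_or_gt y p.2 with hyp | hpy
    · exact hin p hp x hxp y ⟨hxp.1.trans hxy, hyp⟩ hxy
    have hp₂ : p.2 ∈ Icc p.1 p.2 := ⟨hxp.1.trans hxp.2, le_rfl⟩
    have l := hin p hp x hxp p.2 hp₂ hxp.2
    have r := from_agree p.2 (hJ p hp hp₂) y hy hpy.le (hsnd p hp)
    constructor <;> linarith [l.1, l.2, r.1, r.2]
  · exact from_agree x hx y hy hxy (hout x ⟨hx, hxJ⟩)

theorem of_tendsto {G : ℕ → ℝ → ℝ} (hG : ∀ j, MonoLipschitzOn c (G j) s)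
    (hlim : ∀ x ∈ s, Tendsto (fun j => G j x) atTop (𝓝 (g x))) : MonoLipschitzOn c g s := by
  intro x hx y hy hxy
  have hT := (hlim y hy).sub (hlim x hx)
  exact ⟨ge_of_tendsto' hT fun j => (hG j x hx y hy hxy).1,
    le_of_tendsto' hT fun j => (hG j x hx y hy hxy).2⟩

theorem monotoneOn (hg : MonoLipschitzOn c g s) : MonotoneOn g s :=
  fun x hx y hy hxy => sub_nonneg.1 (hg x hx y hy hxy).1

theorem abs_sub_le (hg : MonoLipschitzOn c g s) {x y : ℝ} (hx : x ∈ s) (hy : y ∈ s) :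
    |g x - g y| ≤ c * |x - y| := by
  rcases le_total x y with hxy | hyx
  · have h := hg x hx y hy hxy
    rw [abs_sub_comm, abs_of_nonneg h.1, abs_sub_comm, abs_of_nonneg (sub_nonneg.2 hxy)]
    exact h.2
  · have h := hg y hy x hx hyx
    rw [abs_of_nonneg h.1, abs_of_nonneg (sub_nonneg.2 hyx)]
    exact h.2

end MonoLipschitzOn

structure IsCantorScheme (ε w : ℕ → ℝ) (I : ℕ → Set (ℝ × ℝ)) : Prop where
  w_one : w 1 = 1
  ε_one : ε 1 = 1 / 6
  w_succ : ∀ k, 1 ≤ k → w (k + 1) = w k / 2 - ε k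
  ε_succ_pos : ∀ k, 1 ≤ k → 0 < ε (k + 1)
  ε_succ_lt : ∀ k, 1 ≤ k → ε (k + 1) < w k / 4 - ε k / 2
  I_one : I 1 = {((0 : ℝ), (1 : ℝ))}
  I_succ : ∀ k, 1 ≤ k → I (k + 1) =
    ⋃ p ∈ I k, {(p.1, (p.1 + p.2) / 2 - ε k), ((p.1 + p.2) / 2 + ε k, p.2)}

namespace IsCantorScheme

variable {ε w : ℕ → ℝ} {I : ℕ → Set (ℝ × ℝ)} {k : ℕ} {p : ℝ × ℝ}

theorem ε_pos (S : IsCantorScheme ε w I) (hk : 1 ≤ k) : 0 < ε k := by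
  match k, hk with
  | 1, _ => rw [S.ε_one]; norm_num
  | j + 2, _ => exact S.ε_succ_pos (j + 1) (by omega)

theorem two_mul_ε_lt_w (S : IsCantorScheme ε w I) (hk : 1 ≤ k) : 2 * ε k < w k := by
  linarith [S.ε_succ_lt k hk, S.ε_succ_pos k hk]

theorem w_pos (S : IsCantorScheme ε w I) (hk : 1 ≤ k) : 0 < w k := by
  linarith [S.two_mul_ε_lt_w hk, S.ε_pos hk]

theorem w_succ_lt (S : IsCantorScheme ε w I) (hk : 1 ≤ k) : w (k + 1) < w k / 2 := by
  linarith [S.w_succ k hk, S.ε_pos hk]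

theorem w_add_two (S : IsCantorScheme ε w I) (hk : 1 ≤ k) :
    w (k + 2) = w (k + 1) / 2 - ε (k + 1) :=
  S.w_succ (k + 1) (by omega)

theorem mem_succ (S : IsCantorScheme ε w I) (hk : 1 ≤ k) :
    p ∈ I (k + 1) ↔ ∃ q ∈ I k,
      p = (q.1, (q.1 + q.2) / 2 - ε k) ∨ p = ((q.1 + q.2) / 2 + ε k, q.2) := by
  simp [S.I_succ k hk]

theorem left_mem (S : IsCantorScheme ε w I) (hk : 1 ≤ k) (hp : p ∈ I k) :
    (p.1, (p.1 + p.2) / 2 - ε k) ∈ I (k + 1) :=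
  (S.mem_succ hk).2 ⟨p, hp, .inl rfl⟩

theorem right_mem (S : IsCantorScheme ε w I) (hk : 1 ≤ k) (hp : p ∈ I k) :
    ((p.1 + p.2) / 2 + ε k, p.2) ∈ I (k + 1) :=
  (S.mem_succ hk).2 ⟨p, hp, .inr rfl⟩

theorem bounds_of_mem (S : IsCantorScheme ε w I) (hk : 1 ≤ k) (hp : p ∈ I k) :
    0 ≤ p.1 ∧ p.2 ≤ 1 ∧ p.2 - p.1 = w k := by
  induction k, hk using Nat.le_induction generalizing p with
  | base =>
    rw [S.I_one, mem_singleton_iff] at hp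
    simp [hp, S.w_one]
  | succ k hk ih =>
    have := S.w_succ k hk
    have := S.two_mul_ε_lt_w hk
    have := S.ε_pos hk
    obtain ⟨q, hq, rfl | rfl⟩ := (S.mem_succ hk).1 hp <;>
    · obtain ⟨h₁, h₂, h₃⟩ := ih hq
      refine ⟨?_, ?_, ?_⟩ <;> dsimp only <;> linarith

theorem sub_eq_w (S : IsCantorScheme ε w I) (hk : 1 ≤ k) (hp : p ∈ I k) : p.2 - p.1 = w k :=
  (S.bounds_of_mem hk hp).2.2

theorem Icc_subset_Icc_zero_one (S : IsCantorScheme ε w I) (hk : 1 ≤ k) (hp : p ∈ I k) :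
    Icc p.1 p.2 ⊆ Icc 0 1 :=
  Icc_subset_Icc (S.bounds_of_mem hk hp).1 (S.bounds_of_mem hk hp).2.1

theorem ball_subset_Icc (S : IsCantorScheme ε w I) (hk : 1 ≤ k) (hp : p ∈ I k) :
    ball ((p.1 + p.2) / 2) (ε k) ⊆ Icc p.1 p.2 := by
  have := S.two_mul_ε_lt_w hk
  have := S.sub_eq_w hk hp
  rw [Real.ball_eq_Ioo]
  exact Ioo_subset_Icc_self.trans (Icc_subset_Icc (by linarith) (by linarith))

theorem Icc_subset_of_child (S : IsCantorScheme ε w I) (hk : 1 ≤ k) {q : ℝ × ℝ} (hq : q ∈ I k)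
    (hp : p = (q.1, (q.1 + q.2) / 2 - ε k) ∨ p = ((q.1 + q.2) / 2 + ε k, q.2)) :
    Icc p.1 p.2 ⊆ Icc q.1 q.2 \ ball ((q.1 + q.2) / 2) (ε k) := by
  have := S.two_mul_ε_lt_w hk
  have := S.sub_eq_w hk hq
  have := S.ε_pos hk
  rw [Real.ball_eq_Ioo]
  rintro x ⟨h₁, h₂⟩
  rcases hp with rfl | rfl <;> dsimp only at h₁ h₂ <;>
    exact ⟨⟨by linarith, by linarith⟩, fun hx => by linarith [hx.1, hx.2]⟩

theorem exists_parent (S : IsCantorScheme ε w I) (hk : 1 ≤ k) (hp : p ∈ I (k + 1)) :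
    ∃ q ∈ I k, Icc p.1 p.2 ⊆ Icc q.1 q.2 \ ball ((q.1 + q.2) / 2) (ε k) := by
  obtain ⟨q, hq, hpq⟩ := (S.mem_succ hk).1 hp
  exact ⟨q, hq, S.Icc_subset_of_child hk hq hpq⟩

theorem exists_ancestor (S : IsCantorScheme ε w I) {m j : ℕ} (hm : 1 ≤ m) (hmj : m ≤ j)
    {q : ℝ × ℝ} (hq : q ∈ I j) : ∃ r ∈ I m, Icc q.1 q.2 ⊆ Icc r.1 r.2 := by
  induction j, hmj using Nat.le_induction generalizing q with
  | base => exact ⟨q, hq, subset_rfl⟩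
  | succ j hj ih =>
    obtain ⟨P, hP, hqP⟩ := S.exists_parent (hm.trans hj) hq
    obtain ⟨r, hr, hPr⟩ := ih hP
    exact ⟨r, hr, hqP.trans (sdiff_subset.trans hPr)⟩

theorem pairwiseDisjoint (S : IsCantorScheme ε w I) (hk : 1 ≤ k) :
    (I k).PairwiseDisjoint fun p => Icc p.1 p.2 := by
  induction k, hk using Nat.le_induction with
  | base => rw [S.I_one]; exact pairwiseDisjoint_singleton _ _
  | succ k hk ih =>
    intro p hp q hq hpq
    obtain ⟨P, hP, hpP⟩ := (S.mem_succ hk).1 hp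
    obtain ⟨Q, hQ, hqQ⟩ := (S.mem_succ hk).1 hq
    by_cases hPQ : P = Q
    · subst hPQ
      have := S.ε_pos hk
      rcases hpP with rfl | rfl <;> rcases hqQ with rfl | rfl
      · exact absurd rfl hpq
      · exact disjoint_left.2 fun x h₁ h₂ => by linarith [h₁.2, h₂.1]
      · exact disjoint_left.2 fun x h₁ h₂ => by linarith [h₁.1, h₂.2]
      · exact absurd rfl hpq
    · exact (ih hP hQ hPQ).mono ((S.Icc_subset_of_child hk hP hpP).trans sdiff_subset)
        ((S.Icc_subset_of_child hk hQ hqQ).trans sdiff_subset)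

theorem not_mem_Icc_of_mem_ball (S : IsCantorScheme ε w I) {m j : ℕ} (hm : 1 ≤ m) (hmj : m < j)
    (hp : p ∈ I m) {u : ℝ} (hu : u ∈ ball ((p.1 + p.2) / 2) (ε m)) {q : ℝ × ℝ}
    (hq : q ∈ I j) : u ∉ Icc q.1 q.2 := by
  intro huq
  obtain ⟨r, hr, hqr⟩ := S.exists_ancestor (m := m + 1) (by omega) hmj hq
  obtain ⟨P, hP, hrP⟩ := S.exists_parent hm hr
  obtain ⟨huP, huP'⟩ := hrP (hqr huq)
  by_cases hPp : P = p
  · exact huP' (hPp ▸ hu)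
  · exact disjoint_left.1 (S.pairwiseDisjoint hm hP hp hPp) huP (S.ball_subset_Icc hm hp hu)

theorem ball_inter_Ioo_nonempty_or (S : IsCantorScheme ε w I) (hk : 1 ≤ k) (hp : p ∈ I k)
    {x y : ℝ} (hx : p.1 ≤ x) (hxy : x < y) (hy : y ≤ p.2) :
    (Ioo x y ∩ ball ((p.1 + p.2) / 2) (ε k)).Nonempty ∨ ∃ q ∈ I (k + 1), q.1 ≤ x ∧ y ≤ q.2 := by
  rcases le_or_gt y ((p.1 + p.2) / 2 - ε k) with hyl | hyl
  · exact .inr ⟨_, S.left_mem hk hp, hx, hyl⟩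
  rcases le_or_gt ((p.1 + p.2) / 2 + ε k) x with hxr | hxr
  · exact .inr ⟨_, S.right_mem hk hp, hxr, hy⟩
  have := S.ε_pos hk
  rw [Real.ball_eq_Ioo, Ioo_inter_Ioo, nonempty_Ioo]
  exact .inl (sup_lt_iff.2 ⟨lt_inf_iff.2 ⟨hxy, hxr⟩, lt_inf_iff.2 ⟨hyl, by linarith⟩⟩)

theorem exists_ball_inter_Ioo_nonempty_of_le (S : IsCantorScheme ε w I) (n : ℕ) (hk : 1 ≤ k)
    (hp : p ∈ I k) {x y : ℝ} (hx : p.1 ≤ x) (hxy : x < y) (hy : y ≤ p.2)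
    (hn : w k ≤ 2 ^ n * (y - x)) :
    ∃ m, 1 ≤ m ∧ ∃ q ∈ I m, (Ioo x y ∩ ball ((q.1 + q.2) / 2) (ε m)).Nonempty := by
  induction n generalizing k p with
  | zero =>
    rcases S.ball_inter_Ioo_nonempty_or hk hp hx hxy hy with h | ⟨q, hq, hqx, hyq⟩
    · exact ⟨k, hk, p, hp, h⟩
    · linarith [S.sub_eq_w (by omega) hq, S.w_succ_lt hk, S.w_pos hk]
  | succ n ih =>
    rcases S.ball_inter_Ioo_nonempty_or hk hp hx hxy hy with h | ⟨q, hq, hqx, hyq⟩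
    · exact ⟨k, hk, p, hp, h⟩
    · refine ih (by omega) hq hqx hyq ?_
      rw [pow_succ] at hn
      linarith [S.w_succ_lt hk]

theorem exists_ball_inter_Ioo_nonempty (S : IsCantorScheme ε w I) {x y : ℝ} (hx : 0 ≤ x)
    (hxy : x < y) (hy : y ≤ 1) :
    ∃ m, 1 ≤ m ∧ ∃ q ∈ I m, (Ioo x y ∩ ball ((q.1 + q.2) / 2) (ε m)).Nonempty := by
  obtain ⟨n, hn⟩ := pow_unbounded_of_one_lt (1 / (y - x)) one_lt_two
  rw [div_lt_iff₀ (sub_pos.2 hxy)] at hn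
  have h01 : ((0 : ℝ), (1 : ℝ)) ∈ I 1 := by rw [S.I_one]; rfl
  exact S.exists_ball_inter_Ioo_nonempty_of_le n le_rfl h01 hx hxy hy (by rw [S.w_one]; linarith)

end IsCantorScheme

structure IsCantorApprox (ε w : ℕ → ℝ) (I : ℕ → Set (ℝ × ℝ)) (f : ℕ → ℝ → ℝ) : Prop where
  zero : ∀ x, f 0 x = x / 3
  left : ∀ k, 1 ≤ k → ∀ p ∈ I k, ∀ x : ℝ, p.1 ≤ x → x ≤ (p.1 + p.2) / 2 - ε k →
    f k x = w (k + 2) / w (k + 1) * (x - p.1) + f (k - 1) p.1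
  mid : ∀ k, 1 ≤ k → ∀ p ∈ I k, ∀ x : ℝ, |x - (p.1 + p.2) / 2| < ε k →
    f k x = ε (k + 1) / ε k * (x - (p.1 + p.2) / 2 + ε k) + f (k - 1) p.1 + w (k + 2)
  right : ∀ k, 1 ≤ k → ∀ p ∈ I k, ∀ x : ℝ, (p.1 + p.2) / 2 + ε k ≤ x → x ≤ p.2 →
    f k x = w (k + 2) / w (k + 1) * (x - (p.1 + p.2) / 2 - ε k) + f (k - 1) p.1
      + w (k + 2) + 2 * ε (k + 1)
  out : ∀ k, 1 ≤ k → ∀ x ∈ Set.Icc (0 : ℝ) 1 \ (⋃ p ∈ I k, Set.Icc p.1 p.2),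
    f k x = f (k - 1) x

namespace IsCantorApprox

variable {ε w : ℕ → ℝ} {I : ℕ → Set (ℝ × ℝ)} {f : ℕ → ℝ → ℝ} {k : ℕ} {p : ℝ × ℝ}

theorem apply_fst (A : IsCantorApprox ε w I f) (S : IsCantorScheme ε w I) (hk : 1 ≤ k)
    (hp : p ∈ I k) : f k p.1 = f (k - 1) p.1 := by
  have := S.two_mul_ε_lt_w hk
  have := S.sub_eq_w hk hp
  rw [A.left k hk p hp p.1 le_rfl (by linarith)]
  ring

theorem apply_mid_sub_ε (A : IsCantorApprox ε w I f) (S : IsCantorScheme ε w I) (hk : 1 ≤ k)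
    (hp : p ∈ I k) : f k ((p.1 + p.2) / 2 - ε k) = f (k - 1) p.1 + w (k + 2) := by
  have hw : (p.1 + p.2) / 2 - ε k - p.1 = w (k + 1) := S.sub_eq_w (by omega) (S.left_mem hk hp)
  rw [A.left k hk p hp _ (by linarith [S.w_pos (k := k + 1) (by omega)]) le_rfl, hw,
    div_mul_cancel₀ _ (S.w_pos (by omega)).ne']
  ring

theorem apply_mid_add_ε (A : IsCantorApprox ε w I f) (S : IsCantorScheme ε w I) (hk : 1 ≤ k)
    (hp : p ∈ I k) :
    f k ((p.1 + p.2) / 2 + ε k) = f (k - 1) p.1 + w (k + 2) + 2 * ε (k + 1) := by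
  have hw : p.2 - ((p.1 + p.2) / 2 + ε k) = w (k + 1) := S.sub_eq_w (by omega) (S.right_mem hk hp)
  rw [A.right k hk p hp _ le_rfl (by linarith [S.w_pos (k := k + 1) (by omega)])]
  ring

theorem apply_snd_eq_add (A : IsCantorApprox ε w I f) (S : IsCantorScheme ε w I) (hk : 1 ≤ k)
    (hp : p ∈ I k) : f k p.2 = f (k - 1) p.1 + w (k + 1) := by
  have hw : p.2 - ((p.1 + p.2) / 2 + ε k) = w (k + 1) := S.sub_eq_w (by omega) (S.right_mem hk hp)
  rw [A.right k hk p hp p.2 (by linarith [S.w_pos (k := k + 1) (by omega)]) le_rfl,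
    show p.2 - (p.1 + p.2) / 2 - ε k = w (k + 1) by linarith,
    div_mul_cancel₀ _ (S.w_pos (by omega)).ne']
  linarith [S.w_add_two hk]

theorem apply_snd_sub_apply_fst (A : IsCantorApprox ε w I f) (S : IsCantorScheme ε w I)
    (hk : 1 ≤ k) (hp : p ∈ I k) : f (k - 1) p.2 - f (k - 1) p.1 = w (k + 1) := by
  match k, hk with
  | 1, _ =>
    rw [S.I_one, mem_singleton_iff] at hp
    have := S.w_succ 1 le_rfl
    norm_num [hp, A.zero, S.w_one, S.ε_one] at this ⊢
    linarith
  | j + 2, _ =>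
    obtain ⟨P, hP, rfl | rfl⟩ := (S.mem_succ (k := j + 1) (by omega)).1 hp
    · show f (j + 1) _ - f (j + 1) P.1 = _
      rw [A.apply_mid_sub_ε S (by omega) hP, A.apply_fst S (by omega) hP]
      ring
    · show f (j + 1) _ - f (j + 1) _ = _
      rw [A.apply_snd_eq_add S (by omega) hP, A.apply_mid_add_ε S (by omega) hP]
      linarith [S.w_add_two (k := j + 1) (by omega)]

theorem apply_snd (A : IsCantorApprox ε w I f) (S : IsCantorScheme ε w I) (hk : 1 ≤ k)
    (hp : p ∈ I k) : f k p.2 = f (k - 1) p.2 := by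
  linarith [A.apply_snd_eq_add S hk hp, A.apply_snd_sub_apply_fst S hk hp]

theorem monoLipschitzOn_Icc (A : IsCantorApprox ε w I f) (S : IsCantorScheme ε w I)
    (hεquot : ∀ k, 1 ≤ k → ε (k + 1) / ε k < 1 / 2) (hk : 1 ≤ k) (hp : p ∈ I k) :
    MonoLipschitzOn (1 / 2) (f k) (Icc p.1 p.2) := by
  have hε := S.ε_pos hk
  have hw := S.two_mul_ε_lt_w hk
  have hwp := S.sub_eq_w hk hp
  have hw₁ := S.w_pos (k := k + 1) (by omega)
  have hσ : 0 ≤ w (k + 2) / w (k + 1) := div_nonneg (S.w_pos (by omega)).le hw₁.le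
  have hσ' : w (k + 2) / w (k + 1) ≤ 1 / 2 := by
    rw [div_le_iff₀ hw₁]
    linarith [S.w_succ_lt (k := k + 1) (by omega)]
  have hτ : 0 ≤ ε (k + 1) / ε k := div_nonneg (S.ε_succ_pos k hk).le hε.le
  -- `mid` only covers the open gap; its endpoints come from `left` and `right`
  have hmid : ∀ x ∈ Icc ((p.1 + p.2) / 2 - ε k) ((p.1 + p.2) / 2 + ε k),
      f k x = ε (k + 1) / ε k * (x - (p.1 + p.2) / 2 + ε k) + f (k - 1) p.1 + w (k + 2) := by
    rintro x ⟨h₁, h₂⟩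
    rcases h₁.eq_or_lt with rfl | h₁
    · rw [A.apply_mid_sub_ε S hk hp]
      ring
    rcases h₂.eq_or_lt with rfl | h₂
    · rw [A.apply_mid_add_ε S hk hp]
      field_simp
      ring
    exact A.mid k hk p hp x (abs_sub_lt_iff.2 ⟨by linarith, by linarith⟩)
  refine MonoLipschitzOn.union_Icc (b := (p.1 + p.2) / 2 + ε k)
    (MonoLipschitzOn.union_Icc (b := (p.1 + p.2) / 2 - ε k)
      (.of_sub_eq_mul hσ hσ' fun x hx y hy => ?_)
      (.of_sub_eq_mul hτ (hεquot k hk).le fun x hx y hy => ?_))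
    (.of_sub_eq_mul hσ hσ' fun x hx y hy => ?_)
  · rw [A.left k hk p hp x hx.1 hx.2, A.left k hk p hp y hy.1 hy.2]
    ring
  · rw [hmid x hx, hmid y hy]
    ring
  · rw [A.right k hk p hp x hx.1 hx.2, A.right k hk p hp y hy.1 hy.2]
    ring

theorem monoLipschitzOn (A : IsCantorApprox ε w I f) (S : IsCantorScheme ε w I)
    (hεquot : ∀ k, 1 ≤ k → ε (k + 1) / ε k < 1 / 2) (j : ℕ) :
    MonoLipschitzOn (1 / 2) (f j) (Icc 0 1) := by
  induction j with
  | zero =>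
    exact .of_sub_eq_mul (a := 1 / 3) (by norm_num) (by norm_num) fun x _ y _ => by
      rw [A.zero, A.zero]
      ring
  | succ j ih =>
    exact ih.glue (J := I (j + 1)) (fun p hp => S.Icc_subset_Icc_zero_one (by omega) hp)
      (fun x hx => by simpa using A.out (j + 1) (by omega) x hx)
      (fun p hp => by simpa using A.apply_fst S (by omega) hp)
      (fun p hp => by simpa using A.apply_snd S (by omega) hp)
      fun p hp => A.monoLipschitzOn_Icc S hεquot (by omega) hp

theorem apply_eq_of_mem_ball (A : IsCantorApprox ε w I f) (S : IsCantorScheme ε w I)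
    {m j : ℕ} (hm : 1 ≤ m) (hmj : m ≤ j) (hp : p ∈ I m) {u : ℝ}
    (hu : u ∈ ball ((p.1 + p.2) / 2) (ε m)) : f j u = f m u := by
  induction j, hmj using Nat.le_induction with
  | base => rfl
  | succ j hmj ih =>
    rw [← ih]
    have hu₀₁ : u ∈ Icc 0 1 := S.Icc_subset_Icc_zero_one hm hp (S.ball_subset_Icc hm hp hu)
    have hnot : u ∉ ⋃ q ∈ I (j + 1), Icc q.1 q.2 := fun h => by
      obtain ⟨q, hq, huq⟩ := mem_iUnion₂.1 h
      exact S.not_mem_Icc_of_mem_ball hm (by omega) hp hu hq huq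
    simpa using A.out (j + 1) (by omega) u ⟨hu₀₁, hnot⟩

theorem strictMonoOn_ball_of_tendsto (A : IsCantorApprox ε w I f) (S : IsCantorScheme ε w I)
    {F : ℝ → ℝ} (hF : ∀ x ∈ Icc 0 1, Tendsto (fun k => f k x) atTop (𝓝 (F x))) {m : ℕ}
    (hm : 1 ≤ m) (hp : p ∈ I m) : StrictMonoOn F (ball ((p.1 + p.2) / 2) (ε m)) := by
  have hFf : ∀ u ∈ ball ((p.1 + p.2) / 2) (ε m), F u = f m u := fun u hu =>
    tendsto_nhds_unique_of_eventuallyEq (hF u (S.Icc_subset_Icc_zero_one hm hp (S.ball_subset_Icc hm hp hu)))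
      tendsto_const_nhds (eventually_atTop.2 ⟨m, fun j hj => A.apply_eq_of_mem_ball S hm hj hp hu⟩)
  have hf : ∀ u ∈ ball ((p.1 + p.2) / 2) (ε m),
      f m u = ε (m + 1) / ε m * (u - (p.1 + p.2) / 2 + ε m) + f (m - 1) p.1 + w (m + 2) :=
    fun u hu => A.mid m hm p hp u (by rwa [mem_ball, Real.dist_eq] at hu)
  intro u hu v hv huv
  rw [hFf u hu, hFf v hv, hf u hu, hf v hv]
  have := mul_lt_mul_of_pos_left (show u - (p.1 + p.2) / 2 + ε m < v - (p.1 + p.2) / 2 + ε m by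
    linarith) (div_pos (S.ε_succ_pos m hm) (S.ε_pos hm))
  linarith

theorem strictMonoOn_of_tendsto (A : IsCantorApprox ε w I f) (S : IsCantorScheme ε w I)
    {F : ℝ → ℝ} (hFmono : MonotoneOn F (Icc 0 1))
    (hF : ∀ x ∈ Icc 0 1, Tendsto (fun k => f k x) atTop (𝓝 (F x))) :
    StrictMonoOn F (Icc 0 1) := by
  intro x hx y hy hxy
  obtain ⟨m, hm, p, hp, hne⟩ := S.exists_ball_inter_Ioo_nonempty hx.1 hxy hy.2
  rw [Real.ball_eq_Ioo, Ioo_inter_Ioo, nonempty_Ioo] at hne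
  obtain ⟨u, hlu, huh⟩ := exists_between hne
  obtain ⟨v, huv, hvh⟩ := exists_between huh
  have hu : u ∈ Ioo x y ∩ ball ((p.1 + p.2) / 2) (ε m) := by
    rw [Real.ball_eq_Ioo, Ioo_inter_Ioo]
    exact ⟨hlu, huv.trans hvh⟩
  have hv : v ∈ Ioo x y ∩ ball ((p.1 + p.2) / 2) (ε m) := by
    rw [Real.ball_eq_Ioo, Ioo_inter_Ioo]
    exact ⟨hlu.trans huv, hvh⟩
  calc F x ≤ F u := hFmono hx ⟨hx.1.trans hu.1.1.le, hu.1.2.le.trans hy.2⟩ hu.1.1.le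
    _ < F v := A.strictMonoOn_ball_of_tendsto S hF hm hp hu.2 hv.2 huv
    _ ≤ F y := hFmono ⟨hx.1.trans hv.1.1.le, hv.1.2.le.trans hy.2⟩ hy hv.1.2.le

end IsCantorApprox

theorem stmt_16_general
    (ε w : ℕ → ℝ)
    (hw1 : w 1 = 1) (hε1 : ε 1 = 1 / 6)
    (hwrec : ∀ k, 1 ≤ k → w (k + 1) = w k / 2 - ε k)
    (hεpos : ∀ k, 1 ≤ k → 0 < ε (k + 1))
    (hεquot : ∀ k, 1 ≤ k → ε (k + 1) / ε k < 1 / 2)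
    (hεw : ∀ k, 1 ≤ k → ε (k + 1) < w k / 4 - ε k / 2)
    (I : ℕ → Set (ℝ × ℝ))
    (hI1 : I 1 = {((0 : ℝ), (1 : ℝ))})
    (hIrec : ∀ k, 1 ≤ k → I (k + 1) =
      ⋃ p ∈ I k, {(p.1, (p.1 + p.2) / 2 - ε k), ((p.1 + p.2) / 2 + ε k, p.2)})
    (f : ℕ → ℝ → ℝ)
    (hf0 : ∀ x, f 0 x = x / 3)
    (hfmaps : ∀ k, Set.MapsTo (f k) (Set.Icc (0 : ℝ) 1) (Set.Icc (0 : ℝ) 1))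
    (hfleft : ∀ k, 1 ≤ k → ∀ p ∈ I k, ∀ x : ℝ, p.1 ≤ x → x ≤ (p.1 + p.2) / 2 - ε k →
      f k x = w (k + 2) / w (k + 1) * (x - p.1) + f (k - 1) p.1)
    (hfmid : ∀ k, 1 ≤ k → ∀ p ∈ I k, ∀ x : ℝ, |x - (p.1 + p.2) / 2| < ε k →
      f k x = ε (k + 1) / ε k * (x - (p.1 + p.2) / 2 + ε k) + f (k - 1) p.1 + w (k + 2))
    (hfright : ∀ k, 1 ≤ k → ∀ p ∈ I k, ∀ x : ℝ, (p.1 + p.2) / 2 + ε k ≤ x → x ≤ p.2 →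
      f k x = w (k + 2) / w (k + 1) * (x - (p.1 + p.2) / 2 - ε k) + f (k - 1) p.1
        + w (k + 2) + 2 * ε (k + 1))
    (hfout : ∀ k, 1 ≤ k → ∀ x ∈ Set.Icc (0 : ℝ) 1 \ (⋃ p ∈ I k, Set.Icc p.1 p.2),
      f k x = f (k - 1) x)
    (F : ℝ → ℝ)
    (hFlim : ∀ x ∈ Set.Icc (0 : ℝ) 1, Filter.Tendsto (fun k => f k x) Filter.atTop (nhds (F x)))
    :
    Set.MapsTo F (Set.Icc (0 : ℝ) 1) (Set.Icc (0 : ℝ) 1) ∧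
    StrictMonoOn F (Set.Icc (0 : ℝ) 1) ∧
    ∀ x ∈ Set.Icc (0 : ℝ) 1, ∀ y ∈ Set.Icc (0 : ℝ) 1,
      |F x - F y| ≤ 1 / 2 * |x - y| := by
  have S : IsCantorScheme ε w I := ⟨hw1, hε1, hwrec, hεpos, hεw, hI1, hIrec⟩
  have A : IsCantorApprox ε w I f := ⟨hf0, hfleft, hfmid, hfright, hfout⟩
  have hF : MonoLipschitzOn (1 / 2) F (Icc 0 1) := .of_tendsto (A.monoLipschitzOn S hεquot) hFlim
  exact ⟨fun x hx => isClosed_Icc.mem_of_tendsto (hFlim x hx) (.of_forall fun k => hfmaps k hx),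
    A.strictMonoOn_of_tendsto S hF.monotoneOn hFlim, fun x _ y _ => hF.abs_sub_le ‹_› ‹_›⟩

theorem stmt_16
    (ε w : ℕ → ℝ)
    (hw1 : w 1 = 1) (hε1 : ε 1 = 1 / 6)
    (hwrec : ∀ k, 1 ≤ k → w (k + 1) = w k / 2 - ε k)
    (hεpos : ∀ k, 1 ≤ k → 0 < ε (k + 1))
    (hεgeom : ∀ k, 1 ≤ k → 2 ^ k * ε (k + 1) < 1 / 2 * (1 / 4 ^ k))
    (hεquot : ∀ k, 1 ≤ k → ε (k + 1) / ε k < 1 / 2)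
    (hεw : ∀ k, 1 ≤ k → ε (k + 1) < w k / 4 - ε k / 2)
    (I : ℕ → Set (ℝ × ℝ))
    (hI1 : I 1 = {((0 : ℝ), (1 : ℝ))})
    (hIrec : ∀ k, 1 ≤ k → I (k + 1) =
      ⋃ p ∈ I k, {(p.1, (p.1 + p.2) / 2 - ε k), ((p.1 + p.2) / 2 + ε k, p.2)})
    (f : ℕ → ℝ → ℝ)
    (hf0 : ∀ x, f 0 x = x / 3)
    (hfmaps : ∀ k, Set.MapsTo (f k) (Set.Icc (0 : ℝ) 1) (Set.Icc (0 : ℝ) 1))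
    (hfleft : ∀ k, 1 ≤ k → ∀ p ∈ I k, ∀ x : ℝ, p.1 ≤ x → x ≤ (p.1 + p.2) / 2 - ε k →
      f k x = w (k + 2) / w (k + 1) * (x - p.1) + f (k - 1) p.1)
    (hfmid : ∀ k, 1 ≤ k → ∀ p ∈ I k, ∀ x : ℝ, |x - (p.1 + p.2) / 2| < ε k →
      f k x = ε (k + 1) / ε k * (x - (p.1 + p.2) / 2 + ε k) + f (k - 1) p.1 + w (k + 2))
    (hfright : ∀ k, 1 ≤ k → ∀ p ∈ I k, ∀ x : ℝ, (p.1 + p.2) / 2 + ε k ≤ x → x ≤ p.2 →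
      f k x = w (k + 2) / w (k + 1) * (x - (p.1 + p.2) / 2 - ε k) + f (k - 1) p.1
        + w (k + 2) + 2 * ε (k + 1))
    (hfout : ∀ k, 1 ≤ k → ∀ x ∈ Set.Icc (0 : ℝ) 1 \ (⋃ p ∈ I k, Set.Icc p.1 p.2),
      f k x = f (k - 1) x)
    (F : ℝ → ℝ)
    (hFlim : ∀ x ∈ Set.Icc (0 : ℝ) 1, Filter.Tendsto (fun k => f k x) Filter.atTop (nhds (F x)))
    :
    Set.MapsTo F (Set.Icc (0 : ℝ) 1) (Set.Icc (0 : ℝ) 1) ∧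
    StrictMonoOn F (Set.Icc (0 : ℝ) 1) ∧
    ∀ x ∈ Set.Icc (0 : ℝ) 1, ∀ y ∈ Set.Icc (0 : ℝ) 1,
      |F x - F y| ≤ 1 / 2 * |x - y| :=
  stmt_16_general ε w hw1 hε1 hwrec hεpos hεquot hεw I hI1 hIrec f hf0 hfmaps hfleft hfmid hfright
    hfout F hFlim
end

section
/- If x is an endpoint of an interval belonging to 𝓘_k for some k ∈ ℕ, then f(x) = f_{k−1}(x), where f is the uniform limit of the sequence (f_k). -/
/-!
The left endpoint of an interval of `I (n + 1)` is fixed by `f (n + 1)` because the left branch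
is linear with value `f n p.1` there. For the right endpoint, both `f n` and `f (n + 1)` rise by
exactly `w (n + 2)` across the interval: `f n` because the interval is one of the two halves on
which `f n` has slope `w (n + 2) / w (n + 1)` over length `w (n + 1)`, and `f (n + 1)` because its
three pieces rise by `w (n + 3)`, `2 ε (n + 2)` and `w (n + 3)`, which add up to `w (n + 2)`.
Since every endpoint of `I k` stays an endpoint of `I m` for all `m ≥ k`, the sequence `f m x` is
constant from `m = k - 1` on, so its limit is `f (k - 1) x`.
-/

open Set MeasureTheory Filter

open Topology

theorem eq_of_tendsto_of_succ_eq {α : Type*} [TopologicalSpace α] [T2Space α] {g : ℕ → α}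
    {N : ℕ} {L : α} (hg : ∀ m, N ≤ m → g (m + 1) = g m) (h : Tendsto g atTop (𝓝 L)) :
    L = g N := by
  have hconst : ∀ m, N ≤ m → g m = g N := by
    intro m hm
    induction m, hm using Nat.le_induction with
    | base => rfl
    | succ m hm ih => rw [hg m hm, ih]
  exact tendsto_nhds_unique h <|
    tendsto_const_nhds.congr' (eventually_atTop.mpr ⟨N, fun m hm => (hconst m hm).symm⟩)

namespace CantorStaircase

def endpoints (I : ℕ → Set (ℝ × ℝ)) (k : ℕ) : Set ℝ := Prod.fst '' I k ∪ Prod.snd '' I k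

variable {ε w : ℕ → ℝ} {I : ℕ → Set (ℝ × ℝ)} {f : ℕ → ℝ → ℝ}

theorem mem_succ_iff (hIrec : ∀ k, 1 ≤ k → I (k + 1) =
      ⋃ p ∈ I k, {(p.1, (p.1 + p.2) / 2 - ε k), ((p.1 + p.2) / 2 + ε k, p.2)})
    {k : ℕ} (hk : 1 ≤ k) {p : ℝ × ℝ} :
    p ∈ I (k + 1) ↔ ∃ q ∈ I k,
      p = (q.1, (q.1 + q.2) / 2 - ε k) ∨ p = ((q.1 + q.2) / 2 + ε k, q.2) := by
  simp only [hIrec k hk, mem_iUnion, mem_insert_iff, mem_singleton_iff, exists_prop]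

theorem snd_sub_fst_of_mem (hw1 : w 1 = 1) (hwrec : ∀ k, 1 ≤ k → w (k + 1) = w k / 2 - ε k)
    (hI1 : I 1 = {((0 : ℝ), (1 : ℝ))})
    (hIrec : ∀ k, 1 ≤ k → I (k + 1) =
      ⋃ p ∈ I k, {(p.1, (p.1 + p.2) / 2 - ε k), ((p.1 + p.2) / 2 + ε k, p.2)}) :
    ∀ k, 1 ≤ k → ∀ p ∈ I k, p.2 - p.1 = w k := by
  intro k hk
  induction k, hk using Nat.le_induction with
  | base =>
    intro p hp
    rw [hI1, mem_singleton_iff] at hp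
    simp [hp, hw1]
  | succ k hk ih =>
    intro p hp
    obtain ⟨q, hq, rfl | rfl⟩ := (mem_succ_iff hIrec hk).mp hp <;>
    · have := ih q hq
      have := hwrec k hk
      dsimp only
      linarith

theorem mem_Icc_of_mem (hw1 : w 1 = 1) (hwrec : ∀ k, 1 ≤ k → w (k + 1) = w k / 2 - ε k)
    (hε : ∀ k, 1 ≤ k → 0 < ε k) (hεhalf : ∀ k, 1 ≤ k → ε k < w k / 2)
    (hI1 : I 1 = {((0 : ℝ), (1 : ℝ))})
    (hIrec : ∀ k, 1 ≤ k → I (k + 1) =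
      ⋃ p ∈ I k, {(p.1, (p.1 + p.2) / 2 - ε k), ((p.1 + p.2) / 2 + ε k, p.2)}) :
    ∀ k, 1 ≤ k → ∀ p ∈ I k, p.1 ∈ Icc (0 : ℝ) 1 ∧ p.2 ∈ Icc (0 : ℝ) 1 := by
  have hlen := snd_sub_fst_of_mem hw1 hwrec hI1 hIrec
  suffices h : ∀ k, 1 ≤ k → ∀ p ∈ I k, 0 ≤ p.1 ∧ p.2 ≤ 1 by
    intro k hk p hp
    obtain ⟨h0, h1⟩ := h k hk p hp
    have := hlen k hk p hp
    have := hε k hk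
    have := hεhalf k hk
    exact ⟨⟨h0, by linarith⟩, ⟨by linarith, h1⟩⟩
  intro k hk
  induction k, hk using Nat.le_induction with
  | base =>
    intro p hp
    rw [hI1, mem_singleton_iff] at hp
    simp [hp]
  | succ k hk ih =>
    intro p hp
    obtain ⟨q, hq, rfl | rfl⟩ := (mem_succ_iff hIrec hk).mp hp <;>
    · have := ih q hq
      have := hlen k hk q hq
      have := hε k hk
      have := hεhalf k hk
      dsimp only
      constructor <;> linarith

theorem endpoints_subset_succ
    (hIrec : ∀ k, 1 ≤ k → I (k + 1) =
      ⋃ p ∈ I k, {(p.1, (p.1 + p.2) / 2 - ε k), ((p.1 + p.2) / 2 + ε k, p.2)})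
    {k : ℕ} (hk : 1 ≤ k) : endpoints I k ⊆ endpoints I (k + 1) := by
  rintro x (⟨q, hq, rfl⟩ | ⟨q, hq, rfl⟩)
  · exact Or.inl ⟨_, (mem_succ_iff hIrec hk).mpr ⟨q, hq, Or.inl rfl⟩, rfl⟩
  · exact Or.inr ⟨_, (mem_succ_iff hIrec hk).mpr ⟨q, hq, Or.inr rfl⟩, rfl⟩

theorem endpoints_subset_of_le
    (hIrec : ∀ k, 1 ≤ k → I (k + 1) =
      ⋃ p ∈ I k, {(p.1, (p.1 + p.2) / 2 - ε k), ((p.1 + p.2) / 2 + ε k, p.2)})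
    {k m : ℕ} (hk : 1 ≤ k) (hkm : k ≤ m) : endpoints I k ⊆ endpoints I m := by
  induction m, hkm using Nat.le_induction with
  | base => exact subset_rfl
  | succ m hkm ih => exact ih.trans (endpoints_subset_succ hIrec (hk.trans hkm))

theorem apply_succ_fst
    (hfleft : ∀ k, 1 ≤ k → ∀ p ∈ I k, ∀ x : ℝ, p.1 ≤ x → x ≤ (p.1 + p.2) / 2 - ε k →
      f k x = w (k + 2) / w (k + 1) * (x - p.1) + f (k - 1) p.1)
    {n : ℕ} {p : ℝ × ℝ} (hp : p ∈ I (n + 1)) (hlen : p.2 - p.1 = w (n + 1))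
    (hεhalf : ε (n + 1) < w (n + 1) / 2) :
    f (n + 1) p.1 = f n p.1 := by
  rw [hfleft (n + 1) n.succ_pos p hp p.1 le_rfl (by linarith)]
  simp

theorem apply_snd_sub_apply_fst
    (hw1 : w 1 = 1) (hε1 : ε 1 = 1 / 6) (hwrec : ∀ k, 1 ≤ k → w (k + 1) = w k / 2 - ε k)
    (hεhalf : ∀ k, 1 ≤ k → ε k < w k / 2)
    (hI1 : I 1 = {((0 : ℝ), (1 : ℝ))})
    (hIrec : ∀ k, 1 ≤ k → I (k + 1) =
      ⋃ p ∈ I k, {(p.1, (p.1 + p.2) / 2 - ε k), ((p.1 + p.2) / 2 + ε k, p.2)})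
    (hf0 : ∀ x, f 0 x = x / 3)
    (hfleft : ∀ k, 1 ≤ k → ∀ p ∈ I k, ∀ x : ℝ, p.1 ≤ x → x ≤ (p.1 + p.2) / 2 - ε k →
      f k x = w (k + 2) / w (k + 1) * (x - p.1) + f (k - 1) p.1)
    (hfright : ∀ k, 1 ≤ k → ∀ p ∈ I k, ∀ x : ℝ, (p.1 + p.2) / 2 + ε k ≤ x → x ≤ p.2 →
      f k x = w (k + 2) / w (k + 1) * (x - (p.1 + p.2) / 2 - ε k) + f (k - 1) p.1
        + w (k + 2) + 2 * ε (k + 1))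
    {n : ℕ} {p : ℝ × ℝ} (hp : p ∈ I (n + 1)) :
    f n p.2 - f n p.1 = w (n + 2) := by
  rcases Nat.eq_zero_or_pos n with rfl | hn
  · rw [hI1, mem_singleton_iff] at hp
    rw [hp, hf0, hf0, hwrec 1 le_rfl, hw1, hε1]
    norm_num
  have hw : w (n + 1) ≠ 0 := by have := hεhalf n hn; rw [hwrec n hn]; linarith
  have hslope : f n p.2 - f n p.1 = w (n + 2) / w (n + 1) * (p.2 - p.1) := by
    have hlen := snd_sub_fst_of_mem hw1 hwrec hI1 hIrec n hn
    obtain ⟨q, hq, rfl | rfl⟩ := (mem_succ_iff hIrec hn).mp hp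
    · rw [hfleft n hn q hq _ (by linarith [hεhalf n hn, hlen q hq]) le_rfl,
        hfleft n hn q hq q.1 le_rfl (by linarith [hεhalf n hn, hlen q hq])]
      ring
    · rw [hfright n hn q hq q.2 (by linarith [hεhalf n hn, hlen q hq]) le_rfl,
        hfright n hn q hq _ le_rfl (by linarith [hεhalf n hn, hlen q hq])]
      ring
  rw [hslope, snd_sub_fst_of_mem hw1 hwrec hI1 hIrec (n + 1) n.succ_pos p hp,
    div_mul_cancel₀ _ hw]

theorem apply_succ_snd (hwrec : ∀ k, 1 ≤ k → w (k + 1) = w k / 2 - ε k)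
    (hfright : ∀ k, 1 ≤ k → ∀ p ∈ I k, ∀ x : ℝ, (p.1 + p.2) / 2 + ε k ≤ x → x ≤ p.2 →
      f k x = w (k + 2) / w (k + 1) * (x - (p.1 + p.2) / 2 - ε k) + f (k - 1) p.1
        + w (k + 2) + 2 * ε (k + 1))
    {n : ℕ} {p : ℝ × ℝ} (hp : p ∈ I (n + 1)) (hlen : p.2 - p.1 = w (n + 1))
    (hεhalf : ε (n + 1) < w (n + 1) / 2) (hrise : f n p.2 - f n p.1 = w (n + 2)) :
    f (n + 1) p.2 = f n p.2 := by
  have hhalf : p.2 - (p.1 + p.2) / 2 - ε (n + 1) = w (n + 2) := by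
    linarith [hwrec (n + 1) n.succ_pos]
  have hw : w (n + 2) ≠ 0 := by linarith
  rw [hfright (n + 1) n.succ_pos p hp p.2 (by linarith) le_rfl, hhalf, div_mul_cancel₀ _ hw,
    hwrec (n + 2) (by omega), Nat.add_sub_cancel]
  linarith

theorem apply_succ_of_mem_endpoints
    (hw1 : w 1 = 1) (hε1 : ε 1 = 1 / 6) (hwrec : ∀ k, 1 ≤ k → w (k + 1) = w k / 2 - ε k)
    (hεhalf : ∀ k, 1 ≤ k → ε k < w k / 2)
    (hI1 : I 1 = {((0 : ℝ), (1 : ℝ))})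
    (hIrec : ∀ k, 1 ≤ k → I (k + 1) =
      ⋃ p ∈ I k, {(p.1, (p.1 + p.2) / 2 - ε k), ((p.1 + p.2) / 2 + ε k, p.2)})
    (hf0 : ∀ x, f 0 x = x / 3)
    (hfleft : ∀ k, 1 ≤ k → ∀ p ∈ I k, ∀ x : ℝ, p.1 ≤ x → x ≤ (p.1 + p.2) / 2 - ε k →
      f k x = w (k + 2) / w (k + 1) * (x - p.1) + f (k - 1) p.1)
    (hfright : ∀ k, 1 ≤ k → ∀ p ∈ I k, ∀ x : ℝ, (p.1 + p.2) / 2 + ε k ≤ x → x ≤ p.2 →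
      f k x = w (k + 2) / w (k + 1) * (x - (p.1 + p.2) / 2 - ε k) + f (k - 1) p.1
        + w (k + 2) + 2 * ε (k + 1))
    {n : ℕ} {x : ℝ} (hx : x ∈ endpoints I (n + 1)) :
    f (n + 1) x = f n x := by
  obtain ⟨p, hp, rfl⟩ | ⟨p, hp, rfl⟩ := hx
  · exact apply_succ_fst hfleft hp (snd_sub_fst_of_mem hw1 hwrec hI1 hIrec _ n.succ_pos p hp)
      (hεhalf _ n.succ_pos)
  · exact apply_succ_snd hwrec hfright hp
      (snd_sub_fst_of_mem hw1 hwrec hI1 hIrec _ n.succ_pos p hp) (hεhalf _ n.succ_pos)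
      (apply_snd_sub_apply_fst hw1 hε1 hwrec hεhalf hI1 hIrec hf0 hfleft hfright hp)

theorem limit_eq_of_mem_endpoints
    (hw1 : w 1 = 1) (hε1 : ε 1 = 1 / 6) (hwrec : ∀ k, 1 ≤ k → w (k + 1) = w k / 2 - ε k)
    (hε : ∀ k, 1 ≤ k → 0 < ε k) (hεhalf : ∀ k, 1 ≤ k → ε k < w k / 2)
    (hI1 : I 1 = {((0 : ℝ), (1 : ℝ))})
    (hIrec : ∀ k, 1 ≤ k → I (k + 1) =
      ⋃ p ∈ I k, {(p.1, (p.1 + p.2) / 2 - ε k), ((p.1 + p.2) / 2 + ε k, p.2)})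
    (hf0 : ∀ x, f 0 x = x / 3)
    (hfleft : ∀ k, 1 ≤ k → ∀ p ∈ I k, ∀ x : ℝ, p.1 ≤ x → x ≤ (p.1 + p.2) / 2 - ε k →
      f k x = w (k + 2) / w (k + 1) * (x - p.1) + f (k - 1) p.1)
    (hfright : ∀ k, 1 ≤ k → ∀ p ∈ I k, ∀ x : ℝ, (p.1 + p.2) / 2 + ε k ≤ x → x ≤ p.2 →
      f k x = w (k + 2) / w (k + 1) * (x - (p.1 + p.2) / 2 - ε k) + f (k - 1) p.1
        + w (k + 2) + 2 * ε (k + 1))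
    {F : ℝ → ℝ}
    (hFlim : ∀ x ∈ Icc (0 : ℝ) 1, Tendsto (fun k => f k x) atTop (𝓝 (F x)))
    {n : ℕ} {x : ℝ} (hx : x ∈ endpoints I (n + 1)) :
    F x = f n x := by
  have hx01 : x ∈ Icc (0 : ℝ) 1 := by
    obtain ⟨p, hp, rfl⟩ | ⟨p, hp, rfl⟩ := hx
    · exact (mem_Icc_of_mem hw1 hwrec hε hεhalf hI1 hIrec _ n.succ_pos p hp).1
    · exact (mem_Icc_of_mem hw1 hwrec hε hεhalf hI1 hIrec _ n.succ_pos p hp).2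
  refine eq_of_tendsto_of_succ_eq (fun m hm => ?_) (hFlim x hx01)
  exact apply_succ_of_mem_endpoints hw1 hε1 hwrec hεhalf hI1 hIrec hf0 hfleft hfright
    (endpoints_subset_of_le hIrec n.succ_pos (by omega) hx)

end CantorStaircase

theorem stmt_17_general
    (ε w : ℕ → ℝ)
    (hw1 : w 1 = 1) (hε1 : ε 1 = 1 / 6)
    (hwrec : ∀ k, 1 ≤ k → w (k + 1) = w k / 2 - ε k)
    (hεpos : ∀ k, 1 ≤ k → 0 < ε (k + 1))
    (hεw : ∀ k, 1 ≤ k → ε (k + 1) < w k / 4 - ε k / 2)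
    (I : ℕ → Set (ℝ × ℝ))
    (hI1 : I 1 = {((0 : ℝ), (1 : ℝ))})
    (hIrec : ∀ k, 1 ≤ k → I (k + 1) =
      ⋃ p ∈ I k, {(p.1, (p.1 + p.2) / 2 - ε k), ((p.1 + p.2) / 2 + ε k, p.2)})
    (f : ℕ → ℝ → ℝ)
    (hf0 : ∀ x, f 0 x = x / 3)
    (hfleft : ∀ k, 1 ≤ k → ∀ p ∈ I k, ∀ x : ℝ, p.1 ≤ x → x ≤ (p.1 + p.2) / 2 - ε k →
      f k x = w (k + 2) / w (k + 1) * (x - p.1) + f (k - 1) p.1)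
    (hfright : ∀ k, 1 ≤ k → ∀ p ∈ I k, ∀ x : ℝ, (p.1 + p.2) / 2 + ε k ≤ x → x ≤ p.2 →
      f k x = w (k + 2) / w (k + 1) * (x - (p.1 + p.2) / 2 - ε k) + f (k - 1) p.1
        + w (k + 2) + 2 * ε (k + 1))
    (F : ℝ → ℝ)
    (hFlim : ∀ x ∈ Set.Icc (0 : ℝ) 1, Filter.Tendsto (fun k => f k x) Filter.atTop (nhds (F x)))
    :
    ∀ k, 1 ≤ k → ∀ p ∈ I k, F p.1 = f (k - 1) p.1 ∧ F p.2 = f (k - 1) p.2 := by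
  have hε : ∀ k, 1 ≤ k → 0 < ε k := by
    rintro (_ | _ | k) hk
    · omega
    · rw [hε1]; norm_num
    · exact hεpos (k + 1) (by omega)
  have hεhalf : ∀ k, 1 ≤ k → ε k < w k / 2 := fun k hk => by linarith [hεpos k hk, hεw k hk]
  rintro (_ | n) hk p hp
  · omega
  have hlim {x : ℝ} (hx : x ∈ CantorStaircase.endpoints I (n + 1)) : F x = f n x :=
    CantorStaircase.limit_eq_of_mem_endpoints hw1 hε1 hwrec hε hεhalf hI1 hIrec hf0 hfleft hfright
      hFlim hx
  exact ⟨hlim (Or.inl ⟨p, hp, rfl⟩), hlim (Or.inr ⟨p, hp, rfl⟩)⟩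

theorem stmt_17
    (ε w : ℕ → ℝ)
    (hw1 : w 1 = 1) (hε1 : ε 1 = 1 / 6)
    (hwrec : ∀ k, 1 ≤ k → w (k + 1) = w k / 2 - ε k)
    (hεpos : ∀ k, 1 ≤ k → 0 < ε (k + 1))
    (hεgeom : ∀ k, 1 ≤ k → 2 ^ k * ε (k + 1) < 1 / 2 * (1 / 4 ^ k))
    (hεquot : ∀ k, 1 ≤ k → ε (k + 1) / ε k < 1 / 2)
    (hεw : ∀ k, 1 ≤ k → ε (k + 1) < w k / 4 - ε k / 2)
    (I : ℕ → Set (ℝ × ℝ))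
    (hI1 : I 1 = {((0 : ℝ), (1 : ℝ))})
    (hIrec : ∀ k, 1 ≤ k → I (k + 1) =
      ⋃ p ∈ I k, {(p.1, (p.1 + p.2) / 2 - ε k), ((p.1 + p.2) / 2 + ε k, p.2)})
    (f : ℕ → ℝ → ℝ)
    (hf0 : ∀ x, f 0 x = x / 3)
    (hfmaps : ∀ k, Set.MapsTo (f k) (Set.Icc (0 : ℝ) 1) (Set.Icc (0 : ℝ) 1))
    (hfleft : ∀ k, 1 ≤ k → ∀ p ∈ I k, ∀ x : ℝ, p.1 ≤ x → x ≤ (p.1 + p.2) / 2 - ε k →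
      f k x = w (k + 2) / w (k + 1) * (x - p.1) + f (k - 1) p.1)
    (hfmid : ∀ k, 1 ≤ k → ∀ p ∈ I k, ∀ x : ℝ, |x - (p.1 + p.2) / 2| < ε k →
      f k x = ε (k + 1) / ε k * (x - (p.1 + p.2) / 2 + ε k) + f (k - 1) p.1 + w (k + 2))
    (hfright : ∀ k, 1 ≤ k → ∀ p ∈ I k, ∀ x : ℝ, (p.1 + p.2) / 2 + ε k ≤ x → x ≤ p.2 →
      f k x = w (k + 2) / w (k + 1) * (x - (p.1 + p.2) / 2 - ε k) + f (k - 1) p.1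
        + w (k + 2) + 2 * ε (k + 1))
    (hfout : ∀ k, 1 ≤ k → ∀ x ∈ Set.Icc (0 : ℝ) 1 \ (⋃ p ∈ I k, Set.Icc p.1 p.2),
      f k x = f (k - 1) x)
    (F : ℝ → ℝ)
    (hFlim : ∀ x ∈ Set.Icc (0 : ℝ) 1, Filter.Tendsto (fun k => f k x) Filter.atTop (nhds (F x)))
    :
    ∀ k, 1 ≤ k → ∀ p ∈ I k, F p.1 = f (k - 1) p.1 ∧ F p.2 = f (k - 1) p.2 :=
  stmt_17_general ε w hw1 hε1 hwrec hεpos hεw I hI1 hIrec f hf0 hfleft hfright F hFlim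
end
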